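/- arXiv:2006.06626 — 10 statements merged into one kernel-verified Lean document; each statement's English description precedes it below -/
import Mathlib

section
/- Define C^z_ij = 0 if j ∉ N_i and, for j ∈ N_i, C^z_ij = sup over z_{N_i∖{j}} of sup over z_j, z_j' of TV(P_i(·|z_j, z_{N_i∖{j}}), P_i(·|z_j', z_{N_i∖{j}})). Suppose sup_{1≤i≤n} Σ_{j=1}^n C^z_ij ≤ ρ. Then for every agent i, every integer κ ≥ 1, and every two initial states z = (z_{N_i^κ}, z_{N_{-i}^κ}) and z̃ = (z_{N_i^κ}, z̃_{N_{-i}^κ}) that agree on all coordinates in N_i^κ, one has TV(π_{t,i}, π̃_{t,i}) = 0 for all t ≤ κ, and TV(π_{t,i}, π̃_{t,i}) ≤ ρ^t for all t > κ, where π_{t,i} is the distribution of the coordinate z_i(t) of the chain started at z(0) = z, and π̃_{t,i} is that of the chain started at z(0) = z̃. -/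
open Finset

/-- Total variation distance `TV(p,q) = (1/2) ∑ₓ |p x − q x|` between two
finitely supported distributions. -/
noncomputable def TV {X : Type*} [Fintype X] (p q : X → ℝ) : ℝ :=
  (1 / 2) * ∑ x, |p x - q x|

/-- `stepDist K t z` is the distribution at time `t` of the Markov chain with transition
kernel `K` started at `z` at time `0`. -/
noncomputable def stepDist {Z : Type*} [Fintype Z] [DecidableEq Z]
    (K : Z → Z → ℝ) : ℕ → Z → Z → ℝ
  | 0, z, z' => if z' = z then 1 else 0
  | t + 1, z, z'' => ∑ z', stepDist K t z z' * K z' z''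

/-- The interaction matrix `C^z_{ij}`: `0` if `j ∉ N_i`, and for `j ∈ N_i` the sup over
`z_{N_i∖{j}}` and `z_j, z_j'` of `TV(P_i(·|z_j, z_{N_i∖{j}}), P_i(·|z_j', z_{N_i∖{j}}))`
(realized by varying only the `j`-th coordinate of a global configuration). -/
noncomputable def Cz {n : ℕ} (G : SimpleGraph (Fin n)) [DecidableRel G.Adj]
    (Z : Fin n → Type) [∀ k, Fintype (Z k)] [∀ k, Nonempty (Z k)]
    (P : ∀ k, (∀ j, Z j) → Z k → ℝ) (i j : Fin n) : ℝ :=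
  if j = i ∨ G.Adj i j then
    Finset.univ.sup' Finset.univ_nonempty
      (fun p : (∀ k, Z k) × Z j × Z j =>
        TV (P i (Function.update p.1 j p.2.1)) (P i (Function.update p.1 j p.2.2)))
  else 0


set_option linter.unusedSectionVars false
set_option maxHeartbeats 1000000

section Coupling
variable {X : Type*} [Fintype X] [DecidableEq X]

lemma TV_nonneg (p q : X → ℝ) : 0 ≤ TV p q := by
  unfold TV
  have : (0:ℝ) ≤ ∑ x, |p x - q x| := Finset.sum_nonneg fun x _ => abs_nonneg _
  linarith

lemma TV_self (p : X → ℝ) : TV p p = 0 := by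
  simp [TV]

lemma TV_triangle (p q r : X → ℝ) : TV p r ≤ TV p q + TV q r := by
  unfold TV
  rw [← mul_add, ← Finset.sum_add_distrib]
  have : ∑ x, |p x - r x| ≤ ∑ x, (|p x - q x| + |q x - r x|) :=
    Finset.sum_le_sum fun x _ => by
      have := abs_sub_le (p x) (q x) (r x); linarith
  linarith

/-- maximal coupling of two distributions -/
noncomputable def couple (p q : X → ℝ) : X × X → ℝ :=
  fun x => (if x.1 = x.2 then min (p x.1) (q x.1) else 0) +
    (p x.1 - min (p x.1) (q x.1)) * (q x.2 - min (p x.2) (q x.2)) /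
      (∑ y, (p y - min (p y) (q y)))

lemma couple_nonneg (p q : X → ℝ) (hp : ∀ x, 0 ≤ p x) (hq : ∀ x, 0 ≤ q x) (x : X × X) :
    0 ≤ couple p q x := by
  unfold couple
  have h1 : (0:ℝ) ≤ if x.1 = x.2 then min (p x.1) (q x.1) else 0 := by
    split
    · exact le_min (hp _) (hq _)
    · exact le_refl _
  have h2 : (0:ℝ) ≤ (p x.1 - min (p x.1) (q x.1)) * (q x.2 - min (p x.2) (q x.2)) /
      (∑ y, (p y - min (p y) (q y))) := by
    apply div_nonneg
    · apply mul_nonneg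
      · have := min_le_left (p x.1) (q x.1); linarith
      · have := min_le_right (p x.2) (q x.2); linarith
    · exact Finset.sum_nonneg fun y _ => by have := min_le_left (p y) (q y); linarith
  linarith

lemma sum_sub_min_symm (p q : X → ℝ) (hp1 : ∑ x, p x = 1) (hq1 : ∑ x, q x = 1) :
    ∑ y, (p y - min (p y) (q y)) = ∑ y, (q y - min (p y) (q y)) := by
  rw [Finset.sum_sub_distrib, Finset.sum_sub_distrib, hp1, hq1]

lemma TV_eq_sum_sub_min (p q : X → ℝ) (hp1 : ∑ x, p x = 1) (hq1 : ∑ x, q x = 1) :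
    TV p q = ∑ y, (p y - min (p y) (q y)) := by
  unfold TV
  have h : ∀ y, |p y - q y| = (p y - min (p y) (q y)) + (q y - min (p y) (q y)) := by
    intro y
    rcases le_total (p y) (q y) with h | h
    · rw [min_eq_left h, abs_of_nonpos (by linarith)]; ring
    · rw [min_eq_right h, abs_of_nonneg (by linarith)]; ring
  rw [Finset.sum_congr rfl fun y _ => h y, Finset.sum_add_distrib,
    ← sum_sub_min_symm p q hp1 hq1]
  ring

lemma sub_min_eq_zero_of_T_zero (p q : X → ℝ)
    (hT : ∑ y, (p y - min (p y) (q y)) = 0) (x : X) :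
    p x - min (p x) (q x) = 0 := by
  have := (Finset.sum_eq_zero_iff_of_nonneg
    (fun y _ => by have := min_le_left (p y) (q y); linarith)).1 hT x (Finset.mem_univ x)
  linarith

lemma sub_min_eq_zero_of_T_zero' (p q : X → ℝ) (hp1 : ∑ x, p x = 1) (hq1 : ∑ x, q x = 1)
    (hT : ∑ y, (p y - min (p y) (q y)) = 0) (x : X) :
    q x - min (p x) (q x) = 0 := by
  rw [sum_sub_min_symm p q hp1 hq1] at hT
  have := (Finset.sum_eq_zero_iff_of_nonneg
    (fun y _ => by have := min_le_right (p y) (q y); linarith)).1 hT x (Finset.mem_univ x)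
  linarith

lemma couple_marg1 (p q : X → ℝ) (hp1 : ∑ x, p x = 1) (hq1 : ∑ x, q x = 1) (x : X) :
    ∑ y, couple p q (x, y) = p x := by
  unfold couple
  rw [Finset.sum_add_distrib]
  have e1 : ∑ y, (if x = y then min (p x) (q x) else 0) = min (p x) (q x) := by
    rw [Finset.sum_ite_eq]; simp
  have e2 : ∑ y, (p x - min (p x) (q x)) * (q y - min (p y) (q y)) /
        (∑ y, (p y - min (p y) (q y)))
      = (p x - min (p x) (q x)) * (∑ y, (p y - min (p y) (q y))) /
        (∑ y, (p y - min (p y) (q y))) := by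
    rw [← Finset.sum_div, ← Finset.mul_sum, ← sum_sub_min_symm p q hp1 hq1]
  rw [e1, e2]
  by_cases h0 : (∑ y, (p y - min (p y) (q y))) = 0
  · have hx := sub_min_eq_zero_of_T_zero p q h0 x
    rw [h0, hx, zero_mul, zero_div, add_zero]
    linarith
  · rw [mul_div_assoc, div_self h0, mul_one]
    ring

lemma couple_marg2 (p q : X → ℝ) (hp1 : ∑ x, p x = 1) (hq1 : ∑ x, q x = 1) (y : X) :
    ∑ x, couple p q (x, y) = q y := by
  unfold couple
  rw [Finset.sum_add_distrib]
  have e1 : ∑ x, (if x = y then min (p x) (q x) else 0) = min (p y) (q y) := by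
    rw [Finset.sum_ite_eq']; simp
  have e2 : ∑ x, (p x - min (p x) (q x)) * (q y - min (p y) (q y)) /
        (∑ y, (p y - min (p y) (q y)))
      = (∑ y, (p y - min (p y) (q y))) * (q y - min (p y) (q y)) /
        (∑ y, (p y - min (p y) (q y))) := by
    rw [← Finset.sum_div, ← Finset.sum_mul]
  rw [e1, e2]
  by_cases h0 : (∑ y, (p y - min (p y) (q y))) = 0
  · have hy := sub_min_eq_zero_of_T_zero' p q hp1 hq1 h0 y
    rw [h0, hy, mul_zero, zero_div, add_zero]
    linarith
  · rw [mul_comm, mul_div_assoc, div_self h0, mul_one]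
    ring

lemma couple_offdiag (p q : X → ℝ) (hp : ∀ x, 0 ≤ p x) (hq : ∀ x, 0 ≤ q x)
    (hp1 : ∑ x, p x = 1) (hq1 : ∑ x, q x = 1) :
    ∑ x : X × X, (if x.1 = x.2 then 0 else couple p q x) ≤ TV p q := by
  rw [TV_eq_sum_sub_min p q hp1 hq1]
  have step1 : ∑ x : X × X, (if x.1 = x.2 then 0 else couple p q x)
      ≤ ∑ x : X × X, (p x.1 - min (p x.1) (q x.1)) * (q x.2 - min (p x.2) (q x.2)) /
          (∑ y, (p y - min (p y) (q y))) := by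
    apply Finset.sum_le_sum
    intro x _
    split
    · apply div_nonneg
      · apply mul_nonneg
        · have := min_le_left (p x.1) (q x.1); linarith
        · have := min_le_right (p x.2) (q x.2); linarith
      · exact Finset.sum_nonneg fun y _ => by have := min_le_left (p y) (q y); linarith
    · unfold couple
      rw [if_neg (by assumption)]
      simp
  refine step1.trans ?_
  rw [Fintype.sum_prod_type]
  have e : ∑ a : X, ∑ b : X,
      (p a - min (p a) (q a)) * (q b - min (p b) (q b)) / (∑ y, (p y - min (p y) (q y)))
      = (∑ y, (p y - min (p y) (q y))) * (∑ y, (q y - min (p y) (q y))) /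
        (∑ y, (p y - min (p y) (q y))) := by
    rw [Finset.sum_mul_sum, Finset.sum_div]
    exact Finset.sum_congr rfl fun a _ => by rw [Finset.sum_div]
  rw [e, ← sum_sub_min_symm p q hp1 hq1]
  by_cases h0 : (∑ y, (p y - min (p y) (q y))) = 0
  · rw [h0]; simp
  · rw [mul_div_assoc, div_self h0, mul_one]

lemma couple_total (p q : X → ℝ) (hp1 : ∑ x, p x = 1) (hq1 : ∑ x, q x = 1) :
    ∑ x : X × X, couple p q x = 1 := by
  rw [Fintype.sum_prod_type]
  have : ∀ a, ∑ b, couple p q (a, b) = p a := couple_marg1 p q hp1 hq1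
  rw [Finset.sum_congr rfl fun a _ => this a, hp1]

end Coupling

section Graph
variable {n : ℕ} (G : SimpleGraph (Fin n)) [DecidableRel G.Adj]
    (Z : Fin n → Type) [∀ k, Fintype (Z k)] [∀ k, Nonempty (Z k)] [∀ k, DecidableEq (Z k)]
    (P : ∀ k, (∀ j, Z j) → Z k → ℝ)

lemma Cz_nonneg (i j : Fin n) : 0 ≤ Cz G Z P i j := by
  unfold Cz
  split
  · obtain ⟨b⟩ : Nonempty ((∀ k, Z k) × Z j × Z j) := inferInstance
    exact le_trans (TV_nonneg _ _)
      (Finset.le_sup' (fun p : (∀ k, Z k) × Z j × Z j =>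
        TV (P i (Function.update p.1 j p.2.1)) (P i (Function.update p.1 j p.2.2)))
        (Finset.mem_univ b))
  · exact le_refl _

lemma TV_update_le_Cz
    (hPloc : ∀ k (z z' : ∀ j, Z j),
      (∀ j, (j = k ∨ G.Adj k j) → z j = z' j) → P k z = P k z')
    (a : Fin n) (u : ∀ k, Z k) (j : Fin n) (b : Z j) :
    TV (P a u) (P a (Function.update u j b)) ≤ Cz G Z P a j := by
  by_cases h : j = a ∨ G.Adj a j
  · unfold Cz
    rw [if_pos h]
    have := Finset.le_sup'
      (fun p : (∀ k, Z k) × Z j × Z j =>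
        TV (P a (Function.update p.1 j p.2.1)) (P a (Function.update p.1 j p.2.2)))
      (Finset.mem_univ (u, u j, b))
    simpa only [Function.update_eq_self] using this
  · unfold Cz
    rw [if_neg h]
    have heq : P a u = P a (Function.update u j b) := by
      apply hPloc
      intro k hk
      have hkj : k ≠ j := by
        rintro rfl
        exact h (by tauto)
      rw [Function.update_of_ne hkj]
    rw [heq, TV_self]

lemma TV_le_sum_Cz_aux
    (hPloc : ∀ k (z z' : ∀ j, Z j),
      (∀ j, (j = k ∨ G.Adj k j) → z j = z' j) → P k z = P k z')
    (a : Fin n) (S : Finset (Fin n)) :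
    ∀ u v : ∀ k, Z k, (∀ k, k ∉ S → u k = v k) →
      TV (P a u) (P a v) ≤ ∑ k ∈ S, Cz G Z P a k := by
  classical
  induction S using Finset.induction_on with
  | empty =>
    intro u v h
    have : u = v := funext fun k => h k (Finset.notMem_empty k)
    rw [this, TV_self]
    simp
  | insert _ _ hnotmem =>
    rename_i j S ih
    intro u v h
    set u' := Function.update u j (v j) with hu'
    have h1 : TV (P a u) (P a u') ≤ Cz G Z P a j :=
      TV_update_le_Cz G Z P hPloc a u j (v j)
    have h2 : TV (P a u') (P a v) ≤ ∑ k ∈ S, Cz G Z P a k := by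
      apply ih
      intro k hk
      by_cases hkj : k = j
      · subst hkj; rw [hu', Function.update_self]
      · rw [hu', Function.update_of_ne hkj]
        exact h k (by simp [hkj, hk])
    calc TV (P a u) (P a v) ≤ TV (P a u) (P a u') + TV (P a u') (P a v) :=
        TV_triangle _ _ _
      _ ≤ Cz G Z P a j + ∑ k ∈ S, Cz G Z P a k := add_le_add h1 h2
      _ = ∑ k ∈ insert j S, Cz G Z P a k := (Finset.sum_insert hnotmem).symm

lemma TV_le_sum_Cz
    (hPloc : ∀ k (z z' : ∀ j, Z j),
      (∀ j, (j = k ∨ G.Adj k j) → z j = z' j) → P k z = P k z')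
    (a : Fin n) (u v : ∀ k, Z k) :
    TV (P a u) (P a v) ≤ ∑ k, (if u k = v k then 0 else Cz G Z P a k) := by
  classical
  have := TV_le_sum_Cz_aux G Z P hPloc a (Finset.univ.filter fun k => ¬ u k = v k) u v
    (fun k hk => by simpa using not_not.mp (by simpa using hk))
  refine this.trans (le_of_eq ?_)
  rw [Finset.sum_filter]
  exact Finset.sum_congr rfl fun k _ => by split_ifs <;> tauto

end Graph

section Qk
variable {n : ℕ}
    (Z : Fin n → Type) [∀ k, Fintype (Z k)] [∀ k, Nonempty (Z k)] [∀ k, DecidableEq (Z k)]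
    (P : ∀ k, (∀ j, Z j) → Z k → ℝ)

/-- the coupled transition kernel -/
noncomputable def Qk : ((∀ j, Z j) × (∀ j, Z j)) → ((∀ j, Z j) × (∀ j, Z j)) → ℝ :=
  fun u v => ∏ k, couple (P k u.1) (P k u.2) (v.1 k, v.2 k)

variable (hPnonneg : ∀ k z x, 0 ≤ P k z x) (hPsum : ∀ k z, ∑ x, P k z x = 1)

/-- pairs-of-functions / functions-to-pairs equivalence -/
def pairEquiv : (∀ k, Z k × Z k) ≃ ((∀ k, Z k) × (∀ k, Z k)) where
  toFun g := (fun k => (g k).1, fun k => (g k).2)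
  invFun v := fun k => (v.1 k, v.2 k)
  left_inv g := by funext k; rfl
  right_inv v := by rfl

include hPnonneg in
lemma Qk_nonneg (u v : (∀ j, Z j) × (∀ j, Z j)) : 0 ≤ Qk Z P u v :=
  Finset.prod_nonneg fun k _ =>
    couple_nonneg _ _ (fun x => hPnonneg k u.1 x) (fun x => hPnonneg k u.2 x) _

include hPsum in
lemma Qk_marg1 (u : (∀ j, Z j) × (∀ j, Z j)) (v1 : ∀ j, Z j) :
    ∑ v2, Qk Z P u (v1, v2) = ∏ k, P k u.1 (v1 k) := by
  unfold Qk
  rw [← Fintype.prod_sum (fun k b => couple (P k u.1) (P k u.2) (v1 k, b))]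
  exact Finset.prod_congr rfl fun k _ =>
    couple_marg1 _ _ (hPsum k u.1) (hPsum k u.2) (v1 k)

include hPsum in
lemma Qk_marg2 (u : (∀ j, Z j) × (∀ j, Z j)) (v2 : ∀ j, Z j) :
    ∑ v1, Qk Z P u (v1, v2) = ∏ k, P k u.2 (v2 k) := by
  unfold Qk
  rw [← Fintype.prod_sum (fun k a => couple (P k u.1) (P k u.2) (a, v2 k))]
  exact Finset.prod_congr rfl fun k _ =>
    couple_marg2 _ _ (hPsum k u.1) (hPsum k u.2) (v2 k)

include hPnonneg hPsum in
lemma Qk_offdiag (u : (∀ j, Z j) × (∀ j, Z j)) (j : Fin n) :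
    ∑ v : (∀ k, Z k) × (∀ k, Z k), (if v.1 j = v.2 j then 0 else Qk Z P u v)
      ≤ TV (P j u.1) (P j u.2) := by
  classical
  set γ : ∀ k, Z k × Z k → ℝ := fun k ab => couple (P k u.1) (P k u.2) ab with hγ
  set h : ∀ k, Z k × Z k → ℝ :=
    fun k ab => if k = j ∧ ab.1 = ab.2 then 0 else γ k ab with hh
  have key : ∑ v : (∀ k, Z k) × (∀ k, Z k), (if v.1 j = v.2 j then 0 else Qk Z P u v)
      = ∑ g : ∀ k, Z k × Z k, ∏ k, h k (g k) := by
    rw [← Equiv.sum_comp (pairEquiv Z)]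
    apply Finset.sum_congr rfl
    intro g _
    show (if (g j).1 = (g j).2 then (0:ℝ)
        else Qk Z P u (pairEquiv Z g)) = ∏ k, h k (g k)
    have hQ : Qk Z P u (pairEquiv Z g) = ∏ k, γ k (g k) := by
      unfold Qk
      exact Finset.prod_congr rfl fun k _ => rfl
    by_cases hd : (g j).1 = (g j).2
    · rw [if_pos hd]
      symm
      apply Finset.prod_eq_zero (Finset.mem_univ j)
      rw [hh]
      simp [hd]
    · rw [if_neg hd, hQ]
      apply Finset.prod_congr rfl
      intro k _
      rw [hh]
      simp only
      rw [if_neg]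
      rintro ⟨rfl, h2⟩
      exact hd h2
  rw [key, ← Fintype.prod_sum h]
  have hone : ∀ k, k ≠ j → ∑ ab : Z k × Z k, h k ab = 1 := by
    intro k hk
    have : ∀ ab : Z k × Z k, h k ab = γ k ab := by
      intro ab; rw [hh]; simp only; rw [if_neg]; rintro ⟨rfl, -⟩; exact hk rfl
    rw [Finset.sum_congr rfl fun ab _ => this ab, hγ]
    simp only
    rw [Fintype.sum_prod_type]
    rw [Finset.sum_congr rfl fun a _ => couple_marg1 _ _ (hPsum k u.1) (hPsum k u.2) a]
    exact hPsum k u.1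
  rw [Finset.prod_eq_single j (fun k _ hk => hone k hk) (fun hj => absurd (Finset.mem_univ j) hj)]
  have : ∑ ab : Z j × Z j, h j ab
      = ∑ ab : Z j × Z j, (if ab.1 = ab.2 then 0 else couple (P j u.1) (P j u.2) ab) := by
    apply Finset.sum_congr rfl
    intro ab _
    rw [hh]
    simp only [true_and]
    rfl
  rw [this]
  exact couple_offdiag _ _ (fun x => hPnonneg j u.1 x) (fun x => hPnonneg j u.2 x)
    (hPsum j u.1) (hPsum j u.2)

end Qk

lemma stepDist_nonneg {Y : Type*} [Fintype Y] [DecidableEq Y] (K : Y → Y → ℝ)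
    (hK : ∀ u v, 0 ≤ K u v) (z0 : Y) : ∀ t w, 0 ≤ stepDist K t z0 w := by
  intro t
  induction t with
  | zero => intro w; simp only [stepDist]; split <;> norm_num
  | succ t ih =>
    intro w
    simp only [stepDist]
    exact Finset.sum_nonneg fun q _ => mul_nonneg (ih q) (hK q w)

section Chain
variable {n : ℕ} (G : SimpleGraph (Fin n)) [DecidableRel G.Adj]
    (Z : Fin n → Type) [∀ k, Fintype (Z k)] [∀ k, Nonempty (Z k)] [∀ k, DecidableEq (Z k)]
    (P : ∀ k, (∀ j, Z j) → Z k → ℝ) (z zt : ∀ j, Z j)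

/-- expected disagreement indicator at coordinate `j`, time `t`, under the coupled chain -/
noncomputable def dfun (t : ℕ) (j : Fin n) : ℝ :=
  ∑ p : (∀ j, Z j) × (∀ j, Z j),
    (if p.1 j = p.2 j then (0:ℝ) else 1) * stepDist (Qk Z P) t (z, zt) p

lemma dfun_nonneg (hPnonneg : ∀ k z x, 0 ≤ P k z x) (t : ℕ) (j : Fin n) :
    0 ≤ dfun Z P z zt t j :=
  Finset.sum_nonneg fun p _ => mul_nonneg (by split <;> norm_num)
    (stepDist_nonneg _ (Qk_nonneg Z P hPnonneg) _ t p)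

lemma dfun_zero (j : Fin n) : dfun Z P z zt 0 j = if z j = zt j then 0 else 1 := by
  unfold dfun
  rw [Finset.sum_eq_single ((z, zt) : (∀ j, Z j) × (∀ j, Z j))]
  · show (if z j = zt j then (0:ℝ) else 1) *
      (if ((z, zt) : (∀ j, Z j) × (∀ j, Z j)) = (z, zt) then (1:ℝ) else 0) = _
    rw [if_pos rfl, mul_one]
  · intro p _ hp
    show _ * (if p = (z, zt) then (1:ℝ) else 0) = 0
    rw [if_neg hp, mul_zero]
  · intro h; exact absurd (Finset.mem_univ _) h

lemma dfun_rec (hPnonneg : ∀ k z x, 0 ≤ P k z x) (hPsum : ∀ k z, ∑ x, P k z x = 1)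
    (hPloc : ∀ k (z z' : ∀ j, Z j),
      (∀ j, (j = k ∨ G.Adj k j) → z j = z' j) → P k z = P k z')
    (t : ℕ) (j : Fin n) :
    dfun Z P z zt (t+1) j ≤ ∑ k, Cz G Z P j k * dfun Z P z zt t k := by
  classical
  set D : ℕ → (((j : Fin n) → Z j) × ((j : Fin n) → Z j)) → ℝ :=
    fun s p => stepDist (Qk Z P) s (z, zt) p with hD
  have hDnn : ∀ t p, 0 ≤ D t p :=
    fun t p => stepDist_nonneg _ (Qk_nonneg Z P hPnonneg) _ t p
  have e1 : dfun Z P z zt (t+1) j = ∑ q, D t q *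
      ∑ p : (∀ j, Z j) × (∀ j, Z j), (if p.1 j = p.2 j then (0:ℝ) else 1) * Qk Z P q p := by
    unfold dfun
    simp only [stepDist]
    calc ∑ p : (∀ j, Z j) × (∀ j, Z j),
          (if p.1 j = p.2 j then (0:ℝ) else 1) *
            ∑ q, stepDist (Qk Z P) t (z, zt) q * Qk Z P q p
        = ∑ p : (∀ j, Z j) × (∀ j, Z j), ∑ q,
            (if p.1 j = p.2 j then (0:ℝ) else 1) * (D t q * Qk Z P q p) := by
          refine Finset.sum_congr rfl fun p _ => ?_
          rw [Finset.mul_sum]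
      _ = ∑ q, ∑ p : (∀ j, Z j) × (∀ j, Z j),
            (if p.1 j = p.2 j then (0:ℝ) else 1) * (D t q * Qk Z P q p) := Finset.sum_comm
      _ = ∑ q, D t q * ∑ p : (∀ j, Z j) × (∀ j, Z j),
            (if p.1 j = p.2 j then (0:ℝ) else 1) * Qk Z P q p := by
          refine Finset.sum_congr rfl fun q _ => ?_
          rw [Finset.mul_sum]
          exact Finset.sum_congr rfl fun p _ => by ring
  rw [e1]
  have hbound : ∀ q : (∀ j, Z j) × (∀ j, Z j),
      (∑ p : (∀ j, Z j) × (∀ j, Z j), (if p.1 j = p.2 j then (0:ℝ) else 1) * Qk Z P q p)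
        ≤ ∑ k, (if q.1 k = q.2 k then (0:ℝ) else 1) * Cz G Z P j k := by
    intro q
    have h1 : (∑ p : (∀ j, Z j) × (∀ j, Z j),
          (if p.1 j = p.2 j then (0:ℝ) else 1) * Qk Z P q p)
        = ∑ p : (∀ j, Z j) × (∀ j, Z j), (if p.1 j = p.2 j then (0:ℝ) else Qk Z P q p) :=
      Finset.sum_congr rfl fun p _ => by split <;> ring
    rw [h1]
    refine (Qk_offdiag Z P hPnonneg hPsum q j).trans ?_
    refine (TV_le_sum_Cz G Z P hPloc j q.1 q.2).trans (le_of_eq ?_)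
    exact Finset.sum_congr rfl fun k _ => by split <;> ring
  calc ∑ q, D t q * ∑ p : (∀ j, Z j) × (∀ j, Z j),
        (if p.1 j = p.2 j then (0:ℝ) else 1) * Qk Z P q p
      ≤ ∑ q, D t q * ∑ k, (if q.1 k = q.2 k then (0:ℝ) else 1) * Cz G Z P j k :=
        Finset.sum_le_sum fun q _ => mul_le_mul_of_nonneg_left (hbound q) (hDnn t q)
    _ = ∑ k, Cz G Z P j k * dfun Z P z zt t k := by
        unfold dfun
        calc ∑ q, D t q * ∑ k, (if q.1 k = q.2 k then (0:ℝ) else 1) * Cz G Z P j k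
            = ∑ q, ∑ k, Cz G Z P j k *
                ((if q.1 k = q.2 k then (0:ℝ) else 1) * D t q) := by
              refine Finset.sum_congr rfl fun q _ => ?_
              rw [Finset.mul_sum]
              exact Finset.sum_congr rfl fun k _ => by ring
          _ = ∑ k, ∑ q, Cz G Z P j k *
                ((if q.1 k = q.2 k then (0:ℝ) else 1) * D t q) := Finset.sum_comm
          _ = ∑ k, Cz G Z P j k *
                ∑ q, (if q.1 k = q.2 k then (0:ℝ) else 1) * D t q := by
              exact Finset.sum_congr rfl fun k _ => (Finset.mul_sum _ _ _).symm

lemma stepDist_fst (hPsum : ∀ k z, ∑ x, P k z x = 1) :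
    ∀ t (v1 : ∀ j, Z j), ∑ v2, stepDist (Qk Z P) t (z, zt) (v1, v2)
      = stepDist (fun u v => ∏ k, P k u (v k)) t z v1 := by
  intro t
  induction t with
  | zero =>
    intro v1
    show ∑ v2, (if ((v1, v2) : (∀ j, Z j) × (∀ j, Z j)) = (z, zt) then (1:ℝ) else 0)
      = if v1 = z then 1 else 0
    by_cases h : v1 = z
    · subst h
      rw [if_pos rfl, Finset.sum_eq_single zt]
      · rw [if_pos rfl]
      · intro b _ hb; rw [if_neg (by simp [hb])]
      · intro hh; exact absurd (Finset.mem_univ zt) hh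
    · rw [if_neg h]
      exact Finset.sum_eq_zero fun v2 _ => by rw [if_neg (by simp [h])]
  | succ t ih =>
    intro v1
    show ∑ v2, ∑ q, stepDist (Qk Z P) t (z, zt) q * Qk Z P q (v1, v2)
      = ∑ u, stepDist (fun u v => ∏ k, P k u (v k)) t z u * ∏ k, P k u (v1 k)
    rw [Finset.sum_comm]
    calc ∑ q, ∑ v2, stepDist (Qk Z P) t (z, zt) q * Qk Z P q (v1, v2)
        = ∑ q, stepDist (Qk Z P) t (z, zt) q * ∑ v2, Qk Z P q (v1, v2) :=
          Finset.sum_congr rfl fun q _ => (Finset.mul_sum _ _ _).symm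
      _ = ∑ q, stepDist (Qk Z P) t (z, zt) q * ∏ k, P k q.1 (v1 k) :=
          Finset.sum_congr rfl fun q _ => by rw [Qk_marg1 Z P hPsum q v1]
      _ = ∑ u1 : ∀ j, Z j, ∑ u2, stepDist (Qk Z P) t (z, zt) (u1, u2) * ∏ k, P k u1 (v1 k) := by
          rw [Fintype.sum_prod_type]
      _ = ∑ u1, (∑ u2, stepDist (Qk Z P) t (z, zt) (u1, u2)) * ∏ k, P k u1 (v1 k) :=
          Finset.sum_congr rfl fun u1 _ => (Finset.sum_mul _ _ _).symm
      _ = ∑ u, stepDist (fun u v => ∏ k, P k u (v k)) t z u * ∏ k, P k u (v1 k) :=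
          Finset.sum_congr rfl fun u1 _ => by rw [ih u1]

lemma stepDist_snd (hPsum : ∀ k z, ∑ x, P k z x = 1) :
    ∀ t (v2 : ∀ j, Z j), ∑ v1, stepDist (Qk Z P) t (z, zt) (v1, v2)
      = stepDist (fun u v => ∏ k, P k u (v k)) t zt v2 := by
  intro t
  induction t with
  | zero =>
    intro v2
    show ∑ v1, (if ((v1, v2) : (∀ j, Z j) × (∀ j, Z j)) = (z, zt) then (1:ℝ) else 0)
      = if v2 = zt then 1 else 0
    by_cases h : v2 = zt
    · subst h
      rw [if_pos rfl, Finset.sum_eq_single z]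
      · rw [if_pos rfl]
      · intro b _ hb; rw [if_neg (by simp [hb])]
      · intro hh; exact absurd (Finset.mem_univ z) hh
    · rw [if_neg h]
      exact Finset.sum_eq_zero fun v1 _ => by rw [if_neg (by simp [h])]
  | succ t ih =>
    intro v2
    show ∑ v1, ∑ q, stepDist (Qk Z P) t (z, zt) q * Qk Z P q (v1, v2)
      = ∑ u, stepDist (fun u v => ∏ k, P k u (v k)) t zt u * ∏ k, P k u (v2 k)
    rw [Finset.sum_comm]
    calc ∑ q, ∑ v1, stepDist (Qk Z P) t (z, zt) q * Qk Z P q (v1, v2)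
        = ∑ q, stepDist (Qk Z P) t (z, zt) q * ∑ v1, Qk Z P q (v1, v2) :=
          Finset.sum_congr rfl fun q _ => (Finset.mul_sum _ _ _).symm
      _ = ∑ q, stepDist (Qk Z P) t (z, zt) q * ∏ k, P k q.2 (v2 k) :=
          Finset.sum_congr rfl fun q _ => by rw [Qk_marg2 Z P hPsum q v2]
      _ = ∑ u2 : ∀ j, Z j, ∑ u1, stepDist (Qk Z P) t (z, zt) (u1, u2) * ∏ k, P k u2 (v2 k) := by
          rw [Fintype.sum_prod_type, Finset.sum_comm]
      _ = ∑ u2, (∑ u1, stepDist (Qk Z P) t (z, zt) (u1, u2)) * ∏ k, P k u2 (v2 k) :=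
          Finset.sum_congr rfl fun u2 _ => (Finset.sum_mul _ _ _).symm
      _ = ∑ u, stepDist (fun u v => ∏ k, P k u (v k)) t zt u * ∏ k, P k u (v2 k) :=
          Finset.sum_congr rfl fun u2 _ => by rw [ih u2]

lemma sum_abs_ind {X : Type*} [Fintype X] [DecidableEq X] (a b : X) :
    ∑ x, |(if a = x then (1:ℝ) else 0) - (if b = x then 1 else 0)|
      = if a = b then 0 else 2 := by
  by_cases hab : a = b
  · subst hab
    rw [if_pos rfl]
    exact Finset.sum_eq_zero fun x _ => by rw [sub_self, abs_zero]
  · rw [if_neg hab]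
    have h : ∀ x, |(if a = x then (1:ℝ) else 0) - (if b = x then 1 else 0)|
        = (if a = x then (1:ℝ) else 0) + (if b = x then 1 else 0) := by
      intro x
      by_cases ha : a = x <;> by_cases hb : b = x
      · exact absurd (ha.trans hb.symm) hab
      · simp [ha, hb]
      · simp [ha, hb]
      · simp [ha, hb]
    rw [Finset.sum_congr rfl fun x _ => h x, Finset.sum_add_distrib]
    rw [Finset.sum_ite_eq, Finset.sum_ite_eq]
    norm_num

lemma TV_marg_le_dfun (hPnonneg : ∀ k z x, 0 ≤ P k z x) (hPsum : ∀ k z, ∑ x, P k z x = 1)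
    (i : Fin n) (t : ℕ) :
    TV (fun x : Z i => ∑ w, if w i = x then
          stepDist (fun u v => ∏ k, P k u (v k)) t z w else 0)
       (fun x : Z i => ∑ w, if w i = x then
          stepDist (fun u v => ∏ k, P k u (v k)) t zt w else 0)
      ≤ dfun Z P z zt t i := by
  classical
  set D := stepDist (Qk Z P) t (z, zt) with hD
  have hDnn : ∀ p, 0 ≤ D p :=
    fun p => stepDist_nonneg _ (Qk_nonneg Z P hPnonneg) _ t p
  have hμ : ∀ x : Z i, (∑ w, if w i = x then
        stepDist (fun u v => ∏ k, P k u (v k)) t z w else 0)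
      = ∑ p : (∀ j, Z j) × (∀ j, Z j), (if p.1 i = x then (1:ℝ) else 0) * D p := by
    intro x
    rw [Fintype.sum_prod_type]
    calc ∑ w, (if w i = x then stepDist (fun u v => ∏ k, P k u (v k)) t z w else 0)
        = ∑ w, (if w i = x then (1:ℝ) else 0) * (∑ w2, D (w, w2)) := by
          refine Finset.sum_congr rfl fun w _ => ?_
          rw [hD, stepDist_fst Z P z zt hPsum t w]
          split <;> ring
      _ = ∑ w1, ∑ w2, (if w1 i = x then (1:ℝ) else 0) * D (w1, w2) :=
          Finset.sum_congr rfl fun w _ => Finset.mul_sum _ _ _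
  have hν : ∀ x : Z i, (∑ w, if w i = x then
        stepDist (fun u v => ∏ k, P k u (v k)) t zt w else 0)
      = ∑ p : (∀ j, Z j) × (∀ j, Z j), (if p.2 i = x then (1:ℝ) else 0) * D p := by
    intro x
    rw [Fintype.sum_prod_type, Finset.sum_comm]
    calc ∑ w, (if w i = x then stepDist (fun u v => ∏ k, P k u (v k)) t zt w else 0)
        = ∑ w, (if w i = x then (1:ℝ) else 0) * (∑ w1, D (w1, w)) := by
          refine Finset.sum_congr rfl fun w _ => ?_
          rw [hD, stepDist_snd Z P z zt hPsum t w]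
          split <;> ring
      _ = ∑ w2, ∑ w1, (if w2 i = x then (1:ℝ) else 0) * D (w1, w2) :=
          Finset.sum_congr rfl fun w _ => Finset.mul_sum _ _ _
  unfold TV
  have habs : ∀ x : Z i,
      |(∑ p : (∀ j, Z j) × (∀ j, Z j), (if p.1 i = x then (1:ℝ) else 0) * D p)
        - ∑ p : (∀ j, Z j) × (∀ j, Z j), (if p.2 i = x then (1:ℝ) else 0) * D p|
      ≤ ∑ p : (∀ j, Z j) × (∀ j, Z j),
          |(if p.1 i = x then (1:ℝ) else 0) - (if p.2 i = x then 1 else 0)| * D p := by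
    intro x
    rw [← Finset.sum_sub_distrib]
    refine (Finset.abs_sum_le_sum_abs _ _).trans (le_of_eq ?_)
    refine Finset.sum_congr rfl fun p _ => ?_
    rw [← sub_mul, abs_mul, abs_of_nonneg (hDnn p)]
  have hsum : ∑ x : Z i, ∑ p : (∀ j, Z j) × (∀ j, Z j),
        |(if p.1 i = x then (1:ℝ) else 0) - (if p.2 i = x then 1 else 0)| * D p
      = ∑ p : (∀ j, Z j) × (∀ j, Z j), (if p.1 i = p.2 i then (0:ℝ) else 2) * D p := by
    rw [Finset.sum_comm]
    refine Finset.sum_congr rfl fun p _ => ?_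
    rw [← Finset.sum_mul, sum_abs_ind]
  have final : ∑ x : Z i,
      |(∑ w, if w i = x then stepDist (fun u v => ∏ k, P k u (v k)) t z w else 0)
        - ∑ w, if w i = x then stepDist (fun u v => ∏ k, P k u (v k)) t zt w else 0|
      ≤ ∑ p : (∀ j, Z j) × (∀ j, Z j), (if p.1 i = p.2 i then (0:ℝ) else 2) * D p := by
    rw [← hsum]
    refine Finset.sum_le_sum fun x _ => ?_
    rw [hμ x, hν x]
    exact habs x
  have : dfun Z P z zt t i = (1/2) * ∑ p : (∀ j, Z j) × (∀ j, Z j),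
      (if p.1 i = p.2 i then (0:ℝ) else 2) * D p := by
    unfold dfun
    rw [← hD, Finset.mul_sum]
    refine Finset.sum_congr rfl fun p _ => ?_
    split <;> ring
  rw [this]
  have h2 : (0:ℝ) < 1/2 := by norm_num
  calc (1/2 : ℝ) * ∑ x : Z i,
      |(∑ w, if w i = x then stepDist (fun u v => ∏ k, P k u (v k)) t z w else 0)
        - ∑ w, if w i = x then stepDist (fun u v => ∏ k, P k u (v k)) t zt w else 0|
      ≤ (1/2) * ∑ p : (∀ j, Z j) × (∀ j, Z j), (if p.1 i = p.2 i then (0:ℝ) else 2) * D p :=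
        mul_le_mul_of_nonneg_left final (by norm_num)
    _ = _ := rfl

end Chain

/-- **Lemma 3 (perturbation of Markov chains on product spaces).**
For a Markov chain on `Z = Z₁ × ⋯ × Zₙ` with transition probability factorizing as
`P(z'|z) = ∏ᵢ Pᵢ(zᵢ'|z_{N_i})`, if `∑_j C^z_{ij} ≤ ρ` for all `i`, then for initial
states agreeing on all coordinates in `N_i^κ`, the time-`t` marginal distributions of
coordinate `i` satisfy `TV = 0` for `t ≤ κ` and `TV ≤ ρ^t` for `t > κ`. -/
theorem markov_chain_exponential_decay
    {n : ℕ} (G : SimpleGraph (Fin n)) [DecidableRel G.Adj]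
    (Z : Fin n → Type)
    [∀ k, Fintype (Z k)] [∀ k, Nonempty (Z k)] [∀ k, DecidableEq (Z k)]
    (P : ∀ k, (∀ j, Z j) → Z k → ℝ)
    (hPnonneg : ∀ k z x, 0 ≤ P k z x)
    (hPsum : ∀ k z, ∑ x, P k z x = 1)
    (hPloc : ∀ k (z z' : ∀ j, Z j),
      (∀ j, (j = k ∨ G.Adj k j) → z j = z' j) → P k z = P k z')
    (ρ : ℝ) (hC : ∀ i, ∑ j, Cz G Z P i j ≤ ρ)
    (i : Fin n) (κ : ℕ) (hκ : 1 ≤ κ)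
    (z zt : ∀ j, Z j)
    (hagree : ∀ j, G.Reachable i j → G.dist i j ≤ κ → z j = zt j) :
    (∀ t ≤ κ,
      TV (fun x : Z i => ∑ w, if w i = x then
            stepDist (fun u v => ∏ k, P k u (v k)) t z w else 0)
         (fun x : Z i => ∑ w, if w i = x then
            stepDist (fun u v => ∏ k, P k u (v k)) t zt w else 0) = 0) ∧
    (∀ t, κ < t →
      TV (fun x : Z i => ∑ w, if w i = x then
            stepDist (fun u v => ∏ k, P k u (v k)) t z w else 0)
         (fun x : Z i => ∑ w, if w i = x then
            stepDist (fun u v => ∏ k, P k u (v k)) t zt w else 0) ≤ ρ ^ t) := by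
  classical
  have hρ0 : 0 ≤ ρ :=
    le_trans (Finset.sum_nonneg fun j _ => Cz_nonneg G Z P i j) (hC i)
  -- growth bound
  have hgrow : ∀ t j, dfun Z P z zt t j ≤ ρ ^ t := by
    intro t
    induction t with
    | zero =>
      intro j
      rw [dfun_zero, pow_zero]
      split <;> norm_num
    | succ t ih =>
      intro j
      refine (dfun_rec G Z P z zt hPnonneg hPsum hPloc t j).trans ?_
      calc ∑ k, Cz G Z P j k * dfun Z P z zt t k
          ≤ ∑ k, Cz G Z P j k * ρ ^ t :=
            Finset.sum_le_sum fun k _ =>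
              mul_le_mul_of_nonneg_left (ih k) (Cz_nonneg G Z P j k)
        _ = (∑ k, Cz G Z P j k) * ρ ^ t := (Finset.sum_mul _ _ _).symm
        _ ≤ ρ * ρ ^ t :=
            mul_le_mul_of_nonneg_right (hC j) (pow_nonneg hρ0 t)
        _ = ρ ^ (t + 1) := (pow_succ' ρ t).symm
  -- zero propagation
  have hzero : ∀ t j, G.Reachable i j → G.dist i j + t ≤ κ → dfun Z P z zt t j = 0 := by
    intro t
    induction t with
    | zero =>
      intro j hr hd
      rw [dfun_zero, if_pos (hagree j hr (by omega))]
    | succ t ih =>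
      intro j hr hd
      refine le_antisymm ?_ (dfun_nonneg Z P z zt hPnonneg _ j)
      refine (dfun_rec G Z P z zt hPnonneg hPsum hPloc t j).trans (le_of_eq ?_)
      apply Finset.sum_eq_zero
      intro k _
      by_cases hjk : k = j ∨ G.Adj j k
      · have hrk : G.Reachable i k := by
          rcases hjk with rfl | hadj
          · exact hr
          · exact hr.trans hadj.reachable
        have hdk : G.dist i k + t ≤ κ := by
          rcases hjk with rfl | hadj
          · omega
          · obtain ⟨p, hp⟩ := hr.exists_walk_length_eq_dist
            have := SimpleGraph.dist_le (p.concat hadj)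
            rw [SimpleGraph.Walk.length_concat, hp] at this
            omega
        rw [ih k hrk hdk, mul_zero]
      · have : Cz G Z P j k = 0 := by
          unfold Cz
          rw [if_neg hjk]
        rw [this, zero_mul]
  constructor
  · intro t ht
    have h1 := TV_marg_le_dfun Z P z zt hPnonneg hPsum i t
    have h2 : dfun Z P z zt t i = 0 := by
      apply hzero t i (SimpleGraph.Reachable.refl i)
      rw [SimpleGraph.dist_self]
      omega
    have h3 := TV_nonneg (fun x : Z i => ∑ w, if w i = x then
            stepDist (fun u v => ∏ k, P k u (v k)) t z w else 0)
         (fun x : Z i => ∑ w, if w i = x then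
            stepDist (fun u v => ∏ k, P k u (v k)) t zt w else 0)
    rw [h2] at h1
    linarith
  · intro t _
    exact (TV_marg_le_dfun Z P z zt hPnonneg hPsum i t).trans (hgrow t i)
end

section
/- Fix an agent i and an integer κ ≥ 1. Let π be the probability distribution on Z = S × A of the form π(s,a) = d(s) ∏_{ℓ=1}^n ζ_ℓ^{θ_ℓ}(a_ℓ|s_ℓ), where d is any probability distribution on S. Suppose for each agent j there is a function Q_j : Z → ℝ satisfying |Q_j(z) − Q_j(z')| ≤ c·ρ^{κ+1} whenever z and z' agree on all coordinates indexed by N_j^κ, let Q = (1/n) Σ_{j=1}^n Q_j, and let each Q̃_j : Z_{N_j^κ} → ℝ be a truncated function Q̃_j(z_{N_j^κ}) = Σ_{z_{N_{-j}^κ}} w_j(z_{N_{-j}^κ}; z_{N_j^κ}) Q_j(z_{N_j^κ}, z_{N_{-j}^κ}) for nonnegative weights w_j summing to 1 over z_{N_{-j}^κ} for each fixed z_{N_j^κ}. Assume ‖∇_{θ_i} log ζ_i^{θ_i}(a_i|s_i)‖ ≤ L_i for all a_i, s_i. Then ‖ E_{(s,a)∼π}[ ((1/n) Σ_{j∈N_i^κ}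 Q̃_j(s_{N_j^κ}, a_{N_j^κ}) − Q(s,a)) · ∇_{θ_i} log ζ_i^{θ_i}(a_i|s_i) ] ‖ ≤ c·L_i·ρ^{κ+1}. (When π = π^θ is the stationary distribution and Q_j = Q_j^θ, the subtracted term equals ∇_{θ_i} J(θ) by the policy gradient theorem, so this bounds ‖ĥ_i(θ) − ∇_{θ_i} J(θ)‖.) -/
open Finset

open Classical in
/-- The `κ`-hop neighborhood `N_i^κ` of agent `i`: all agents at graph distance at most
`κ` from `i` (including `i` itself). -/
noncomputable def kHop {n : ℕ} (G : SimpleGraph (Fin n)) (i : Fin n) (κ : ℕ) :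
    Finset (Fin n) :=
  Finset.univ.filter fun j => G.Reachable i j ∧ G.dist i j ≤ κ

/-- Combine the coordinates of `z` on `N_j^κ` with the coordinates of `z'` outside of
`N_j^κ` into one global state-action pair. -/
noncomputable def mergeOn {n : ℕ} (G : SimpleGraph (Fin n)) (j : Fin n) (κ : ℕ)
    (S A : Fin n → Type) (z z' : (∀ k, S k) × (∀ k, A k)) :
    (∀ k, S k) × (∀ k, A k) :=
  (fun ℓ => if ℓ ∈ kHop G j κ then z.1 ℓ else z'.1 ℓ,
   fun ℓ => if ℓ ∈ kHop G j κ then z.2 ℓ else z'.2 ℓ)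

/-- Score-function identity: the expected score is zero. -/
lemma score_sum_zero {E : Type*} [NormedAddCommGroup E] [InnerProductSpace ℝ E]
    [CompleteSpace E] {α : Type*} [Fintype α]
    (f : E → α → ℝ) (x : E)
    (hpos : ∀ u a, 0 < f u a) (hsum : ∀ u, ∑ a, f u a = 1)
    (hdiff : ∀ a, DifferentiableAt ℝ (fun u => f u a) x) :
    ∑ a, f x a • gradient (fun u => Real.log (f u a)) x = 0 := by
  have hlog : ∀ a, HasGradientAt (fun u => Real.log (f u a))
      ((f x a)⁻¹ • gradient (fun u => f u a) x) x := by
    intro a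
    have h1 : HasFDerivAt (fun u => Real.log (f u a))
        ((f x a)⁻¹ • (InnerProductSpace.toDual ℝ E (gradient (fun u => f u a) x))) x :=
      by have := (Real.hasDerivAt_log (ne_of_gt (hpos x a))).comp_hasFDerivAt x
            ((hdiff a).hasGradientAt.hasFDerivAt)
         exact this
    rw [hasGradientAt_iff_hasFDerivAt, map_smul]
    simpa using h1
  have hzg : ∀ a, f x a • gradient (fun u => Real.log (f u a)) x
      = gradient (fun u => f u a) x := by
    intro a
    rw [(hlog a).gradient, smul_smul, mul_inv_cancel₀ (ne_of_gt (hpos x a)), one_smul]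
  have hsumgrad : HasGradientAt (fun u => ∑ a, f u a)
      (∑ a, gradient (fun u => f u a) x) x := by
    rw [hasGradientAt_iff_hasFDerivAt, map_sum]
    exact HasFDerivAt.fun_sum (fun a _ => (hdiff a).hasGradientAt.hasFDerivAt)
  have hconst : HasGradientAt (fun u => ∑ a, f u a) 0 x := by
    have : (fun u : E => ∑ a, f u a) = fun _ => (1 : ℝ) := funext fun u => hsum u
    rw [this, hasGradientAt_iff_hasFDerivAt, map_zero]
    exact hasFDerivAt_const _ _
  calc ∑ a, f x a • gradient (fun u => Real.log (f u a)) x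
      = ∑ a, gradient (fun u => f u a) x := by simp_rw [hzg]
    _ = 0 := hsumgrad.unique hconst

/-- If `h` does not depend on the `i`-th coordinate, then the `h`-weighted expected
score is zero. -/
lemma expect_indep_zero {n : ℕ} (A : Fin n → Type) [∀ k, Fintype (A k)]
    {E : Type*} [AddCommGroup E] [Module ℝ E]
    (i : Fin n) (p : ∀ k, A k → ℝ) (g : A i → E)
    (hp1 : ∑ b, p i b = 1)
    (hzero : ∑ b, p i b • g b = 0)
    (h : (∀ k, A k) → ℝ)
    (hind : ∀ a b, h (Function.update a i b) = h a) :
    ∑ a : ∀ k, A k, ((∏ ℓ, p ℓ (a ℓ)) * h a) • g (a i) = 0 := by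
  classical
  have key : ∀ (a : ∀ k, A k) (b : A i),
      (p i (a i) *
        ((∏ ℓ, p ℓ (Function.update a i b ℓ)) * h (Function.update a i b)))
        • g ((Function.update a i b) i)
      = ((∏ ℓ, p ℓ (a ℓ)) * h a) • (p i b • g b) := by
    intro a b
    have hprod : (∏ ℓ, p ℓ (Function.update a i b ℓ))
        = p i b * ∏ ℓ ∈ Finset.univ.erase i, p ℓ (a ℓ) := by
      rw [← Finset.mul_prod_erase Finset.univ _ (Finset.mem_univ i), Function.update_self]
      congr 1
      exact Finset.prod_congr rfl fun ℓ hℓ => by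
        rw [Function.update_of_ne (Finset.ne_of_mem_erase hℓ)]
    have hprod2 : (∏ ℓ, p ℓ (a ℓ)) = p i (a i) * ∏ ℓ ∈ Finset.univ.erase i, p ℓ (a ℓ) :=
      (Finset.mul_prod_erase Finset.univ _ (Finset.mem_univ i)).symm
    rw [Function.update_self, hind, hprod, hprod2, smul_smul]
    congr 1
    ring
  set σ : ((∀ k, A k) × A i) → ((∀ k, A k) × A i) :=
    fun q => (Function.update q.1 i q.2, q.1 i) with hσ
  have hinv : Function.Involutive σ := by
    intro q
    refine Prod.ext ?_ ?_
    · funext ℓ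
      by_cases hℓ : ℓ = i
      · subst hℓ; simp [hσ]
      · simp [hσ, Function.update_of_ne hℓ]
    · simp [hσ]
  calc ∑ a : ∀ k, A k, ((∏ ℓ, p ℓ (a ℓ)) * h a) • g (a i)
      = ∑ a : ∀ k, A k, ∑ b : A i, (p i b * ((∏ ℓ, p ℓ (a ℓ)) * h a)) • g (a i) := by
        refine Finset.sum_congr rfl fun a _ => ?_
        rw [← Finset.sum_smul, ← Finset.sum_mul, hp1, one_mul]
    _ = ∑ q : (∀ k, A k) × A i, (p i q.2 * ((∏ ℓ, p ℓ (q.1 ℓ)) * h q.1)) • g (q.1 i) := by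
        rw [Fintype.sum_prod_type]
    _ = ∑ q : (∀ k, A k) × A i,
          (p i (σ q).2 * ((∏ ℓ, p ℓ ((σ q).1 ℓ)) * h (σ q).1)) • g ((σ q).1 i) :=
        (Equiv.sum_comp (Function.Involutive.toPerm σ hinv)
          (fun q => (p i q.2 * ((∏ ℓ, p ℓ (q.1 ℓ)) * h q.1)) • g (q.1 i))).symm
    _ = ∑ a : ∀ k, A k, ∑ b : A i, ((∏ ℓ, p ℓ (a ℓ)) * h a) • (p i b • g b) := by
        rw [Fintype.sum_prod_type]
        refine Finset.sum_congr rfl fun a _ => Finset.sum_congr rfl fun b _ => ?_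
        simp only [hσ]
        exact key a b
    _ = 0 := by
        refine Finset.sum_eq_zero fun a _ => ?_
        rw [← Finset.smul_sum, hzero, smul_zero]

lemma sum_swap3 {α β γ M : Type*} [Fintype α] [Fintype β] [AddCommMonoid M]
    (t : Finset γ) (f : α → β → γ → M) :
    ∑ x : α, ∑ y : β, ∑ z ∈ t, f x y z = ∑ z ∈ t, ∑ x : α, ∑ y : β, f x y z :=
  calc ∑ x : α, ∑ y : β, ∑ z ∈ t, f x y z
      = ∑ x : α, ∑ z ∈ t, ∑ y : β, f x y z :=
        Finset.sum_congr rfl fun x _ => Finset.sum_comm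
    _ = ∑ z ∈ t, ∑ x : α, ∑ y : β, f x y z := Finset.sum_comm

/-- **Lemma 2(b): truncated policy gradient approximation.**
Let `π(s,a) = d(s) ∏_ℓ ζ_ℓ^{θ_ℓ}(a_ℓ|s_ℓ)`.  If each `Q_j` satisfies the exponential
decay estimate `|Q_j(z) − Q_j(z')| ≤ c ρ^{κ+1}` whenever `z, z'` agree on `N_j^κ`,
`Q = (1/n) ∑_j Q_j`, each `Q̃_j` is a truncation of `Q_j` by nonnegative weights
(depending on the `N_j^κ`-coordinates) summing to one, and
`‖∇_{θ_i} log ζ_i^{θ_i}(a_i|s_i)‖ ≤ L_i`, then the approximated policy gradient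
`ĥ_i` built from the `Q̃_j, j ∈ N_i^κ` differs from the exact one (built from `Q`)
by at most `c L_i ρ^{κ+1}` in norm. -/
theorem truncated_policy_gradient_error
    {n : ℕ} (G : SimpleGraph (Fin n))
    (S A : Fin n → Type)
    [∀ k, Fintype (S k)] [∀ k, Nonempty (S k)]
    [∀ k, Fintype (A k)] [∀ k, Nonempty (A k)]
    (mdim : Fin n → ℕ)
    (ζ : ∀ k, EuclideanSpace ℝ (Fin (mdim k)) → S k → A k → ℝ)
    (θ : ∀ k, EuclideanSpace ℝ (Fin (mdim k)))
    (hζpos : ∀ k t s a, 0 < ζ k t s a)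
    (hζsum : ∀ k t s, ∑ a, ζ k t s a = 1)
    (hζdiff : ∀ k t s a, DifferentiableAt ℝ (fun u => ζ k u s a) t)
    (d : (∀ k, S k) → ℝ) (hd0 : ∀ s, 0 ≤ d s) (hd1 : ∑ s, d s = 1)
    (i : Fin n) (κ : ℕ) (hκ : 1 ≤ κ)
    (c ρ : ℝ) (hc : 0 < c) (hρ : ρ ∈ Set.Ioo (0 : ℝ) 1)
    (Q : Fin n → ((∀ k, S k) × (∀ k, A k)) → ℝ)
    (hdecay : ∀ j (z z' : (∀ k, S k) × (∀ k, A k)),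
      (∀ ℓ ∈ kHop G j κ, z.1 ℓ = z'.1 ℓ ∧ z.2 ℓ = z'.2 ℓ) →
      |Q j z - Q j z'| ≤ c * ρ ^ (κ + 1))
    (w : Fin n → ((∀ k, S k) × (∀ k, A k)) → ((∀ k, S k) × (∀ k, A k)) → ℝ)
    (hw0 : ∀ j z z', 0 ≤ w j z z')
    (hw1 : ∀ j z, ∑ z', w j z z' = 1)
    (hwdep : ∀ j (z zalt z' : (∀ k, S k) × (∀ k, A k)),
      (∀ ℓ ∈ kHop G j κ, z.1 ℓ = zalt.1 ℓ ∧ z.2 ℓ = zalt.2 ℓ) → w j z z' = w j zalt z')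
    (Li : ℝ)
    (hgrad : ∀ (si : S i) (ai : A i),
      ‖gradient (fun u => Real.log (ζ i u si ai)) (θ i)‖ ≤ Li) :
    ‖∑ s, ∑ a, ((d s * ∏ ℓ, ζ ℓ (θ ℓ) (s ℓ) (a ℓ)) *
        (((1 : ℝ) / n) * ∑ j ∈ kHop G i κ,
            (∑ z', w j (s, a) z' * Q j (mergeOn G j κ S A (s, a) z')) -
          ((1 : ℝ) / n) * ∑ j, Q j (s, a))) •
        gradient (fun u => Real.log (ζ i u (s i) (a i))) (θ i)‖ ≤
      c * Li * ρ ^ (κ + 1) := by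
  classical
  have hn0 : 0 < n := i.pos
  have hnR : (0 : ℝ) < (n : ℝ) := by exact_mod_cast hn0
  obtain ⟨hρ0, hρ1⟩ := hρ
  have hcρ : 0 ≤ c * ρ ^ (κ + 1) := mul_nonneg hc.le (pow_nonneg hρ0.le _)
  have hLi : 0 ≤ Li :=
    le_trans (norm_nonneg _) (hgrad (Classical.arbitrary _) (Classical.arbitrary _))
  set a₀ : A i := Classical.arbitrary (A i) with ha₀
  have hprodpos : ∀ (s : ∀ k, S k) (a : ∀ k, A k),
      0 < ∏ ℓ, ζ ℓ (θ ℓ) (s ℓ) (a ℓ) :=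
    fun s a => Finset.prod_pos fun ℓ _ => hζpos ℓ (θ ℓ) (s ℓ) (a ℓ)
  have hP0 : ∀ (s : ∀ k, S k) (a : ∀ k, A k),
      0 ≤ d s * ∏ ℓ, ζ ℓ (θ ℓ) (s ℓ) (a ℓ) :=
    fun s a => mul_nonneg (hd0 s) (hprodpos s a).le
  have hπa : ∀ s : ∀ k, S k, ∑ a : ∀ k, A k, ∏ ℓ, ζ ℓ (θ ℓ) (s ℓ) (a ℓ) = 1 := by
    intro s
    calc ∑ a : ∀ k, A k, ∏ ℓ, ζ ℓ (θ ℓ) (s ℓ) (a ℓ)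
        = ∏ ℓ, ∑ b, ζ ℓ (θ ℓ) (s ℓ) b := by
          rw [← Fintype.piFinset_univ, ← Finset.prod_univ_sum]
      _ = 1 := Finset.prod_eq_one fun ℓ _ => hζsum ℓ (θ ℓ) (s ℓ)
  have hP1 : ∑ s : ∀ k, S k, ∑ a : ∀ k, A k, d s * ∏ ℓ, ζ ℓ (θ ℓ) (s ℓ) (a ℓ) = 1 := by
    calc ∑ s : ∀ k, S k, ∑ a : ∀ k, A k, d s * ∏ ℓ, ζ ℓ (θ ℓ) (s ℓ) (a ℓ)
        = ∑ s : ∀ k, S k, d s * ∑ a : ∀ k, A k, ∏ ℓ, ζ ℓ (θ ℓ) (s ℓ) (a ℓ) :=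
          Finset.sum_congr rfl fun s _ => (Finset.mul_sum _ _ _).symm
      _ = 1 := by
          simp_rw [hπa]
          simpa using hd1
  have hsym : ∀ p q : Fin n, p ∈ kHop G q κ → q ∈ kHop G p κ := by
    intro p q hp
    simp only [kHop, Finset.mem_filter, Finset.mem_univ, true_and] at hp ⊢
    exact ⟨hp.1.symm, by rw [SimpleGraph.dist_comm]; exact hp.2⟩
  have hD : ∀ (j : Fin n) (s : ∀ k, S k) (a : ∀ k, A k),
      |(if j ∈ kHop G i κ then ∑ z', w j (s, a) z' * Q j (mergeOn G j κ S A (s, a) z')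
          else Q j (s, Function.update a i a₀)) - Q j (s, a)| ≤ c * ρ ^ (κ + 1) := by
    intro j s a
    by_cases hj : j ∈ kHop G i κ
    · rw [if_pos hj]
      have hrw : (∑ z', w j (s, a) z' * Q j (mergeOn G j κ S A (s, a) z')) - Q j (s, a)
          = ∑ z', w j (s, a) z' * (Q j (mergeOn G j κ S A (s, a) z') - Q j (s, a)) := by
        simp_rw [mul_sub]
        rw [Finset.sum_sub_distrib, ← Finset.sum_mul, hw1, one_mul]
      rw [hrw]
      calc |∑ z', w j (s, a) z' * (Q j (mergeOn G j κ S A (s, a) z') - Q j (s, a))|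
          ≤ ∑ z', |w j (s, a) z' * (Q j (mergeOn G j κ S A (s, a) z') - Q j (s, a))| :=
            Finset.abs_sum_le_sum_abs _ _
        _ ≤ ∑ z', w j (s, a) z' * (c * ρ ^ (κ + 1)) := by
            refine Finset.sum_le_sum fun z' _ => ?_
            rw [abs_mul, abs_of_nonneg (hw0 j (s, a) z')]
            refine mul_le_mul_of_nonneg_left ?_ (hw0 j (s, a) z')
            refine hdecay j (mergeOn G j κ S A (s, a) z') (s, a) fun ℓ hℓ => ?_
            constructor <;> simp [mergeOn, hℓ]
        _ = c * ρ ^ (κ + 1) := by rw [← Finset.sum_mul, hw1, one_mul]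
    · rw [if_neg hj]
      refine hdecay j (s, Function.update a i a₀) (s, a) fun ℓ hℓ => ?_
      exact ⟨rfl, Function.update_of_ne (fun he => hj (hsym i j (by rw [← he]; exact hℓ))) _ _⟩
  have hZ : ∀ (j : Fin n) (s : ∀ k, S k),
      ∑ a : ∀ k, A k, ((∏ ℓ, ζ ℓ (θ ℓ) (s ℓ) (a ℓ)) * Q j (s, Function.update a i a₀)) •
        gradient (fun u => Real.log (ζ i u (s i) (a i))) (θ i) = 0 := by
    intro j s
    have hscore : ∑ b : A i, ζ i (θ i) (s i) b •
        gradient (fun u => Real.log (ζ i u (s i) b)) (θ i) = 0 :=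
      score_sum_zero (fun u b => ζ i u (s i) b) (θ i)
        (fun u b => hζpos i u (s i) b) (fun u => hζsum i u (s i))
        (fun b => hζdiff i (θ i) (s i) b)
    have hmain := expect_indep_zero A i (fun ℓ => ζ ℓ (θ ℓ) (s ℓ))
        (fun b => gradient (fun u => Real.log (ζ i u (s i) b)) (θ i))
        (hζsum i (θ i) (s i)) hscore
        (fun a => Q j (s, Function.update a i a₀))
        (fun a b => by simp only [Function.update_idem])
    simpa using hmain
  have hZ' : ∀ (j : Fin n) (s : ∀ k, S k),
      ∑ a : ∀ k, A k, ((d s * ∏ ℓ, ζ ℓ (θ ℓ) (s ℓ) (a ℓ)) * Q j (s, Function.update a i a₀)) •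
        gradient (fun u => Real.log (ζ i u (s i) (a i))) (θ i) = 0 := by
    intro j s
    calc ∑ a : ∀ k, A k, ((d s * ∏ ℓ, ζ ℓ (θ ℓ) (s ℓ) (a ℓ)) *
            Q j (s, Function.update a i a₀)) •
          gradient (fun u => Real.log (ζ i u (s i) (a i))) (θ i)
        = d s • ∑ a : ∀ k, A k, ((∏ ℓ, ζ ℓ (θ ℓ) (s ℓ) (a ℓ)) *
            Q j (s, Function.update a i a₀)) •
          gradient (fun u => Real.log (ζ i u (s i) (a i))) (θ i) := by
          rw [Finset.smul_sum]
          exact Finset.sum_congr rfl fun a _ => by rw [smul_smul, mul_assoc]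
      _ = 0 := by rw [hZ j s, smul_zero]
  set W : Fin n → EuclideanSpace ℝ (Fin (mdim i)) := fun j =>
    ∑ s : ∀ k, S k, ∑ a : ∀ k, A k,
      ((d s * ∏ ℓ, ζ ℓ (θ ℓ) (s ℓ) (a ℓ)) *
        ((if j ∈ kHop G i κ then ∑ z', w j (s, a) z' * Q j (mergeOn G j κ S A (s, a) z')
            else Q j (s, Function.update a i a₀)) - Q j (s, a))) •
        gradient (fun u => Real.log (ζ i u (s i) (a i))) (θ i) with hW
  have hre : (∑ s, ∑ a, ((d s * ∏ ℓ, ζ ℓ (θ ℓ) (s ℓ) (a ℓ)) *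
        (((1 : ℝ) / n) * ∑ j ∈ kHop G i κ,
            (∑ z', w j (s, a) z' * Q j (mergeOn G j κ S A (s, a) z')) -
          ((1 : ℝ) / n) * ∑ j, Q j (s, a))) •
        gradient (fun u => Real.log (ζ i u (s i) (a i))) (θ i))
      = ((1 : ℝ) / n) • ∑ j, W j := by
    have hsetN : Finset.univ.filter (fun j => j ∈ kHop G i κ) = kHop G i κ := by
      ext j; simp
    have hsetNc : Finset.univ.filter (fun j => ¬ j ∈ kHop G i κ)
        = Finset.univ \ kHop G i κ := by
      ext j; simp
    have h1 : ∀ (s : ∀ k, S k) (a : ∀ k, A k),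
        ((d s * ∏ ℓ, ζ ℓ (θ ℓ) (s ℓ) (a ℓ)) *
          (((1 : ℝ) / n) * ∑ j ∈ kHop G i κ,
              (∑ z', w j (s, a) z' * Q j (mergeOn G j κ S A (s, a) z')) -
            ((1 : ℝ) / n) * ∑ j, Q j (s, a))) •
          gradient (fun u => Real.log (ζ i u (s i) (a i))) (θ i)
        = (∑ j : Fin n, (((1 : ℝ) / n) * ((d s * ∏ ℓ, ζ ℓ (θ ℓ) (s ℓ) (a ℓ)) *
              ((if j ∈ kHop G i κ then
                  ∑ z', w j (s, a) z' * Q j (mergeOn G j κ S A (s, a) z')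
                else Q j (s, Function.update a i a₀)) - Q j (s, a)))) •
              gradient (fun u => Real.log (ζ i u (s i) (a i))) (θ i))
          - ∑ j ∈ Finset.univ \ kHop G i κ,
              (((1 : ℝ) / n) * ((d s * ∏ ℓ, ζ ℓ (θ ℓ) (s ℓ) (a ℓ)) *
                Q j (s, Function.update a i a₀))) •
              gradient (fun u => Real.log (ζ i u (s i) (a i))) (θ i) := by
      intro s a
      rw [← Finset.sum_smul, ← Finset.sum_smul, ← sub_smul]
      congr 1
      have hs : (∑ j : Fin n,
            ((if j ∈ kHop G i κ then
                ∑ z', w j (s, a) z' * Q j (mergeOn G j κ S A (s, a) z')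
              else Q j (s, Function.update a i a₀)) - Q j (s, a)))
          = (∑ j ∈ kHop G i κ, ∑ z', w j (s, a) z' * Q j (mergeOn G j κ S A (s, a) z'))
            + (∑ j ∈ Finset.univ \ kHop G i κ, Q j (s, Function.update a i a₀))
            - ∑ j, Q j (s, a) := by
        rw [Finset.sum_sub_distrib]
        congr 1
        rw [← Finset.sum_filter_add_sum_filter_not Finset.univ (fun j => j ∈ kHop G i κ)]
        congr 1
        · exact Finset.sum_congr hsetN fun j hj => if_pos hj
        · exact Finset.sum_congr hsetNc fun j hj =>
            if_neg (Finset.mem_sdiff.mp hj).2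
      simp only [← Finset.mul_sum]
      rw [hs]
      ring
    calc (∑ s, ∑ a, ((d s * ∏ ℓ, ζ ℓ (θ ℓ) (s ℓ) (a ℓ)) *
          (((1 : ℝ) / n) * ∑ j ∈ kHop G i κ,
              (∑ z', w j (s, a) z' * Q j (mergeOn G j κ S A (s, a) z')) -
            ((1 : ℝ) / n) * ∑ j, Q j (s, a))) •
          gradient (fun u => Real.log (ζ i u (s i) (a i))) (θ i))
        = ∑ s : ∀ k, S k, ∑ a : ∀ k, A k,
            ((∑ j : Fin n, (((1 : ℝ) / n) * ((d s * ∏ ℓ, ζ ℓ (θ ℓ) (s ℓ) (a ℓ)) *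
              ((if j ∈ kHop G i κ then
                  ∑ z', w j (s, a) z' * Q j (mergeOn G j κ S A (s, a) z')
                else Q j (s, Function.update a i a₀)) - Q j (s, a)))) •
              gradient (fun u => Real.log (ζ i u (s i) (a i))) (θ i))
            - ∑ j ∈ Finset.univ \ kHop G i κ,
                (((1 : ℝ) / n) * ((d s * ∏ ℓ, ζ ℓ (θ ℓ) (s ℓ) (a ℓ)) *
                  Q j (s, Function.update a i a₀))) •
                gradient (fun u => Real.log (ζ i u (s i) (a i))) (θ i)) :=
          Finset.sum_congr rfl fun s _ => Finset.sum_congr rfl fun a _ => h1 s a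
      _ = (∑ j : Fin n, ∑ s : ∀ k, S k, ∑ a : ∀ k, A k,
              (((1 : ℝ) / n) * ((d s * ∏ ℓ, ζ ℓ (θ ℓ) (s ℓ) (a ℓ)) *
              ((if j ∈ kHop G i κ then
                  ∑ z', w j (s, a) z' * Q j (mergeOn G j κ S A (s, a) z')
                else Q j (s, Function.update a i a₀)) - Q j (s, a)))) •
              gradient (fun u => Real.log (ζ i u (s i) (a i))) (θ i))
          - ∑ j ∈ Finset.univ \ kHop G i κ, ∑ s : ∀ k, S k, ∑ a : ∀ k, A k,
                (((1 : ℝ) / n) * ((d s * ∏ ℓ, ζ ℓ (θ ℓ) (s ℓ) (a ℓ)) *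
                  Q j (s, Function.update a i a₀))) •
                gradient (fun u => Real.log (ζ i u (s i) (a i))) (θ i) := by
          simp only [Finset.sum_sub_distrib]
          congr 1
          · exact sum_swap3 Finset.univ _
          · exact sum_swap3 (Finset.univ \ kHop G i κ) _
      _ = ((1 : ℝ) / n) • ∑ j, W j := by
          have hz2 : ∑ j ∈ Finset.univ \ kHop G i κ, ∑ s : ∀ k, S k, ∑ a : ∀ k, A k,
                (((1 : ℝ) / n) * ((d s * ∏ ℓ, ζ ℓ (θ ℓ) (s ℓ) (a ℓ)) *
                  Q j (s, Function.update a i a₀))) •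
                gradient (fun u => Real.log (ζ i u (s i) (a i))) (θ i) = 0 := by
            refine Finset.sum_eq_zero fun j _ => ?_
            refine Finset.sum_eq_zero fun s _ => ?_
            calc ∑ a : ∀ k, A k,
                  (((1 : ℝ) / n) * ((d s * ∏ ℓ, ζ ℓ (θ ℓ) (s ℓ) (a ℓ)) *
                    Q j (s, Function.update a i a₀))) •
                  gradient (fun u => Real.log (ζ i u (s i) (a i))) (θ i)
                = ((1 : ℝ) / n) • ∑ a : ∀ k, A k,
                    ((d s * ∏ ℓ, ζ ℓ (θ ℓ) (s ℓ) (a ℓ)) *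
                      Q j (s, Function.update a i a₀)) •
                    gradient (fun u => Real.log (ζ i u (s i) (a i))) (θ i) := by
                  rw [Finset.smul_sum]
                  exact Finset.sum_congr rfl fun a _ => mul_smul _ _ _
              _ = 0 := by rw [hZ' j s, smul_zero]
          rw [hz2, sub_zero, Finset.smul_sum]
          refine Finset.sum_congr rfl fun j _ => ?_
          simp only [hW, Finset.smul_sum]
          exact Finset.sum_congr rfl fun s _ =>
            Finset.sum_congr rfl fun a _ => mul_smul _ _ _
  rw [hre]
  have hWb : ∀ j : Fin n, ‖W j‖ ≤ c * ρ ^ (κ + 1) * Li := by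
    intro j
    rw [hW]
    calc ‖∑ s : ∀ k, S k, ∑ a : ∀ k, A k,
          ((d s * ∏ ℓ, ζ ℓ (θ ℓ) (s ℓ) (a ℓ)) *
            ((if j ∈ kHop G i κ then
                ∑ z', w j (s, a) z' * Q j (mergeOn G j κ S A (s, a) z')
              else Q j (s, Function.update a i a₀)) - Q j (s, a))) •
            gradient (fun u => Real.log (ζ i u (s i) (a i))) (θ i)‖
        ≤ ∑ s : ∀ k, S k, ∑ a : ∀ k, A k,
          ‖((d s * ∏ ℓ, ζ ℓ (θ ℓ) (s ℓ) (a ℓ)) *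
            ((if j ∈ kHop G i κ then
                ∑ z', w j (s, a) z' * Q j (mergeOn G j κ S A (s, a) z')
              else Q j (s, Function.update a i a₀)) - Q j (s, a))) •
            gradient (fun u => Real.log (ζ i u (s i) (a i))) (θ i)‖ :=
          (norm_sum_le _ _).trans (Finset.sum_le_sum fun s _ => norm_sum_le _ _)
      _ ≤ ∑ s : ∀ k, S k, ∑ a : ∀ k, A k,
          (d s * ∏ ℓ, ζ ℓ (θ ℓ) (s ℓ) (a ℓ)) * (c * ρ ^ (κ + 1) * Li) := by
          refine Finset.sum_le_sum fun s _ => Finset.sum_le_sum fun a _ => ?_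
          rw [norm_smul, Real.norm_eq_abs, abs_mul, abs_of_nonneg (hP0 s a)]
          calc (d s * ∏ ℓ, ζ ℓ (θ ℓ) (s ℓ) (a ℓ)) *
                |(if j ∈ kHop G i κ then
                    ∑ z', w j (s, a) z' * Q j (mergeOn G j κ S A (s, a) z')
                  else Q j (s, Function.update a i a₀)) - Q j (s, a)| *
                ‖gradient (fun u => Real.log (ζ i u (s i) (a i))) (θ i)‖
              ≤ (d s * ∏ ℓ, ζ ℓ (θ ℓ) (s ℓ) (a ℓ)) * (c * ρ ^ (κ + 1)) * Li :=
              mul_le_mul (mul_le_mul_of_nonneg_left (hD j s a) (hP0 s a))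
                (hgrad (s i) (a i)) (norm_nonneg _) (mul_nonneg (hP0 s a) hcρ)
            _ = (d s * ∏ ℓ, ζ ℓ (θ ℓ) (s ℓ) (a ℓ)) * (c * ρ ^ (κ + 1) * Li) := by ring
      _ = c * ρ ^ (κ + 1) * Li := by
          simp only [← Finset.sum_mul]
          rw [hP1, one_mul]
  calc ‖((1 : ℝ) / n) • ∑ j, W j‖
      = ((1 : ℝ) / n) * ‖∑ j, W j‖ := by
        rw [norm_smul, Real.norm_eq_abs, abs_of_nonneg (by positivity)]
    _ ≤ ((1 : ℝ) / n) * ∑ j, ‖W j‖ :=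
        mul_le_mul_of_nonneg_left (norm_sum_le _ _) (by positivity)
    _ ≤ ((1 : ℝ) / n) * ∑ _j : Fin n, (c * ρ ^ (κ + 1) * Li) :=
        mul_le_mul_of_nonneg_left (Finset.sum_le_sum fun j _ => hWb j) (by positivity)
    _ = c * Li * ρ ^ (κ + 1) := by
        rw [Finset.sum_const, Finset.card_univ, Fintype.card_fin, nsmul_eq_mul]
        field_simp
end

section
/- For every vector d ∈ ℝ^Z with 1^⊤ d = 0, one has ‖((P^⊤)^t) d‖₁ ≤ c_∞ · μ_D^t · ‖d‖₁ for every integer t ≥ 0, where c_∞ = √(|Z|/σ) and ‖·‖₁ is the ℓ1 norm. -/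
open Finset Matrix

/-- The weighted Euclidean norm `‖x‖_D = √(xᵀ D x)` with `D = diag(π)`. -/
noncomputable def Dnorm {Z : Type*} [Fintype Z] (π : Z → ℝ) (x : Z → ℝ) : ℝ :=
  Real.sqrt (∑ z, π z * x z ^ 2)

/-- **Lemma 6 (geometric mixing in ℓ¹).** For an ergodic row-stochastic matrix `P` with
stationary distribution `π ≥ σ > 0` and `‖P − 1πᵀ‖_D ≤ μ_D < 1`, every vector `d` with
`1ᵀd = 0` satisfies `‖(Pᵀ)ᵗ d‖₁ ≤ c_∞ μ_D^t ‖d‖₁` with `c_∞ = √(|Z|/σ)`. -/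
theorem mixing_l1_bound
    {Z : Type*} [Fintype Z] [Nonempty Z] [DecidableEq Z]
    (P : Matrix Z Z ℝ) (π : Z → ℝ) (σ μD : ℝ)
    (hPnonneg : ∀ z z', 0 ≤ P z z')
    (hProw : ∀ z, ∑ z', P z z' = 1)
    (hσ : 0 < σ) (hπσ : ∀ z, σ ≤ π z) (hπ1 : ∑ z, π z = 1)
    (hstat : ∀ z', ∑ z, π z * P z z' = π z')
    (hμD : μD ∈ Set.Ioo (0 : ℝ) 1)
    (hcontr : ∀ x : Z → ℝ,
      Dnorm π ((P - Matrix.of fun _ z' => π z').mulVec x) ≤ μD * Dnorm π x)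
    (d : Z → ℝ) (hd : ∑ z, d z = 0) (t : ℕ) :
    ∑ z, |((Pᵀ ^ t).mulVec d) z| ≤
      Real.sqrt ((Fintype.card Z : ℝ) / σ) * μD ^ t * ∑ z, |d z| := by
  obtain ⟨hμ0, hμ1⟩ := hμD
  have hcard : (1 : ℝ) ≤ (Fintype.card Z : ℝ) := by
    exact_mod_cast Nat.one_le_iff_ne_zero.mpr Fintype.card_ne_zero
  have hσ1 : σ ≤ 1 := by
    obtain ⟨z₀⟩ := (inferInstance : Nonempty Z)
    calc σ ≤ π z₀ := hπσ z₀
      _ ≤ ∑ z, π z := Finset.single_le_sum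
          (fun z _ => le_trans hσ.le (hπσ z)) (Finset.mem_univ z₀)
      _ = 1 := hπ1
  have hd1nonneg : (0 : ℝ) ≤ ∑ z, |d z| :=
    Finset.sum_nonneg fun z _ => abs_nonneg _
  have hsqrt1 : (1 : ℝ) ≤ Real.sqrt ((Fintype.card Z : ℝ) / σ) := by
    rw [show (1 : ℝ) = Real.sqrt 1 from (Real.sqrt_one).symm]
    apply Real.sqrt_le_sqrt
    rw [le_div_iff₀ hσ, one_mul]
    exact hσ1.trans hcard
  -- the case t = 0
  rcases Nat.eq_zero_or_pos t with ht0 | ht1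
  · subst ht0
    simp only [pow_zero, Matrix.one_mulVec]
    nlinarith [hsqrt1, hd1nonneg]
  -- main case : t ≥ 1
  set E : Matrix Z Z ℝ := Matrix.of fun _ z' => π z' with hE
  set M : Matrix Z Z ℝ := P - E with hM
  have hPE : P * E = E := by
    ext z z'
    simp only [Matrix.mul_apply, hE, Matrix.of_apply]
    rw [← Finset.sum_mul, hProw, one_mul]
  have hEP : E * P = E := by
    ext z z'
    simp only [Matrix.mul_apply, hE, Matrix.of_apply]
    exact hstat z'
  have hEE : E * E = E := by
    ext z z'
    simp only [Matrix.mul_apply, hE, Matrix.of_apply]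
    rw [← Finset.sum_mul, hπ1, one_mul]
  have hPnE : ∀ n : ℕ, P ^ n * E = E := by
    intro n
    induction n with
    | zero => simp
    | succ n ih => rw [pow_succ, mul_assoc, hPE, ih]
  have hMpow : ∀ n : ℕ, 1 ≤ n → M ^ n = P ^ n - E := by
    intro n hn
    induction n with
    | zero => omega
    | succ n ih =>
      rcases Nat.eq_zero_or_pos n with h0 | h1
      · subst h0; simp [hM]
      · rw [pow_succ, ih h1, pow_succ, hM]
        rw [sub_mul, mul_sub, mul_sub, hPnE, hEP, hEE]
        abel
  -- the sign vector
  set v : Z → ℝ := (Pᵀ ^ t).mulVec d with hv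
  set s : Z → ℝ := fun z => if 0 ≤ v z then 1 else -1 with hs
  have hsv : ∀ z, |v z| = s z * v z := by
    intro z
    by_cases h : 0 ≤ v z
    · simp [hs, h, abs_of_nonneg h]
    · simp [hs, h, abs_of_neg (lt_of_not_ge h)]
  have hs2 : ∀ z, s z ^ 2 = 1 := by
    intro z; by_cases h : 0 ≤ v z <;> simp [hs, h]
  -- Dnorm of s is 1
  have hDs : Dnorm π s = 1 := by
    unfold Dnorm
    rw [show ∑ z, π z * s z ^ 2 = ∑ z, π z by
      exact Finset.sum_congr rfl fun z _ => by rw [hs2 z, mul_one]]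
    rw [hπ1, Real.sqrt_one]
  -- contraction iterated
  have hDM : ∀ n : ℕ, Dnorm π ((M ^ n).mulVec s) ≤ μD ^ n := by
    intro n
    induction n with
    | zero => simp [hDs]
    | succ n ih =>
      rw [pow_succ']
      rw [← Matrix.mulVec_mulVec]
      calc Dnorm π (M.mulVec ((M ^ n).mulVec s))
          ≤ μD * Dnorm π ((M ^ n).mulVec s) := hcontr _
        _ ≤ μD * μD ^ n := by
            apply mul_le_mul_of_nonneg_left ih hμ0.le
        _ = μD ^ (n + 1) := by ring
  -- pointwise bound via Dnorm
  have hptwise : ∀ (y : Z → ℝ) (z : Z), |y z| ≤ Dnorm π y / Real.sqrt σ := by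
    intro y z
    have h1 : σ * y z ^ 2 ≤ ∑ w, π w * y w ^ 2 := by
      calc σ * y z ^ 2 ≤ π z * y z ^ 2 :=
            mul_le_mul_of_nonneg_right (hπσ z) (sq_nonneg _)
        _ ≤ ∑ w, π w * y w ^ 2 :=
            Finset.single_le_sum
              (fun w _ => mul_nonneg (hσ.le.trans (hπσ w)) (sq_nonneg _))
              (Finset.mem_univ z)
    have h2 : y z ^ 2 ≤ (∑ w, π w * y w ^ 2) / σ := by
      rw [le_div_iff₀ hσ]; linarith
    have h3 : |y z| ≤ Real.sqrt ((∑ w, π w * y w ^ 2) / σ) := by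
      rw [← Real.sqrt_sq_eq_abs]
      exact Real.sqrt_le_sqrt h2
    unfold Dnorm
    rwa [Real.sqrt_div (Finset.sum_nonneg fun w _ =>
      mul_nonneg (hσ.le.trans (hπσ w)) (sq_nonneg _))] at h3
  -- key rewriting of the ℓ¹ norm as a dot product
  have hsum : ∑ z, |v z| = d ⬝ᵥ (M ^ t).mulVec s := by
    have hvt : v = Matrix.vecMul d (P ^ t) := by
      rw [hv, ← Matrix.transpose_pow, Matrix.mulVec_transpose]
    have h1 : ∑ z, |v z| = Matrix.vecMul d (P ^ t) ⬝ᵥ s := by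
      simp only [dotProduct]
      rw [← hvt]
      exact Finset.sum_congr rfl fun z _ => by rw [hsv z, mul_comm]
    rw [h1, ← Matrix.dotProduct_mulVec]
    have hPt : P ^ t = M ^ t + E := by
      rw [hMpow t ht1]; abel
    rw [hPt, Matrix.add_mulVec, dotProduct_add]
    have hEz : E.mulVec s = fun _ => ∑ w, π w * s w := by
      ext z
      simp [Matrix.mulVec, dotProduct, hE]
    rw [hEz]
    have hzero : d ⬝ᵥ (fun _ : Z => ∑ w, π w * s w) = 0 := by
      simp only [dotProduct]
      rw [← Finset.sum_mul, hd, zero_mul]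
    rw [hzero, add_zero]
  -- finish
  rw [hsum]
  have hB : ∀ z, |((M ^ t).mulVec s) z| ≤ μD ^ t / Real.sqrt σ := by
    intro z
    calc |((M ^ t).mulVec s) z| ≤ Dnorm π ((M ^ t).mulVec s) / Real.sqrt σ :=
          hptwise _ z
      _ ≤ μD ^ t / Real.sqrt σ := by
          gcongr
          exact hDM t
  have hchain : d ⬝ᵥ (M ^ t).mulVec s ≤ (μD ^ t / Real.sqrt σ) * ∑ z, |d z| := by
    calc d ⬝ᵥ (M ^ t).mulVec s ≤ |d ⬝ᵥ (M ^ t).mulVec s| := le_abs_self _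
      _ ≤ ∑ z, |d z * ((M ^ t).mulVec s) z| := Finset.abs_sum_le_sum_abs _ _
      _ = ∑ z, |d z| * |((M ^ t).mulVec s) z| := by
          exact Finset.sum_congr rfl fun z _ => abs_mul _ _
      _ ≤ ∑ z, |d z| * (μD ^ t / Real.sqrt σ) := by
          apply Finset.sum_le_sum
          intro z _
          exact mul_le_mul_of_nonneg_left (hB z) (abs_nonneg _)
      _ = (μD ^ t / Real.sqrt σ) * ∑ z, |d z| := by
          rw [← Finset.sum_mul, mul_comm]
  refine hchain.trans ?_
  apply mul_le_mul_of_nonneg_right ?_ hd1nonneg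
  rw [div_le_iff₀ (Real.sqrt_pos.mpr hσ)]
  have hsp : Real.sqrt ((Fintype.card Z : ℝ) / σ) * Real.sqrt σ
      = Real.sqrt (Fintype.card Z : ℝ) := by
    rw [← Real.sqrt_mul (by positivity), div_mul_cancel₀ _ hσ.ne']
  have hc1 : (1 : ℝ) ≤ Real.sqrt (Fintype.card Z : ℝ) := by
    rw [show (1 : ℝ) = Real.sqrt 1 from Real.sqrt_one.symm]
    exact Real.sqrt_le_sqrt hcard
  calc μD ^ t = 1 * μD ^ t := (one_mul _).symm
    _ ≤ Real.sqrt (Fintype.card Z : ℝ) * μD ^ t :=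
        mul_le_mul_of_nonneg_right hc1 (pow_nonneg hμ0.le t)
    _ = Real.sqrt ((Fintype.card Z : ℝ) / σ) * μD ^ t * Real.sqrt σ := by
        rw [mul_assoc, mul_comm (μD ^ t), ← mul_assoc, hsp]
end

section
/- Let f : Z → ℝ^m be any function with ‖f(z)‖_∞ ≤ M for all z ∈ Z. Then for every z ∈ Z and every integer t ≥ 0, ‖ Σ_{z'} (P^t)(z,z') f(z') − Σ_{z'} π(z') f(z') ‖_∞ ≤ 2 M c_∞ μ_D^t; that is, the expectation of f at time t of the chain started at z differs from its stationary expectation by at most 2 M c_∞ μ_D^t in sup norm. -/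
open Finset Matrix

/-- **Geometric mixing of expectations (Lemma 6 / Lemma 7 form).** For a vector-valued
function `f : Z → ℝ^m` with `‖f(z)‖_∞ ≤ M`, the time-`t` expectation of `f` starting from
any state `z` differs from the stationary expectation by at most `2 M c_∞ μ_D^t` in sup
norm (i.e. in every component `k`). -/
theorem mixing_expectation_bound
    {Z : Type*} [Fintype Z] [Nonempty Z] [DecidableEq Z]
    (P : Matrix Z Z ℝ) (π : Z → ℝ) (σ μD : ℝ)
    (hPnonneg : ∀ z z', 0 ≤ P z z')
    (hProw : ∀ z, ∑ z', P z z' = 1)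
    (hσ : 0 < σ) (hπσ : ∀ z, σ ≤ π z) (hπ1 : ∑ z, π z = 1)
    (hstat : ∀ z', ∑ z, π z * P z z' = π z')
    (hμD : μD ∈ Set.Ioo (0 : ℝ) 1)
    (hcontr : ∀ x : Z → ℝ,
      Dnorm π ((P - Matrix.of fun _ z' => π z').mulVec x) ≤ μD * Dnorm π x)
    {m : ℕ} (f : Z → Fin m → ℝ) (M : ℝ)
    (hf : ∀ z k, |f z k| ≤ M) (t : ℕ) (z : Z) (k : Fin m) :
    |(∑ z', (P ^ t) z z' * f z' k) - ∑ z', π z' * f z' k| ≤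
      2 * M * Real.sqrt ((Fintype.card Z : ℝ) / σ) * μD ^ t := by
  obtain ⟨hμ0, hμ1⟩ := hμD
  have hM0 : 0 ≤ M := le_trans (abs_nonneg _) (hf (Classical.arbitrary Z) k)
  set x : Z → ℝ := fun z' => f z' k with hxdef
  set Q : Matrix Z Z ℝ := Matrix.of fun _ z' => π z' with hQdef
  have hcard1 : (1:ℝ) ≤ (Fintype.card Z : ℝ) := by
    exact_mod_cast Fintype.card_pos
  have hcardσ : (1:ℝ) ≤ (Fintype.card Z : ℝ) / σ := by
    have hσ1 : σ ≤ 1 := by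
      have := hπσ (Classical.arbitrary Z)
      have hs : π (Classical.arbitrary Z) ≤ ∑ z, π z := by
        apply Finset.single_le_sum (fun i _ => le_trans hσ.le (hπσ i)) (Finset.mem_univ _)
      linarith [hπ1 ▸ hs]
    rw [le_div_iff₀ hσ]
    linarith
  have hsqrt1 : (1:ℝ) ≤ Real.sqrt ((Fintype.card Z : ℝ) / σ) := by
    rw [show (1:ℝ) = Real.sqrt 1 by simp]
    exact Real.sqrt_le_sqrt hcardσ
  -- bound |∑ π z' * x z'| and |x z| by M
  have hxM : ∀ w, |x w| ≤ M := fun w => hf w k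
  rcases Nat.eq_zero_or_pos t with ht0 | htpos
  · subst ht0
    simp only [pow_zero, Matrix.one_apply]
    have h1 : (∑ z', (if z = z' then (1:ℝ) else 0) * x z') = x z := by
      simp [Finset.sum_ite_eq]
    rw [h1, mul_one]
    have hsum : |∑ z', π z' * x z'| ≤ M := by
      calc |∑ z', π z' * x z'| ≤ ∑ z', |π z' * x z'| := Finset.abs_sum_le_sum_abs _ _
        _ ≤ ∑ z', π z' * M := by
          apply Finset.sum_le_sum
          intro i _
          rw [abs_mul, abs_of_nonneg (le_trans hσ.le (hπσ i))]
          exact mul_le_mul_of_nonneg_left (hxM i) (le_trans hσ.le (hπσ i))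
        _ = M := by rw [← Finset.sum_mul, hπ1, one_mul]
    have := abs_sub (x z) (∑ z', π z' * x z')
    have hb : |x z - ∑ z', π z' * x z'| ≤ 2 * M := by
      calc |x z - ∑ z', π z' * x z'| ≤ |x z| + |∑ z', π z' * x z'| := abs_sub _ _
        _ ≤ 2 * M := by linarith [hxM z]
    calc |x z - ∑ z', π z' * x z'| ≤ 2 * M := hb
      _ ≤ 2 * M * Real.sqrt ((Fintype.card Z : ℝ) / σ) := by nlinarith
  · -- t ≥ 1
    have hrow : ∀ n, ∀ w, ∑ z', (P ^ n) w z' = 1 := by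
      intro n
      induction n with
      | zero => intro w; simp [Matrix.one_apply]
      | succ n ih =>
        intro w
        simp only [pow_succ, Matrix.mul_apply]
        rw [Finset.sum_comm]
        simp [← Finset.mul_sum, hProw, ih w]
    have hAQ : ∀ A : Matrix Z Z ℝ, (∀ w, ∑ z', A w z' = 1) → A * Q = Q := by
      intro A hA
      ext i j
      simp only [Matrix.mul_apply, hQdef, Matrix.of_apply]
      rw [← Finset.sum_mul, hA i, one_mul]
    have hQP : Q * P = Q := by
      ext i j
      simp only [Matrix.mul_apply, hQdef, Matrix.of_apply]
      exact hstat j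
    have hQQ : Q * Q = Q := hAQ Q (fun w => by simp [hQdef, hπ1])
    have hpow : ∀ n, 1 ≤ n → (P - Q) ^ n = P ^ n - Q := by
      intro n hn
      induction n with
      | zero => omega
      | succ n ih =>
        rcases Nat.eq_zero_or_pos n with h0 | h1
        · subst h0; simp
        · rw [pow_succ, ih h1, sub_mul, mul_sub, mul_sub, hQP, hQQ,
            hAQ (P ^ n) (hrow n), ← pow_succ]
          abel
    have hDnonneg : ∀ y : Z → ℝ, 0 ≤ Dnorm π y := fun y => Real.sqrt_nonneg _
    have hiter : ∀ n, Dnorm π (((P - Q) ^ n).mulVec x) ≤ μD ^ n * Dnorm π x := by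
      intro n
      induction n with
      | zero => simp [Matrix.one_mulVec]
      | succ n ih =>
        rw [pow_succ']
        rw [← Matrix.mulVec_mulVec]
        calc Dnorm π ((P - Q).mulVec (((P - Q) ^ n).mulVec x))
            ≤ μD * Dnorm π (((P - Q) ^ n).mulVec x) := hcontr _
          _ ≤ μD * (μD ^ n * Dnorm π x) := by
              exact mul_le_mul_of_nonneg_left ih hμ0.le
          _ = μD ^ (n + 1) * Dnorm π x := by ring
    have hDx : Dnorm π x ≤ M := by
      rw [Dnorm, show M = Real.sqrt (M ^ 2) by rw [Real.sqrt_sq hM0]]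
      apply Real.sqrt_le_sqrt
      calc ∑ w, π w * x w ^ 2 ≤ ∑ w, π w * M ^ 2 := by
            apply Finset.sum_le_sum
            intro i _
            apply mul_le_mul_of_nonneg_left _ (le_trans hσ.le (hπσ i))
            calc x i ^ 2 = |x i| ^ 2 := by rw [sq_abs]
              _ ≤ M ^ 2 := by
                apply pow_le_pow_left₀ (abs_nonneg _) (hxM i)
        _ = M ^ 2 := by rw [← Finset.sum_mul, hπ1, one_mul]
    have hentry : ∀ y : Z → ℝ, |y z| ≤ Dnorm π y / Real.sqrt σ := by
      intro y
      have hsum_nonneg : 0 ≤ ∑ w, π w * y w ^ 2 := by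
        apply Finset.sum_nonneg
        intro i _
        exact mul_nonneg (le_trans hσ.le (hπσ i)) (sq_nonneg _)
      have h1 : y z ^ 2 ≤ (∑ w, π w * y w ^ 2) / σ := by
        rw [le_div_iff₀ hσ]
        calc y z ^ 2 * σ = σ * y z ^ 2 := by ring
          _ ≤ π z * y z ^ 2 := mul_le_mul_of_nonneg_right (hπσ z) (sq_nonneg _)
          _ ≤ ∑ w, π w * y w ^ 2 := by
            apply Finset.single_le_sum (f := fun w => π w * y w ^ 2)
              (fun i _ => mul_nonneg (le_trans hσ.le (hπσ i)) (sq_nonneg _))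
              (Finset.mem_univ z)
      calc |y z| = Real.sqrt (y z ^ 2) := (Real.sqrt_sq_eq_abs _).symm
        _ ≤ Real.sqrt ((∑ w, π w * y w ^ 2) / σ) := Real.sqrt_le_sqrt h1
        _ = Dnorm π y / Real.sqrt σ := by
          rw [Real.sqrt_div hsum_nonneg, Dnorm]
    have heq : (∑ z', (P ^ t) z z' * x z') - ∑ z', π z' * x z'
        = ((P ^ t - Q).mulVec x) z := by
      simp [Matrix.mulVec, dotProduct, Matrix.sub_apply, hQdef, sub_mul,
        Finset.sum_sub_distrib]
    rw [heq, ← hpow t htpos]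
    have hsσ : 0 < Real.sqrt σ := Real.sqrt_pos.mpr hσ
    have hcge : 1 / Real.sqrt σ ≤ Real.sqrt ((Fintype.card Z : ℝ) / σ) := by
      rw [show (1:ℝ) / Real.sqrt σ = Real.sqrt (1 / σ) by
        rw [Real.sqrt_div (by norm_num : (0:ℝ) ≤ 1)]; simp]
      apply Real.sqrt_le_sqrt
      gcongr
    have hμt : (0:ℝ) ≤ μD ^ t := pow_nonneg hμ0.le t
    calc |(((P - Q) ^ t).mulVec x) z|
        ≤ Dnorm π (((P - Q) ^ t).mulVec x) / Real.sqrt σ := hentry _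
      _ ≤ (μD ^ t * Dnorm π x) / Real.sqrt σ := by have h := hiter t; gcongr
      _ ≤ (μD ^ t * M) / Real.sqrt σ := by gcongr
      _ ≤ 2 * M * Real.sqrt ((Fintype.card Z : ℝ) / σ) * μD ^ t := by
          rw [div_le_iff₀ hsσ]
          rw [div_le_iff₀ hsσ] at hcge
          nlinarith [mul_le_mul_of_nonneg_left hcge (mul_nonneg hM0 hμt),
            Real.sqrt_nonneg ((Fintype.card Z : ℝ) / σ)]
end

section
/- Let P̄ ∈ ℝ^{Z×Z} be another row-stochastic matrix with a stationary distribution π̄ (π̄^⊤ P̄ = π̄^⊤). Then ‖π − π̄‖₁ ≤ (c_∞/(1−μ_D)) · ‖P − P̄‖_∞, where ‖P − P̄‖_∞ = max_z Σ_{z'} |P(z,z') − P̄(z,z')| and c_∞ = √(|Z|/σ). -/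
open Finset Matrix

/-- Minkowski's inequality for plain Euclidean sums. -/
lemma minkowski_aux {ι : Type*} [Fintype ι] (f g : ι → ℝ) :
    Real.sqrt (∑ i, (f i + g i)^2) ≤ Real.sqrt (∑ i, f i^2) + Real.sqrt (∑ i, g i^2) := by
  have h := norm_add_le (E := EuclideanSpace ℝ ι) (WithLp.toLp 2 f) (WithLp.toLp 2 g)
  simpa [EuclideanSpace.norm_eq, Real.norm_eq_abs, sq_abs] using h

/-- **Lemma 7(a): Lipschitz continuity of the stationary distribution.** If `P̄` is
another row-stochastic matrix with stationary distribution `π̄`, then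
`‖π − π̄‖₁ ≤ (c_∞/(1−μ_D)) ‖P − P̄‖_∞` with `c_∞ = √(|Z|/σ)` and
`‖P − P̄‖_∞ = max_z ∑_{z'} |P(z,z') − P̄(z,z')|`. -/
theorem stationary_distribution_perturbation
    {Z : Type*} [Fintype Z] [Nonempty Z] [DecidableEq Z]
    (P : Matrix Z Z ℝ) (π : Z → ℝ) (σ μD : ℝ)
    (hPnonneg : ∀ z z', 0 ≤ P z z')
    (hProw : ∀ z, ∑ z', P z z' = 1)
    (hσ : 0 < σ) (hπσ : ∀ z, σ ≤ π z) (hπ1 : ∑ z, π z = 1)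
    (hstat : ∀ z', ∑ z, π z * P z z' = π z')
    (hμD : μD ∈ Set.Ioo (0 : ℝ) 1)
    (hcontr : ∀ x : Z → ℝ,
      Dnorm π ((P - Matrix.of fun _ z' => π z').mulVec x) ≤ μD * Dnorm π x)
    (Pb : Matrix Z Z ℝ) (πb : Z → ℝ)
    (hPbnonneg : ∀ z z', 0 ≤ Pb z z')
    (hPbrow : ∀ z, ∑ z', Pb z z' = 1)
    (hπbnonneg : ∀ z, 0 ≤ πb z) (hπb1 : ∑ z, πb z = 1)
    (hstatb : ∀ z', ∑ z, πb z * Pb z z' = πb z') :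
    ∑ z, |π z - πb z| ≤
      (Real.sqrt ((Fintype.card Z : ℝ) / σ) / (1 - μD)) *
        Finset.univ.sup' Finset.univ_nonempty (fun z => ∑ z', |P z z' - Pb z z'|) := by
  obtain ⟨hμ0, hμ1⟩ := hμD
  have hπpos : ∀ z, 0 < π z := fun z => lt_of_lt_of_le hσ (hπσ z)
  set M := Finset.univ.sup' Finset.univ_nonempty (fun z => ∑ z', |P z z' - Pb z z'|) with hMdef
  have hMrow : ∀ z, ∑ z', |P z z' - Pb z z'| ≤ M := by
    intro z
    rw [hMdef]
    exact Finset.le_sup' (fun z => ∑ z', |P z z' - Pb z z'|) (Finset.mem_univ z)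
  have hM0 : 0 ≤ M := by
    have h1 := hMrow (Classical.arbitrary Z)
    have h2 : (0 : ℝ) ≤ ∑ z', |P (Classical.arbitrary Z) z' - Pb (Classical.arbitrary Z) z'| :=
      Finset.sum_nonneg fun _ _ => abs_nonneg _
    linarith
  set Δ : Z → ℝ := fun z => π z - πb z with hΔdef
  set e : Z → ℝ := fun z' => ∑ z, πb z * (P z z' - Pb z z') with hedef
  have hΔsum : ∑ z, Δ z = 0 := by
    simp [hΔdef, Finset.sum_sub_distrib, hπ1, hπb1]
  -- the key perturbation identity
  have key : ∀ z', Δ z' = (∑ z, Δ z * (P z z' - π z')) + e z' := by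
    intro z'
    have h1 : ∑ z, Δ z * (P z z' - π z')
        = ∑ z, π z * P z z' - ∑ z, πb z * P z z' - (∑ z, Δ z) * π z' := by
      rw [Finset.sum_mul, ← Finset.sum_sub_distrib, ← Finset.sum_sub_distrib]
      exact Finset.sum_congr rfl fun z _ => by simp [hΔdef]; ring
    have h2 : e z' = ∑ z, πb z * P z z' - πb z' := by
      rw [hedef, ← hstatb z', ← Finset.sum_sub_distrib]
      exact Finset.sum_congr rfl fun z _ => by ring
    rw [h1, h2, hΔsum, hstat z']; simp [hΔdef]
  -- duality: the transpose operator is a contraction in the D⁻¹ norm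
  have hdual : ∀ y : Z → ℝ,
      Real.sqrt (∑ z', (∑ z, y z * (P z z' - π z'))^2 / π z')
        ≤ μD * Real.sqrt (∑ z, y z^2 / π z) := by
    intro y
    set v : Z → ℝ := fun z' => ∑ z, y z * (P z z' - π z') with hvdef
    set x : Z → ℝ := fun z' => v z' / π z' with hxdef
    set A : Matrix Z Z ℝ := P - Matrix.of fun _ z' => π z' with hAdef
    have hS : ∑ z', v z'^2 / π z' = ∑ z, y z * A.mulVec x z := by
      calc ∑ z', v z'^2 / π z' = ∑ z', ∑ z, y z * ((P z z' - π z') * x z') := by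
            refine Finset.sum_congr rfl fun z' _ => ?_
            have : v z'^2 / π z' = v z' * x z' := by
              rw [hxdef]; field_simp
            rw [this, hvdef, Finset.sum_mul]
            exact Finset.sum_congr rfl fun z _ => by ring
        _ = ∑ z, y z * A.mulVec x z := by
            rw [Finset.sum_comm]
            refine Finset.sum_congr rfl fun z _ => ?_
            simp [hAdef, Matrix.mulVec, dotProduct, Matrix.sub_apply, Finset.mul_sum]
    have hCS : ∑ z, y z * A.mulVec x z
        ≤ Real.sqrt (∑ z, y z^2 / π z) * Real.sqrt (∑ z, π z * (A.mulVec x z)^2) := by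
      have h := Real.sum_mul_le_sqrt_mul_sqrt Finset.univ
        (fun z => y z / Real.sqrt (π z)) (fun z => Real.sqrt (π z) * A.mulVec x z)
      have e1 : ∀ z : Z, y z / Real.sqrt (π z) * (Real.sqrt (π z) * A.mulVec x z)
          = y z * A.mulVec x z := by
        intro z
        have : Real.sqrt (π z) ≠ 0 := ne_of_gt (Real.sqrt_pos.2 (hπpos z))
        field_simp
      have e2 : ∀ z : Z, (y z / Real.sqrt (π z))^2 = y z^2 / π z := by
        intro z
        rw [div_pow, Real.sq_sqrt (hπpos z).le]
      have e3 : ∀ z : Z, (Real.sqrt (π z) * A.mulVec x z)^2 = π z * (A.mulVec x z)^2 := by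
        intro z
        rw [mul_pow, Real.sq_sqrt (hπpos z).le]
      simp only [e1, e2, e3] at h
      exact h
    have hDx : Dnorm π x = Real.sqrt (∑ z', v z'^2 / π z') := by
      unfold Dnorm
      congr 1
      refine Finset.sum_congr rfl fun z' _ => ?_
      have hz : π z' ≠ 0 := (hπpos z').ne'
      simp only [hxdef, div_pow]
      rw [eq_div_iff hz]
      field_simp
    have hc := hcontr x
    rw [hDx] at hc
    have hcc : Real.sqrt (∑ z, π z * (A.mulVec x z)^2)
        ≤ μD * Real.sqrt (∑ z', v z'^2 / π z') := hc
    set S := ∑ z', v z'^2 / π z' with hSdef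
    have hS0 : 0 ≤ S :=
      Finset.sum_nonneg fun z' _ => div_nonneg (sq_nonneg _) (hπpos z').le
    have hsqS : Real.sqrt S * Real.sqrt S = S := Real.mul_self_sqrt hS0
    have hy0 : 0 ≤ Real.sqrt (∑ z, y z^2 / π z) := Real.sqrt_nonneg _
    rcases eq_or_lt_of_le (Real.sqrt_nonneg S) with h0 | h0
    · rw [← h0]; positivity
    · have hchain : S ≤ Real.sqrt (∑ z, y z^2 / π z) * (μD * Real.sqrt S) := by
        calc S = ∑ z, y z * A.mulVec x z := hS
          _ ≤ Real.sqrt (∑ z, y z^2 / π z) * Real.sqrt (∑ z, π z * (A.mulVec x z)^2) := hCS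
          _ ≤ Real.sqrt (∑ z, y z^2 / π z) * (μD * Real.sqrt S) := by
              exact mul_le_mul_of_nonneg_left hcc hy0
      have h2 : Real.sqrt S * Real.sqrt S
          ≤ (μD * Real.sqrt (∑ z, y z^2 / π z)) * Real.sqrt S := by
        calc Real.sqrt S * Real.sqrt S = S := hsqS
          _ ≤ Real.sqrt (∑ z, y z^2 / π z) * (μD * Real.sqrt S) := hchain
          _ = (μD * Real.sqrt (∑ z, y z^2 / π z)) * Real.sqrt S := by ring
      exact le_of_mul_le_mul_right h2 h0
  -- N Δ ≤ μD N Δ + N e via Minkowski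
  set NΔ := Real.sqrt (∑ z, Δ z^2 / π z) with hNΔdef
  set Ne := Real.sqrt (∑ z', e z'^2 / π z') with hNedef
  have hstep : NΔ ≤ μD * NΔ + Ne := by
    have hmink := minkowski_aux
      (fun z' => (∑ z, Δ z * (P z z' - π z')) / Real.sqrt (π z'))
      (fun z' => e z' / Real.sqrt (π z'))
    have eL : ∑ z', ((∑ z, Δ z * (P z z' - π z')) / Real.sqrt (π z')
        + e z' / Real.sqrt (π z'))^2 = ∑ z', Δ z'^2 / π z' := by
      refine Finset.sum_congr rfl fun z' _ => ?_
      rw [← add_div, ← key z', div_pow, Real.sq_sqrt (hπpos z').le]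
    have eA : ∑ z', ((∑ z, Δ z * (P z z' - π z')) / Real.sqrt (π z'))^2
        = ∑ z', (∑ z, Δ z * (P z z' - π z'))^2 / π z' := by
      refine Finset.sum_congr rfl fun z' _ => ?_
      rw [div_pow, Real.sq_sqrt (hπpos z').le]
    have eB : ∑ z', (e z' / Real.sqrt (π z'))^2 = ∑ z', e z'^2 / π z' := by
      refine Finset.sum_congr rfl fun z' _ => ?_
      rw [div_pow, Real.sq_sqrt (hπpos z').le]
    rw [eL, eA, eB] at hmink
    exact hmink.trans (add_le_add (hdual Δ) le_rfl)
  have h1μ : 0 < 1 - μD := by linarith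
  have hNΔNe : NΔ ≤ Ne / (1 - μD) := by
    rw [le_div_iff₀ h1μ]
    nlinarith [hstep, Real.sqrt_nonneg (∑ z, Δ z^2 / π z)]
  -- ℓ¹ bound by the D⁻¹ norm
  have hl1 : ∑ z, |Δ z| ≤ NΔ := by
    have h := Real.sum_mul_le_sqrt_mul_sqrt Finset.univ
      (fun z => Real.sqrt (π z)) (fun z => |Δ z| / Real.sqrt (π z))
    have e1 : ∀ z : Z, Real.sqrt (π z) * (|Δ z| / Real.sqrt (π z)) = |Δ z| := by
      intro z
      have : Real.sqrt (π z) ≠ 0 := ne_of_gt (Real.sqrt_pos.2 (hπpos z))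
      field_simp
    have e2 : ∀ z : Z, (Real.sqrt (π z))^2 = π z := fun z => Real.sq_sqrt (hπpos z).le
    have e3 : ∀ z : Z, (|Δ z| / Real.sqrt (π z))^2 = Δ z^2 / π z := by
      intro z
      rw [div_pow, Real.sq_sqrt (hπpos z).le, sq_abs]
    simp only [e1, e2, e3, hπ1, Real.sqrt_one, one_mul] at h
    exact h
  -- bound on N e
  have hesum : ∑ z', |e z'| ≤ M := by
    calc ∑ z', |e z'| ≤ ∑ z', ∑ z, πb z * |P z z' - Pb z z'| := by
          refine Finset.sum_le_sum fun z' _ => ?_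
          refine (Finset.abs_sum_le_sum_abs _ _).trans ?_
          refine Finset.sum_le_sum fun z _ => ?_
          rw [abs_mul, abs_of_nonneg (hπbnonneg z)]
      _ ≤ M := by
          rw [Finset.sum_comm]
          calc ∑ z, ∑ z', πb z * |P z z' - Pb z z'|
              = ∑ z, πb z * ∑ z', |P z z' - Pb z z'| := by
                refine Finset.sum_congr rfl fun z _ => by rw [Finset.mul_sum]
            _ ≤ ∑ z, πb z * M := by
                refine Finset.sum_le_sum fun z _ =>
                  mul_le_mul_of_nonneg_left (hMrow z) (hπbnonneg z)
            _ = M := by rw [← Finset.sum_mul, hπb1, one_mul]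
  have hNe : Ne ≤ M / Real.sqrt σ := by
    have hsq : ∑ z', e z'^2 ≤ M^2 := by
      have h2 : ∑ z', |e z'|^2 ≤ (∑ z', |e z'|)^2 :=
        Finset.sum_sq_le_sq_sum_of_nonneg fun z' _ => abs_nonneg _
      simp only [sq_abs] at h2
      refine h2.trans ?_
      have := Finset.sum_nonneg (s := Finset.univ) fun z' (_ : z' ∈ Finset.univ) => abs_nonneg (e z')
      nlinarith [hesum]
    have h1 : ∑ z', e z'^2 / π z' ≤ M^2 / σ := by
      calc ∑ z', e z'^2 / π z' ≤ ∑ z', e z'^2 / σ := by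
            refine Finset.sum_le_sum fun z' _ => ?_
            rw [div_eq_mul_inv, div_eq_mul_inv]
            refine mul_le_mul_of_nonneg_left ?_ (sq_nonneg _)
            exact inv_anti₀ hσ (hπσ z')
        _ = (∑ z', e z'^2) / σ := by rw [Finset.sum_div]
        _ ≤ M^2 / σ := by gcongr
    calc Ne ≤ Real.sqrt (M^2 / σ) := Real.sqrt_le_sqrt h1
      _ = M / Real.sqrt σ := by
          rw [Real.sqrt_div (sq_nonneg M), Real.sqrt_sq hM0]
  -- final combination
  have hfinal : ∑ z, |Δ z| ≤ (M / Real.sqrt σ) / (1 - μD) := by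
    refine hl1.trans (hNΔNe.trans ?_)
    gcongr
  have hstep2 : M / Real.sqrt σ ≤ Real.sqrt ((Fintype.card Z : ℝ) / σ) * M := by
    rw [div_eq_mul_inv, mul_comm]
    have hinv : (Real.sqrt σ)⁻¹ ≤ Real.sqrt ((Fintype.card Z : ℝ) / σ) := by
      rw [← Real.sqrt_inv]
      apply Real.sqrt_le_sqrt
      rw [inv_eq_one_div]
      gcongr
      exact_mod_cast Fintype.card_pos
    exact mul_le_mul_of_nonneg_right hinv hM0
  have hconst : (M / Real.sqrt σ) / (1 - μD)
      ≤ (Real.sqrt ((Fintype.card Z : ℝ) / σ) / (1 - μD)) * M := by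
    calc (M / Real.sqrt σ) / (1 - μD)
        ≤ (Real.sqrt ((Fintype.card Z : ℝ) / σ) * M) / (1 - μD) := by gcongr
      _ = (Real.sqrt ((Fintype.card Z : ℝ) / σ) / (1 - μD)) * M := by ring
  calc ∑ z, |π z - πb z| = ∑ z, |Δ z| := rfl
    _ ≤ (M / Real.sqrt σ) / (1 - μD) := hfinal
    _ ≤ _ := hconst
end

section
/- Let P̄ ∈ ℝ^{Z×Z} be another row-stochastic matrix with a stationary distribution π̄ satisfying π̄(z) ≥ σ > 0 for every z and ‖P̄ − 1 π̄^⊤‖_{D̄} ≤ μ_D, where D̄ = diag(π̄). Fix any initial probability distribution d⁰ on Z and let d^t = ((P)^⊤)^t d⁰ and d̄^t = ((P̄)^⊤)^t d⁰. Then for every integer t ≥ 0, ‖ (d^t − π) − (d̄^t − π̄) ‖₁ ≤ (5 c_∞² / (1 − μ_D)) · ((1 + μ_D)/2)^t · ‖P − P̄‖_∞, where ‖P − P̄‖_∞ = max_z Σ_{z'} |P(z,z') − P̄(z,z')| and c_∞ = √(|Z|/σ). -/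
open Finset Matrix

/-- dual weighted norm -/
noncomputable def Ninv {Z : Type*} [Fintype Z] (π : Z → ℝ) (x : Z → ℝ) : ℝ :=
  Real.sqrt (∑ z, x z ^ 2 / π z)

lemma Ninv_nonneg {Z : Type*} [Fintype Z] (π x : Z → ℝ) : 0 ≤ Ninv π x :=
  Real.sqrt_nonneg _

lemma l1_le_Ninv {Z : Type*} [Fintype Z] {π : Z → ℝ} (hπ : ∀ z, 0 < π z)
    (hπ1 : ∑ z, π z = 1) (x : Z → ℝ) : ∑ z, |x z| ≤ Ninv π x := by
  have h := Real.sum_mul_le_sqrt_mul_sqrt Finset.univ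
    (fun z => Real.sqrt (π z)) (fun z => |x z| / Real.sqrt (π z))
  have hs : ∀ z : Z, Real.sqrt (π z) ≠ 0 := fun z =>
    ne_of_gt (Real.sqrt_pos.2 (hπ z))
  have e1 : ∀ z : Z, Real.sqrt (π z) * (|x z| / Real.sqrt (π z)) = |x z| := fun z =>
    mul_div_cancel₀ _ (hs z)
  have e2 : ∀ z : Z, (Real.sqrt (π z)) ^ 2 = π z := fun z => Real.sq_sqrt (hπ z).le
  have e3 : ∀ z : Z, (|x z| / Real.sqrt (π z)) ^ 2 = x z ^ 2 / π z := by
    intro z; rw [div_pow, sq_abs, e2]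
  calc ∑ z, |x z| = ∑ z, Real.sqrt (π z) * (|x z| / Real.sqrt (π z)) := by
        simp_rw [e1]
    _ ≤ Real.sqrt (∑ z, (Real.sqrt (π z)) ^ 2) *
        Real.sqrt (∑ z, (|x z| / Real.sqrt (π z)) ^ 2) := h
    _ = Ninv π x := by
        simp_rw [e2, e3, hπ1, Real.sqrt_one, one_mul, Ninv]

lemma sqrt_sum_sq_le {Z : Type*} [Fintype Z] (x : Z → ℝ) :
    Real.sqrt (∑ z, x z ^ 2) ≤ ∑ z, |x z| := by
  have h : ∑ z, x z ^ 2 ≤ (∑ z, |x z|) ^ 2 := by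
    have := Finset.sum_sq_le_sq_sum_of_nonneg (s := Finset.univ)
      (f := fun z : Z => |x z|) (fun i _ => abs_nonneg _)
    simpa [sq_abs] using this
  calc Real.sqrt (∑ z, x z ^ 2) ≤ Real.sqrt ((∑ z, |x z|) ^ 2) := Real.sqrt_le_sqrt h
    _ = ∑ z, |x z| := Real.sqrt_sq (by positivity)

lemma Ninv_le_l1 {Z : Type*} [Fintype Z] {π : Z → ℝ} {σ : ℝ} (hσ : 0 < σ)
    (hπσ : ∀ z, σ ≤ π z) (x : Z → ℝ) :
    Ninv π x ≤ (∑ z, |x z|) / Real.sqrt σ := by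
  have h1 : ∑ z, x z ^ 2 / π z ≤ (∑ z, x z ^ 2) / σ := by
    rw [Finset.sum_div]
    refine Finset.sum_le_sum fun z _ => ?_
    exact div_le_div_of_nonneg_left (sq_nonneg _) hσ (hπσ z)
  calc Ninv π x ≤ Real.sqrt ((∑ z, x z ^ 2) / σ) := Real.sqrt_le_sqrt h1
    _ = Real.sqrt (∑ z, x z ^ 2) / Real.sqrt σ := Real.sqrt_div' _ hσ.le
    _ ≤ (∑ z, |x z|) / Real.sqrt σ := by
        gcongr
        exact sqrt_sum_sq_le x

lemma Ninv_add_le {Z : Type*} [Fintype Z] {π : Z → ℝ} (hπ : ∀ z, 0 < π z)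
    (x y : Z → ℝ) :
    Ninv π (fun z => x z + y z) ≤ Ninv π x + Ninv π y := by
  set A := Ninv π x with hA
  set B := Ninv π y with hB
  have hA0 : 0 ≤ A := Real.sqrt_nonneg _
  have hB0 : 0 ≤ B := Real.sqrt_nonneg _
  have hs : ∀ z : Z, (Real.sqrt (π z)) ^ 2 = π z := fun z => Real.sq_sqrt (hπ z).le
  have hsn : ∀ z : Z, Real.sqrt (π z) ≠ 0 := fun z => ne_of_gt (Real.sqrt_pos.2 (hπ z))
  have hA2 : ∑ z, x z ^ 2 / π z = A ^ 2 :=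
    (Real.sq_sqrt (Finset.sum_nonneg fun z _ => div_nonneg (sq_nonneg _) (hπ z).le)).symm
  have hB2 : ∑ z, y z ^ 2 / π z = B ^ 2 :=
    (Real.sq_sqrt (Finset.sum_nonneg fun z _ => div_nonneg (sq_nonneg _) (hπ z).le)).symm
  have hcs : ∑ z, x z * y z / π z ≤ A * B := by
    have h := Real.sum_mul_le_sqrt_mul_sqrt Finset.univ
      (fun z => x z / Real.sqrt (π z)) (fun z => y z / Real.sqrt (π z))
    have e1 : ∀ z : Z, x z / Real.sqrt (π z) * (y z / Real.sqrt (π z))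
        = x z * y z / π z := by
      intro z
      rw [div_mul_div_comm, Real.mul_self_sqrt (hπ z).le]
    have e2 : ∀ z : Z, (x z / Real.sqrt (π z)) ^ 2 = x z ^ 2 / π z := by
      intro z; rw [div_pow, hs]
    have e3 : ∀ z : Z, (y z / Real.sqrt (π z)) ^ 2 = y z ^ 2 / π z := by
      intro z; rw [div_pow, hs]
    simp only [e1, e2, e3] at h
    rw [hA, hB]; unfold Ninv; exact h
  have key : ∑ z, (x z + y z) ^ 2 / π z ≤ (A + B) ^ 2 := by
    have expand : ∀ z : Z, (x z + y z) ^ 2 / π z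
        = x z ^ 2 / π z + 2 * (x z * y z / π z) + y z ^ 2 / π z := by
      intro z; field_simp; ring
    simp_rw [expand]
    rw [Finset.sum_add_distrib, Finset.sum_add_distrib, ← Finset.mul_sum, hA2, hB2]
    nlinarith [hcs]
  calc Ninv π (fun z => x z + y z) ≤ Real.sqrt ((A + B) ^ 2) := Real.sqrt_le_sqrt key
    _ = A + B := Real.sqrt_sq (by positivity)

lemma contr_dual {Z : Type*} [Fintype Z] [DecidableEq Z]
    (P : Matrix Z Z ℝ) (π : Z → ℝ) {σ μD : ℝ}
    (hσ : 0 < σ) (hπσ : ∀ z, σ ≤ π z) (hμ : 0 < μD)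
    (hcontr : ∀ x : Z → ℝ,
      Dnorm π ((P - Matrix.of fun _ z' => π z').mulVec x) ≤ μD * Dnorm π x)
    (e : Z → ℝ) (he : ∑ z, e z = 0) :
    Ninv π (Pᵀ.mulVec e) ≤ μD * Ninv π e := by
  have hπ : ∀ z, 0 < π z := fun z => lt_of_lt_of_le hσ (hπσ z)
  set y : Z → ℝ := Pᵀ.mulVec e with hy
  set x : Z → ℝ := fun z => y z / π z with hx
  set w : Z → ℝ := (P - Matrix.of fun _ z' => π z').mulVec x with hw
  have hN0 : 0 ≤ Ninv π y := Real.sqrt_nonneg _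
  have hNsq : Ninv π y ^ 2 = ∑ z, y z ^ 2 / π z :=
    Real.sq_sqrt (Finset.sum_nonneg fun z _ => div_nonneg (sq_nonneg _) (hπ z).le)
  -- step 1: the quadratic form equals ⟨e, (P - 1πᵀ) x⟩
  have step2 : ∑ z, y z ^ 2 / π z = ∑ z, e z * w z := by
    have hyz : ∀ z' : Z, y z' = ∑ z, P z z' * e z := by
      intro z'
      simp [hy, Matrix.mulVec, dotProduct, Matrix.transpose_apply]
    have hwz : ∀ z : Z, w z = (∑ z', P z z' * x z') - ∑ z', π z' * x z' := by
      intro z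
      simp [hw, Matrix.sub_mulVec, Matrix.mulVec, dotProduct, Matrix.of_apply]
    calc ∑ z, y z ^ 2 / π z = ∑ z', x z' * y z' := by
          refine Finset.sum_congr rfl fun z _ => ?_
          rw [hx]
          field_simp
      _ = ∑ z', x z' * ∑ z, P z z' * e z := by simp_rw [← hyz]
      _ = ∑ z', ∑ z, e z * (P z z' * x z') := by
          refine Finset.sum_congr rfl fun z' _ => ?_
          rw [Finset.mul_sum]; refine Finset.sum_congr rfl fun z _ => by ring
      _ = ∑ z, e z * ∑ z', P z z' * x z' := by
          rw [Finset.sum_comm]; simp_rw [← Finset.mul_sum]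
      _ = ∑ z, e z * w z := by
          simp_rw [hwz, mul_sub, Finset.sum_sub_distrib, ← Finset.sum_mul, he,
            zero_mul, sub_zero]
  -- step 2: Cauchy-Schwarz  ⟨e, w⟩ ≤ Ninv π e * Dnorm π w
  have step3 : ∑ z, e z * w z ≤ Ninv π e * Dnorm π w := by
    have h := Real.sum_mul_le_sqrt_mul_sqrt Finset.univ
      (fun z => e z / Real.sqrt (π z)) (fun z => Real.sqrt (π z) * w z)
    have e1 : ∀ z : Z, e z / Real.sqrt (π z) * (Real.sqrt (π z) * w z) = e z * w z := by
      intro z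
      have h0 : Real.sqrt (π z) ≠ 0 := ne_of_gt (Real.sqrt_pos.2 (hπ z))
      field_simp
    have e2 : ∀ z : Z, (e z / Real.sqrt (π z)) ^ 2 = e z ^ 2 / π z := by
      intro z; rw [div_pow, Real.sq_sqrt (hπ z).le]
    have e3 : ∀ z : Z, (Real.sqrt (π z) * w z) ^ 2 = π z * w z ^ 2 := by
      intro z; rw [mul_pow, Real.sq_sqrt (hπ z).le]
    simpa only [e1, e2, e3, Ninv, Dnorm] using h
  -- step 3: Dnorm π x = Ninv π y
  have step4 : Dnorm π x = Ninv π y := by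
    unfold Dnorm Ninv
    congr 1
    refine Finset.sum_congr rfl fun z _ => ?_
    have h0 : π z ≠ 0 := (hπ z).ne'
    rw [hx]
    field_simp
  have key : Ninv π y * Ninv π y ≤ (μD * Ninv π e) * Ninv π y := by
    have h1 : Ninv π y * Ninv π y = ∑ z, y z ^ 2 / π z := by
      rw [← hNsq]; ring
    calc Ninv π y * Ninv π y = ∑ z, e z * w z := by rw [h1, step2]
      _ ≤ Ninv π e * Dnorm π w := step3
      _ ≤ Ninv π e * (μD * Dnorm π x) :=
          mul_le_mul_of_nonneg_left (hcontr x) (Real.sqrt_nonneg _)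
      _ = (μD * Ninv π e) * Ninv π y := by rw [step4]; ring
  rcases eq_or_lt_of_le hN0 with h | h
  · rw [← h]
    exact mul_nonneg hμ.le (Real.sqrt_nonneg _)
  · exact le_of_mul_le_mul_right key h

lemma perturb_l1 {Z : Type*} [Fintype Z] (P Pb : Matrix Z Z ℝ) {Δ : ℝ}
    (hΔ : ∀ z, ∑ z', |P z z' - Pb z z'| ≤ Δ) (e : Z → ℝ) :
    ∑ z', |(Pᵀ.mulVec e) z' - (Pbᵀ.mulVec e) z'| ≤ Δ * ∑ z, |e z| := by
  have habs : ∀ z' : Z, |(Pᵀ.mulVec e) z' - (Pbᵀ.mulVec e) z'|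
      ≤ ∑ z, |P z z' - Pb z z'| * |e z| := by
    intro z'
    have : (Pᵀ.mulVec e) z' - (Pbᵀ.mulVec e) z' = ∑ z, (P z z' - Pb z z') * e z := by
      simp [Matrix.mulVec, dotProduct, Matrix.transpose_apply, sub_mul,
        Finset.sum_sub_distrib]
    rw [this]
    refine (Finset.abs_sum_le_sum_abs _ _).trans ?_
    refine Finset.sum_le_sum fun z _ => ?_
    rw [abs_mul]
  calc ∑ z', |(Pᵀ.mulVec e) z' - (Pbᵀ.mulVec e) z'|
      ≤ ∑ z', ∑ z, |P z z' - Pb z z'| * |e z| := Finset.sum_le_sum fun z' _ => habs z'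
    _ = ∑ z, (∑ z', |P z z' - Pb z z'|) * |e z| := by
        rw [Finset.sum_comm]; simp_rw [Finset.sum_mul]
    _ ≤ ∑ z, Δ * |e z| := by
        refine Finset.sum_le_sum fun z _ => ?_
        exact mul_le_mul_of_nonneg_right (hΔ z) (abs_nonneg _)
    _ = Δ * ∑ z, |e z| := by rw [Finset.mul_sum]

lemma sum_mulVec_transpose {Z : Type*} [Fintype Z] (P : Matrix Z Z ℝ)
    (hProw : ∀ z, ∑ z', P z z' = 1) (v : Z → ℝ) :
    ∑ z', (Pᵀ.mulVec v) z' = ∑ z, v z := by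
  simp only [Matrix.mulVec, dotProduct, Matrix.transpose_apply]
  rw [Finset.sum_comm]
  refine Finset.sum_congr rfl fun z _ => ?_
  rw [← Finset.sum_mul, hProw, one_mul]

lemma aux_pow {μ : ℝ} (h0 : 0 < μ) (h1 : μ < 1) :
    ∀ t : ℕ, (t : ℝ) * μ ^ (t - 1) * ((1 - μ) / 2) ≤ ((1 + μ) / 2) ^ t := by
  intro t
  induction t with
  | zero => norm_num
  | succ n ih =>
    have hρ : μ ≤ (1 + μ) / 2 := by linarith
    have hρ0 : (0 : ℝ) ≤ (1 + μ) / 2 := by linarith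
    have hstep : ((n : ℝ) + 1) * μ ^ n = μ * ((n : ℝ) * μ ^ (n - 1)) + μ ^ n := by
      cases n with
      | zero => norm_num
      | succ m =>
        have : (m + 1 : ℕ) - 1 = m := rfl
        rw [this]
        push_cast
        ring
    have hμρ : μ ^ n ≤ ((1 + μ) / 2) ^ n := pow_le_pow_left₀ h0.le hρ n
    calc ((n + 1 : ℕ) : ℝ) * μ ^ ((n + 1) - 1) * ((1 - μ) / 2)
        = (μ * ((n : ℝ) * μ ^ (n - 1)) + μ ^ n) * ((1 - μ) / 2) := by
          push_cast
          rw [hstep]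
      _ = μ * ((n : ℝ) * μ ^ (n - 1) * ((1 - μ) / 2)) + μ ^ n * ((1 - μ) / 2) := by ring
      _ ≤ μ * ((1 + μ) / 2) ^ n + ((1 + μ) / 2) ^ n * ((1 - μ) / 2) := by
          refine add_le_add (mul_le_mul_of_nonneg_left ih h0.le) ?_
          exact mul_le_mul_of_nonneg_right hμρ (by linarith)
      _ ≤ ((1 + μ) / 2) ^ (n + 1) := by
          rw [pow_succ]
          nlinarith [pow_nonneg hρ0 n]


set_option maxHeartbeats 1000000 in
/-- **Equation (21): Lipschitz continuity of the time-`t` deviation from stationarity.**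
If `P̄` is another row-stochastic matrix with stationary distribution `π̄ ≥ σ` that is
also `μ_D`-contractive in its own `D̄`-norm, then for any initial distribution `d⁰` the
time-`t` distributions `dᵗ = (Pᵀ)ᵗ d⁰` and `d̄ᵗ = (P̄ᵀ)ᵗ d⁰` satisfy
`‖(dᵗ − π) − (d̄ᵗ − π̄)‖₁ ≤ (5c_∞²/(1−μ_D)) ((1+μ_D)/2)ᵗ ‖P − P̄‖_∞`. -/
theorem time_t_deviation_lipschitz
    {Z : Type*} [Fintype Z] [Nonempty Z] [DecidableEq Z]
    (P : Matrix Z Z ℝ) (π : Z → ℝ) (σ μD : ℝ)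
    (hPnonneg : ∀ z z', 0 ≤ P z z')
    (hProw : ∀ z, ∑ z', P z z' = 1)
    (hσ : 0 < σ) (hπσ : ∀ z, σ ≤ π z) (hπ1 : ∑ z, π z = 1)
    (hstat : ∀ z', ∑ z, π z * P z z' = π z')
    (hμD : μD ∈ Set.Ioo (0 : ℝ) 1)
    (hcontr : ∀ x : Z → ℝ,
      Dnorm π ((P - Matrix.of fun _ z' => π z').mulVec x) ≤ μD * Dnorm π x)
    (Pb : Matrix Z Z ℝ) (πb : Z → ℝ)
    (hPbnonneg : ∀ z z', 0 ≤ Pb z z')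
    (hPbrow : ∀ z, ∑ z', Pb z z' = 1)
    (hπbσ : ∀ z, σ ≤ πb z) (hπb1 : ∑ z, πb z = 1)
    (hstatb : ∀ z', ∑ z, πb z * Pb z z' = πb z')
    (hcontrb : ∀ x : Z → ℝ,
      Dnorm πb ((Pb - Matrix.of fun _ z' => πb z').mulVec x) ≤ μD * Dnorm πb x)
    (d0 : Z → ℝ) (hd0nonneg : ∀ z, 0 ≤ d0 z) (hd0sum : ∑ z, d0 z = 1)
    (t : ℕ) :
    ∑ z, |(((Pᵀ ^ t).mulVec d0) z - π z) - (((Pbᵀ ^ t).mulVec d0) z - πb z)| ≤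
      (5 * ((Fintype.card Z : ℝ) / σ) / (1 - μD)) * ((1 + μD) / 2) ^ t *
        Finset.univ.sup' Finset.univ_nonempty (fun z => ∑ z', |P z z' - Pb z z'|) := by
  obtain ⟨hμ0, hμ1⟩ := hμD
  have hπpos : ∀ z, 0 < π z := fun z => lt_of_lt_of_le hσ (hπσ z)
  have hπbpos : ∀ z, 0 < πb z := fun z => lt_of_lt_of_le hσ (hπbσ z)
  set Δ : ℝ := Finset.univ.sup' Finset.univ_nonempty
    (fun z => ∑ z', |P z z' - Pb z z'|) with hΔdef
  have hΔz : ∀ z, ∑ z', |P z z' - Pb z z'| ≤ Δ := by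
    intro z
    rw [hΔdef]
    exact Finset.le_sup' (fun z => ∑ z', |P z z' - Pb z z'|) (Finset.mem_univ z)
  have hΔzb : ∀ z, ∑ z', |Pb z z' - P z z'| ≤ Δ := by
    intro z
    simp_rw [abs_sub_comm (Pb z _)]
    exact hΔz z
  have hΔ0 : 0 ≤ Δ :=
    le_trans (Finset.sum_nonneg fun z' _ => abs_nonneg _) (hΔz (Classical.arbitrary Z))
  set s : ℝ := Real.sqrt σ with hsdef
  have hs0 : 0 < s := Real.sqrt_pos.2 hσ
  have hss : s * s = σ := Real.mul_self_sqrt hσ.le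
  have hσ1 : σ ≤ 1 := by
    obtain ⟨z₀⟩ := (inferInstance : Nonempty Z)
    refine le_trans (hπσ z₀) ?_
    rw [← hπ1]
    exact Finset.single_le_sum (fun z _ => (hπpos z).le) (Finset.mem_univ z₀)
  have hs1 : s ≤ 1 := by
    rw [hsdef, show (1:ℝ) = Real.sqrt 1 from Real.sqrt_one.symm]
    exact Real.sqrt_le_sqrt hσ1
  set K : ℝ := (Fintype.card Z : ℝ) with hKdef
  have hK1 : 1 ≤ K := by
    rw [hKdef]
    exact_mod_cast Fintype.card_pos
  -- transposed stationarity
  have hPstat : Pᵀ.mulVec π = π := by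
    funext z'
    simp only [Matrix.mulVec, dotProduct, Matrix.transpose_apply]
    rw [← hstat z']
    exact Finset.sum_congr rfl fun z _ => mul_comm _ _
  have hPbstat : Pbᵀ.mulVec πb = πb := by
    funext z'
    simp only [Matrix.mulVec, dotProduct, Matrix.transpose_apply]
    rw [← hstatb z']
    exact Finset.sum_congr rfl fun z _ => mul_comm _ _
  -- deviations
  set E : ℕ → Z → ℝ := fun n => (Pᵀ ^ n).mulVec d0 - π with hEdef
  set Eb : ℕ → Z → ℝ := fun n => (Pbᵀ ^ n).mulVec d0 - πb with hEbdef
  set u : ℕ → Z → ℝ := fun n => E n - Eb n with hudef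
  have hErec : ∀ n, E (n + 1) = Pᵀ.mulVec (E n) := by
    intro n
    rw [hEdef]
    simp only [Matrix.mulVec_sub, hPstat]
    rw [pow_succ', ← Matrix.mulVec_mulVec]
  have hEbrec : ∀ n, Eb (n + 1) = Pbᵀ.mulVec (Eb n) := by
    intro n
    rw [hEbdef]
    simp only [Matrix.mulVec_sub, hPbstat]
    rw [pow_succ', ← Matrix.mulVec_mulVec]
  have hdsum : ∀ n, ∑ z, ((Pᵀ ^ n).mulVec d0) z = 1 := by
    intro n
    induction n with
    | zero => simpa [Matrix.one_mulVec] using hd0sum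
    | succ m ih =>
      rw [pow_succ', ← Matrix.mulVec_mulVec, sum_mulVec_transpose P hProw, ih]
  have hdbsum : ∀ n, ∑ z, ((Pbᵀ ^ n).mulVec d0) z = 1 := by
    intro n
    induction n with
    | zero => simpa [Matrix.one_mulVec] using hd0sum
    | succ m ih =>
      rw [pow_succ', ← Matrix.mulVec_mulVec, sum_mulVec_transpose Pb hPbrow, ih]
  have hEsum : ∀ n, ∑ z, E n z = 0 := by
    intro n
    rw [hEdef]
    simp only [Pi.sub_apply, Finset.sum_sub_distrib, hdsum n, hπ1, sub_self]
  have hEbsum : ∀ n, ∑ z, Eb n z = 0 := by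
    intro n
    rw [hEbdef]
    simp only [Pi.sub_apply, Finset.sum_sub_distrib, hdbsum n, hπb1, sub_self]
  have husum : ∀ n, ∑ z, u n z = 0 := by
    intro n
    rw [hudef]
    simp only [Pi.sub_apply, Finset.sum_sub_distrib, hEsum n, hEbsum n, sub_self]
  -- decay of E
  have hEdecay : ∀ n, Ninv π (E n) ≤ μD ^ n * (2 / s) := by
    intro n
    induction n with
    | zero =>
      have h0 : E 0 = d0 - π := by
        rw [hEdef]; simp [Matrix.one_mulVec]
      have hl1 : ∑ z, |E 0 z| ≤ 2 := by
        rw [h0]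
        calc ∑ z, |(d0 - π) z| ≤ ∑ z, (d0 z + π z) := by
              refine Finset.sum_le_sum fun z _ => ?_
              simp only [Pi.sub_apply]
              refine (abs_sub _ _).trans ?_
              rw [abs_of_nonneg (hd0nonneg z), abs_of_nonneg (hπpos z).le]
          _ = 2 := by rw [Finset.sum_add_distrib, hd0sum, hπ1]; norm_num
      calc Ninv π (E 0) ≤ (∑ z, |E 0 z|) / s := Ninv_le_l1 hσ hπσ _
        _ ≤ 2 / s := by gcongr
        _ = μD ^ 0 * (2 / s) := by norm_num
    | succ m ih =>
      rw [hErec m]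
      calc Ninv π (Pᵀ.mulVec (E m)) ≤ μD * Ninv π (E m) :=
            contr_dual P π hσ hπσ hμ0 hcontr (E m) (hEsum m)
        _ ≤ μD * (μD ^ m * (2 / s)) := by
            exact mul_le_mul_of_nonneg_left ih hμ0.le
        _ = μD ^ (m + 1) * (2 / s) := by rw [pow_succ]; ring
  have hEl1 : ∀ n, ∑ z, |E n z| ≤ μD ^ n * (2 / s) :=
    fun n => (l1_le_Ninv hπpos hπ1 (E n)).trans (hEdecay n)
  -- base case: stationary distribution perturbation
  have hu0 : Ninv πb (u 0) ≤ Δ / ((1 - μD) * s) := by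
    have hu0eq : u 0 = πb - π := by
      rw [hudef, hEdef, hEbdef]
      funext z
      simp [Matrix.one_mulVec]
    set v : Z → ℝ := πb - π with hvdef
    have hvsum : ∑ z, v z = 0 := by
      rw [hvdef]
      simp [Finset.sum_sub_distrib, hπ1, hπb1]
    have hvid : v = fun z => (Pbᵀ.mulVec v) z + ((Pbᵀ.mulVec π) z - (Pᵀ.mulVec π) z) := by
      funext z
      have : (Pbᵀ.mulVec v) z = (Pbᵀ.mulVec πb) z - (Pbᵀ.mulVec π) z := by
        rw [hvdef, Matrix.mulVec_sub]; rfl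
      rw [this, hPbstat, hPstat, hvdef]
      simp
  -- triangle
    have h1 : Ninv πb v ≤ Ninv πb (Pbᵀ.mulVec v) +
        Ninv πb (fun z => (Pbᵀ.mulVec π) z - (Pᵀ.mulVec π) z) := by
      nth_rewrite 1 [hvid]
      exact Ninv_add_le hπbpos _ _
    have h2 : Ninv πb (Pbᵀ.mulVec v) ≤ μD * Ninv πb v :=
      contr_dual Pb πb hσ hπbσ hμ0 hcontrb v hvsum
    have h3 : Ninv πb (fun z => (Pbᵀ.mulVec π) z - (Pᵀ.mulVec π) z) ≤ Δ / s := by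
      calc Ninv πb (fun z => (Pbᵀ.mulVec π) z - (Pᵀ.mulVec π) z)
          ≤ (∑ z, |(Pbᵀ.mulVec π) z - (Pᵀ.mulVec π) z|) / s := Ninv_le_l1 hσ hπbσ _
        _ ≤ (Δ * ∑ z, |π z|) / s := by
            gcongr
            exact perturb_l1 Pb P hΔzb π
        _ = Δ / s := by
            have : ∑ z, |π z| = 1 := by
              rw [← hπ1]
              exact Finset.sum_congr rfl fun z _ => abs_of_nonneg (hπpos z).le
            rw [this, mul_one]
  -- solve
    have h4 : (1 - μD) * Ninv πb v ≤ Δ / s := by linarith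
    rw [hu0eq, le_div_iff₀ (mul_pos (by linarith : (0:ℝ) < 1 - μD) hs0)]
    have h5 : Δ / s * s = Δ := div_mul_cancel₀ _ hs0.ne'
    nlinarith [mul_le_mul_of_nonneg_right h4 hs0.le]
  -- recurrence for u
  have hurec : ∀ n, u (n + 1) =
      fun z => (Pbᵀ.mulVec (u n)) z + ((Pᵀ.mulVec (E n)) z - (Pbᵀ.mulVec (E n)) z) := by
    intro n
    funext z
    have h1 : u (n + 1) z = (Pᵀ.mulVec (E n)) z - (Pbᵀ.mulVec (Eb n)) z := by
      rw [hudef]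
      simp only [Pi.sub_apply, hErec n, hEbrec n]
    have h2 : (Pbᵀ.mulVec (u n)) z = (Pbᵀ.mulVec (E n)) z - (Pbᵀ.mulVec (Eb n)) z := by
      rw [hudef, Matrix.mulVec_sub]; rfl
    rw [h1, h2]
    ring
  -- main induction
  have hmulaux : ∀ n : ℕ, μD * ((n : ℝ) * μD ^ (n - 1)) = (n : ℝ) * μD ^ n := by
    intro n
    cases n with
    | zero => norm_num
    | succ m =>
      have : (m + 1 : ℕ) - 1 = m := rfl
      rw [this, pow_succ]
      push_cast
      ring
  have hubound : ∀ n, Ninv πb (u n) ≤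
      μD ^ n * (Δ / ((1 - μD) * s)) + (n : ℝ) * μD ^ (n - 1) * (2 * Δ / σ) := by
    intro n
    induction n with
    | zero => simpa using hu0
    | succ m ih =>
      have h1 : Ninv πb (Pbᵀ.mulVec (u m)) ≤ μD * Ninv πb (u m) :=
        contr_dual Pb πb hσ hπbσ hμ0 hcontrb (u m) (husum m)
      have h2 : Ninv πb (fun z => (Pᵀ.mulVec (E m)) z - (Pbᵀ.mulVec (E m)) z)
          ≤ (2 * Δ / σ) * μD ^ m := by
        calc Ninv πb (fun z => (Pᵀ.mulVec (E m)) z - (Pbᵀ.mulVec (E m)) z)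
            ≤ (∑ z, |(Pᵀ.mulVec (E m)) z - (Pbᵀ.mulVec (E m)) z|) / s :=
              Ninv_le_l1 hσ hπbσ _
          _ ≤ (Δ * ∑ z, |E m z|) / s := by
              gcongr
              exact perturb_l1 P Pb hΔz (E m)
          _ ≤ (Δ * (μD ^ m * (2 / s))) / s := by gcongr; exact hEl1 m
          _ = (2 * Δ / σ) * μD ^ m := by
              rw [← hss]
              field_simp
      calc Ninv πb (u (m + 1)) ≤ Ninv πb (Pbᵀ.mulVec (u m)) +
            Ninv πb (fun z => (Pᵀ.mulVec (E m)) z - (Pbᵀ.mulVec (E m)) z) := by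
            rw [hurec m]
            exact Ninv_add_le hπbpos _ _
        _ ≤ μD * Ninv πb (u m) + (2 * Δ / σ) * μD ^ m := add_le_add h1 h2
        _ ≤ μD * (μD ^ m * (Δ / ((1 - μD) * s)) +
              (m : ℝ) * μD ^ (m - 1) * (2 * Δ / σ)) + (2 * Δ / σ) * μD ^ m :=
            add_le_add (mul_le_mul_of_nonneg_left ih hμ0.le) le_rfl
        _ = μD ^ (m + 1) * (Δ / ((1 - μD) * s)) +
              (μD * ((m : ℝ) * μD ^ (m - 1)) + μD ^ m) * (2 * Δ / σ) := by
            rw [pow_succ]; ring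
        _ = μD ^ (m + 1) * (Δ / ((1 - μD) * s)) +
              ((m + 1 : ℕ) : ℝ) * μD ^ ((m + 1) - 1) * (2 * Δ / σ) := by
            rw [hmulaux m, Nat.add_sub_cancel]
            push_cast
            ring
  clear_value Δ s K E Eb u
  -- final assembly
  have hfin : ∑ z, |u t z| ≤ (5 * (K / σ) / (1 - μD)) * ((1 + μD) / 2) ^ t * Δ := by
    have h1μ : (0:ℝ) < 1 - μD := by linarith
    have h1μ' : (1 - μD) ≠ 0 := h1μ.ne'
    set ρ : ℝ := (1 + μD) / 2 with hρdef
    have hρ0 : (0 : ℝ) < ρ := by rw [hρdef]; linarith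
    have hμρ : μD ≤ ρ := by rw [hρdef]; linarith
    have hpow1 : μD ^ t ≤ ρ ^ t := pow_le_pow_left₀ hμ0.le hμρ t
    have hpow2 : (t : ℝ) * μD ^ (t - 1) ≤ ρ ^ t * (2 / (1 - μD)) := by
      have haux := aux_pow hμ0 hμ1 t
      calc (t : ℝ) * μD ^ (t - 1)
          = ((t : ℝ) * μD ^ (t - 1) * ((1 - μD) / 2)) * (2 / (1 - μD)) := by
            field_simp
        _ ≤ ρ ^ t * (2 / (1 - μD)) := by
            refine mul_le_mul_of_nonneg_right haux ?_
            exact div_nonneg (by norm_num) h1μ.le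
    have key1 : Δ / ((1 - μD) * s) ≤ K * Δ / (σ * (1 - μD)) := by
      rw [div_le_div_iff₀ (mul_pos h1μ hs0) (mul_pos hσ h1μ)]
      have hσKs : σ ≤ K * s := by
        nlinarith [mul_le_mul_of_nonneg_right hs1 hs0.le,
          mul_le_mul_of_nonneg_right hK1 hs0.le]
      nlinarith [mul_le_mul_of_nonneg_left hσKs (mul_nonneg hΔ0 h1μ.le)]
    have key2 : (2 / (1 - μD)) * (2 * Δ / σ) ≤ 4 * K * Δ / (σ * (1 - μD)) := by
      rw [div_mul_div_comm, div_le_div_iff₀ (mul_pos h1μ hσ) (mul_pos hσ h1μ)]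
      nlinarith [mul_nonneg (mul_nonneg hΔ0 hσ.le) (by linarith : (0:ℝ) ≤ 1 - μD),
        mul_nonneg (mul_nonneg (mul_nonneg hΔ0 hσ.le)
          (by linarith : (0:ℝ) ≤ 1 - μD)) (by linarith : (0:ℝ) ≤ K - 1)]
    calc ∑ z, |u t z| ≤ Ninv πb (u t) := l1_le_Ninv hπbpos hπb1 (u t)
      _ ≤ μD ^ t * (Δ / ((1 - μD) * s)) + (t : ℝ) * μD ^ (t - 1) * (2 * Δ / σ) :=
          hubound t
      _ ≤ ρ ^ t * (K * Δ / (σ * (1 - μD))) +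
            (ρ ^ t * (2 / (1 - μD))) * (2 * Δ / σ) := by
          refine add_le_add ?_ ?_
          · exact mul_le_mul hpow1 key1
              (div_nonneg hΔ0 (mul_pos h1μ hs0).le) (pow_nonneg hρ0.le t)
          · exact mul_le_mul_of_nonneg_right hpow2
              (div_nonneg (by linarith) hσ.le)
      _ ≤ ρ ^ t * (K * Δ / (σ * (1 - μD))) + ρ ^ t * (4 * K * Δ / (σ * (1 - μD))) := by
          rw [mul_assoc]
          exact add_le_add le_rfl (mul_le_mul_of_nonneg_left key2 (pow_nonneg hρ0.le t))
      _ = (5 * (K / σ) / (1 - μD)) * ρ ^ t * Δ := by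
          have hring : ∀ x a b c d : ℝ, c ≠ 0 → d ≠ 0 →
              x * (a * b / (c * d)) + x * (4 * a * b / (c * d))
                = 5 * (a / c) / d * x * b := by
            intros x a b c d hc hd
            field_simp
            ring
          exact hring (ρ ^ t) K Δ σ (1 - μD) hσ.ne' h1μ'
  calc ∑ z, |(((Pᵀ ^ t).mulVec d0) z - π z) - (((Pbᵀ ^ t).mulVec d0) z - πb z)|
      = ∑ z, |u t z| := by
        refine Finset.sum_congr rfl fun z _ => ?_
        rw [hudef, hEdef, hEbdef]
        simp [Pi.sub_apply]
    _ ≤ (5 * (K / σ) / (1 - μD)) * ((1 + μD) / 2) ^ t * Δ := hfin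
end

section
/- Let r ∈ ℝ^Z satisfy ‖r‖_∞ ≤ r̄ and let J = π^⊤ r. Then for every z ∈ Z the series Q(z) = Σ_{t=0}^∞ ( (P^t r)(z) − J ) converges absolutely, and ‖Q‖_∞ ≤ 2 c_∞ r̄ / (1 − μ_D), where c_∞ = √(|Z|/σ). -/
open Finset Matrix

set_option maxHeartbeats 1000000 in
/-- **Lemma 8 (boundedness of the average-reward Q-function).** For `‖r‖_∞ ≤ r̄` and
`J = πᵀ r`, the series `Q(z) = ∑_t ((Pᵗ r)(z) − J)` converges absolutely for every `z`,
and `‖Q‖_∞ ≤ 2 c_∞ r̄ / (1 − μ_D)` with `c_∞ = √(|Z|/σ)`. -/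
theorem average_reward_q_function_bound
    {Z : Type*} [Fintype Z] [Nonempty Z] [DecidableEq Z]
    (P : Matrix Z Z ℝ) (π : Z → ℝ) (σ μD : ℝ)
    (hPnonneg : ∀ z z', 0 ≤ P z z')
    (hProw : ∀ z, ∑ z', P z z' = 1)
    (hσ : 0 < σ) (hπσ : ∀ z, σ ≤ π z) (hπ1 : ∑ z, π z = 1)
    (hstat : ∀ z', ∑ z, π z * P z z' = π z')
    (hμD : μD ∈ Set.Ioo (0 : ℝ) 1)
    (hcontr : ∀ x : Z → ℝ,
      Dnorm π ((P - Matrix.of fun _ z' => π z').mulVec x) ≤ μD * Dnorm π x)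
    (r : Z → ℝ) (rbar : ℝ) (hr : ∀ z, |r z| ≤ rbar) :
    (∀ z : Z, Summable fun t : ℕ => |((P ^ t).mulVec r) z - ∑ z', π z' * r z'|) ∧
    (∀ z : Z, |∑' t : ℕ, (((P ^ t).mulVec r) z - ∑ z', π z' * r z')| ≤
      2 * Real.sqrt ((Fintype.card Z : ℝ) / σ) * rbar / (1 - μD)) := by
  obtain ⟨hμ0, hμ1⟩ := hμD
  have hμsub : 0 < 1 - μD := by linarith
  set J : ℝ := ∑ z', π z' * r z' with hJ
  have hrbar : 0 ≤ rbar := le_trans (abs_nonneg _) (hr (Classical.arbitrary Z))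
  have hπpos : ∀ z, 0 < π z := fun z => lt_of_lt_of_le hσ (hπσ z)
  have hJle : |J| ≤ rbar := by
    calc |J| ≤ ∑ z', |π z' * r z'| := Finset.abs_sum_le_sum_abs _ _
    _ ≤ ∑ z', π z' * rbar := by
        refine Finset.sum_le_sum fun z _ => ?_
        rw [abs_mul, abs_of_pos (hπpos z)]
        exact mul_le_mul_of_nonneg_left (hr z) (hπpos z).le
    _ = rbar := by rw [← Finset.sum_mul, hπ1, one_mul]
  set e : ℕ → Z → ℝ := fun t z => (P ^ t).mulVec r z - J with he
  -- invariance of π under P acting on vectors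
  have hPinv : ∀ x : Z → ℝ, ∑ z, π z * P.mulVec x z = ∑ z, π z * x z := by
    intro x
    simp only [Matrix.mulVec, dotProduct, Finset.mul_sum]
    rw [Finset.sum_comm]
    refine Finset.sum_congr rfl fun z' _ => ?_
    have : ∑ z, π z * (P z z' * x z') = (∑ z, π z * P z z') * x z' := by
      rw [Finset.sum_mul]; exact Finset.sum_congr rfl fun z _ => by ring
    rw [this, hstat z']
  -- π orthogonality of e t
  have hπe : ∀ t, ∑ z', π z' * e t z' = 0 := by
    intro t
    have hmain : ∀ t, ∑ z, π z * (P ^ t).mulVec r z = J := by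
      intro t
      induction t with
      | zero => simp [Matrix.one_mulVec, hJ]
      | succ n ih =>
        rw [pow_succ', ← Matrix.mulVec_mulVec, hPinv, ih]
    simp only [he, mul_sub, Finset.sum_sub_distrib, hmain, ← Finset.sum_mul, hπ1]
    ring
  -- recursion
  have hrec : ∀ t, e (t + 1) = (P - Matrix.of fun _ z' => π z').mulVec (e t) := by
    intro t
    funext z
    have h1 : (P - Matrix.of fun _ z' => π z').mulVec (e t) z
        = P.mulVec (e t) z - ∑ z', π z' * e t z' := by
      rw [Matrix.sub_mulVec]
      simp [Matrix.mulVec, dotProduct, Matrix.of_apply, mul_comm]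
    rw [h1, hπe t, sub_zero]
    have hP1 : P.mulVec (e t) z = P.mulVec ((P ^ t).mulVec r) z - J := by
      simp only [he, Matrix.mulVec, dotProduct, mul_sub, Finset.sum_sub_distrib,
        ← Finset.sum_mul, hProw z, one_mul]
    rw [hP1, Matrix.mulVec_mulVec, ← pow_succ']
  -- Dnorm bound on e 0
  have hDe0 : Dnorm π (e 0) ≤ 2 * rbar := by
    have hb : ∀ z, |e 0 z| ≤ 2 * rbar := by
      intro z
      have : e 0 z = r z - J := by simp [he, Matrix.one_mulVec]
      rw [this]
      calc |r z - J| ≤ |r z| + |J| := abs_sub _ _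
      _ ≤ rbar + rbar := add_le_add (hr z) hJle
      _ = 2 * rbar := by ring
    have hsum : ∑ z, π z * e 0 z ^ 2 ≤ (2 * rbar) ^ 2 := by
      calc ∑ z, π z * e 0 z ^ 2 ≤ ∑ z, π z * (2 * rbar) ^ 2 := by
            refine Finset.sum_le_sum fun z _ => ?_
            exact mul_le_mul_of_nonneg_left (sq_le_sq' (by linarith [hb z, abs_le.mp (hb z)]) (abs_le.mp (hb z)).2) (hπpos z).le
      _ = (2 * rbar) ^ 2 := by rw [← Finset.sum_mul, hπ1, one_mul]
    calc Dnorm π (e 0) ≤ Real.sqrt ((2 * rbar) ^ 2) := Real.sqrt_le_sqrt hsum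
    _ = 2 * rbar := by rw [Real.sqrt_sq (by linarith)]
  -- contraction induction
  have hDet : ∀ t, Dnorm π (e t) ≤ μD ^ t * (2 * rbar) := by
    intro t
    induction t with
    | zero => simpa using hDe0
    | succ n ih =>
      rw [hrec n]
      refine le_trans (hcontr (e n)) ?_
      calc μD * Dnorm π (e n) ≤ μD * (μD ^ n * (2 * rbar)) :=
            mul_le_mul_of_nonneg_left ih hμ0.le
      _ = μD ^ (n + 1) * (2 * rbar) := by ring
  -- pointwise bound
  have hpt : ∀ t z, |e t z| ≤ (2 * rbar / Real.sqrt σ) * μD ^ t := by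
    intro t z
    have hσs : 0 < Real.sqrt σ := Real.sqrt_pos.mpr hσ
    have key : Real.sqrt σ * |e t z| ≤ Dnorm π (e t) := by
      have h1 : Real.sqrt σ * |e t z| = Real.sqrt (σ * e t z ^ 2) := by
        rw [Real.sqrt_mul hσ.le, Real.sqrt_sq_eq_abs]
      rw [h1]
      apply Real.sqrt_le_sqrt
      calc σ * e t z ^ 2 ≤ π z * e t z ^ 2 :=
            mul_le_mul_of_nonneg_right (hπσ z) (sq_nonneg _)
      _ ≤ ∑ w, π w * e t w ^ 2 :=
            Finset.single_le_sum (fun w _ => mul_nonneg (hπpos w).le (sq_nonneg _))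
              (Finset.mem_univ z)
    have := le_trans key (hDet t)
    rw [div_mul_eq_mul_div, le_div_iff₀ hσs]
    linarith [this]
  have hsummg : Summable fun t : ℕ => (2 * rbar / Real.sqrt σ) * μD ^ t :=
    (summable_geometric_of_lt_one hμ0.le hμ1).mul_left _
  have hsumm : ∀ z, Summable fun t : ℕ => |e t z| := by
    intro z
    exact Summable.of_nonneg_of_le (fun t => abs_nonneg _) (fun t => hpt t z) hsummg
  constructor
  · exact hsumm
  · intro z
    have h1 : |∑' t : ℕ, e t z| ≤ ∑' t : ℕ, |e t z| := by
      calc |∑' t : ℕ, e t z| = ‖∑' t : ℕ, e t z‖ := (Real.norm_eq_abs _).symm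
      _ ≤ ∑' t : ℕ, ‖e t z‖ := norm_tsum_le_tsum_norm
            (by simpa [Real.norm_eq_abs] using hsumm z)
      _ = ∑' t : ℕ, |e t z| := by simp [Real.norm_eq_abs]
    have h2 : ∑' t : ℕ, |e t z| ≤ ∑' t : ℕ, (2 * rbar / Real.sqrt σ) * μD ^ t :=
      Summable.tsum_le_tsum (fun t => hpt t z) (hsumm z) hsummg
    have h3 : ∑' t : ℕ, (2 * rbar / Real.sqrt σ) * μD ^ t
        = (2 * rbar / Real.sqrt σ) * (1 - μD)⁻¹ := by
      rw [tsum_mul_left, tsum_geometric_of_lt_one hμ0.le hμ1]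
    have h4 : 2 * rbar / Real.sqrt σ ≤ 2 * Real.sqrt ((Fintype.card Z : ℝ) / σ) * rbar := by
      have hcard : (1 : ℝ) ≤ (Fintype.card Z : ℝ) := by
        exact_mod_cast Fintype.card_pos
      have hσs : 0 < Real.sqrt σ := Real.sqrt_pos.mpr hσ
      have hs1 : 1 / Real.sqrt σ ≤ Real.sqrt ((Fintype.card Z : ℝ) / σ) := by
        have h5 : (1 : ℝ) / Real.sqrt σ = Real.sqrt (1 / σ) := by
          rw [one_div, one_div, Real.sqrt_inv]
        rw [h5]
        apply Real.sqrt_le_sqrt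
        gcongr
      calc 2 * rbar / Real.sqrt σ = 2 * (1 / Real.sqrt σ) * rbar := by ring
      _ ≤ 2 * Real.sqrt ((Fintype.card Z : ℝ) / σ) * rbar := by
          have := mul_le_mul_of_nonneg_right (mul_le_mul_of_nonneg_left hs1 (by norm_num : (0:ℝ) ≤ 2)) hrbar
          linarith
    calc |∑' t : ℕ, e t z| ≤ (2 * rbar / Real.sqrt σ) * (1 - μD)⁻¹ := by
          rw [← h3]; exact le_trans h1 h2
    _ ≤ (2 * Real.sqrt ((Fintype.card Z : ℝ) / σ) * rbar) * (1 - μD)⁻¹ :=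
          mul_le_mul_of_nonneg_right h4 (by positivity)
    _ = 2 * Real.sqrt ((Fintype.card Z : ℝ) / σ) * rbar / (1 - μD) := by
          ring
end

section
/- Let σ > 0 and let v ∈ ℝ^m be a vector with v_i ≥ σ for every i and Σ_{i=1}^m v_i ≤ 1 − σ. Then the matrix diag(v) − v v^⊤ is positive definite with smallest eigenvalue at least σ²; that is, x^⊤ (diag(v) − v v^⊤) x ≥ σ² ‖x‖² for every x ∈ ℝ^m. -/
open Finset

/-- **Positive definiteness of `diag(v) − v vᵀ`.** If `v_i ≥ σ > 0` for all `i` and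
`∑ v_i ≤ 1 − σ`, then `xᵀ(diag(v) − v vᵀ)x ≥ σ² ‖x‖²` for every `x`. -/
theorem diag_sub_outer_pos_def
    {m : ℕ} (σ : ℝ) (hσ : 0 < σ) (v : Fin m → ℝ)
    (hv : ∀ i, σ ≤ v i) (hsum : ∑ i, v i ≤ 1 - σ) (x : Fin m → ℝ) :
    σ ^ 2 * ∑ i, x i ^ 2 ≤ (∑ i, v i * x i ^ 2) - (∑ i, v i * x i) ^ 2 := by
  have hv0 : ∀ i, 0 ≤ v i := fun i => le_trans hσ.le (hv i)
  have hQ : 0 ≤ ∑ i, v i * x i ^ 2 :=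
    Finset.sum_nonneg fun i _ => mul_nonneg (hv0 i) (sq_nonneg _)
  -- Cauchy–Schwarz
  have hCS : (∑ i, v i * x i) ^ 2 ≤ (∑ i, v i) * (∑ i, v i * x i ^ 2) := by
    have h := Finset.sum_mul_sq_le_sq_mul_sq Finset.univ
      (fun i => Real.sqrt (v i)) (fun i => Real.sqrt (v i) * x i)
    have e1 : ∀ i : Fin m, Real.sqrt (v i) * (Real.sqrt (v i) * x i) = v i * x i := by
      intro i
      rw [← mul_assoc, Real.mul_self_sqrt (hv0 i)]
    have e2 : ∀ i : Fin m, Real.sqrt (v i) ^ 2 = v i := fun i => Real.sq_sqrt (hv0 i)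
    have e3 : ∀ i : Fin m, (Real.sqrt (v i) * x i) ^ 2 = v i * x i ^ 2 := by
      intro i; rw [mul_pow, Real.sq_sqrt (hv0 i)]
    calc (∑ i, v i * x i) ^ 2
        = (∑ i, Real.sqrt (v i) * (Real.sqrt (v i) * x i)) ^ 2 := by
          simp only [e1]
      _ ≤ (∑ i, Real.sqrt (v i) ^ 2) * (∑ i, (Real.sqrt (v i) * x i) ^ 2) := h
      _ = (∑ i, v i) * (∑ i, v i * x i ^ 2) := by simp only [e2, e3]
  have h1 : (∑ i, v i * x i) ^ 2 ≤ (1 - σ) * (∑ i, v i * x i ^ 2) :=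
    hCS.trans (mul_le_mul_of_nonneg_right hsum hQ)
  have h2 : σ * ∑ i, x i ^ 2 ≤ ∑ i, v i * x i ^ 2 := by
    rw [Finset.mul_sum]
    exact Finset.sum_le_sum fun i _ => mul_le_mul_of_nonneg_right (hv i) (sq_nonneg _)
  have h3 : σ ^ 2 * ∑ i, x i ^ 2 ≤ σ * ∑ i, v i * x i ^ 2 := by
    rw [sq, mul_assoc]
    exact mul_le_mul_of_nonneg_left h2 hσ.le
  nlinarith [h1, h3]
end

section
/- For every Q̂ ∈ ℝ^{W∖{w₀}}, Q̂^⊤ ( Φ^⊤ D Φ − Φ^⊤ D P Φ ) Q̂ ≥ (1 − μ_D) σ² ‖Q̂‖², where ‖·‖ is the Euclidean norm. -/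
open Finset Matrix

/-- The feature matrix `Φ ∈ ℝ^{Z×(W∖{w₀})}`: `Φ(z,w) = 1` if `m z = w` and `0`
otherwise, with the column of the dummy value `w₀` removed. -/
noncomputable def PhiHat {Z W : Type*} [Fintype Z] [Fintype W] [DecidableEq W]
    (m : Z → W) (w₀ : W) : Matrix Z {w : W // w ≠ w₀} ℝ :=
  Matrix.of fun z w => if m z = w.1 then 1 else 0

set_option maxHeartbeats 1600000 in
/-- **Equation (18): uniform positive definiteness of `ΦᵀDΦ − ΦᵀDPΦ`.** Under the
ergodicity/contraction assumptions, for every `Q̂ ∈ ℝ^{W∖{w₀}}`,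
`Q̂ᵀ(ΦᵀDΦ − ΦᵀDPΦ)Q̂ ≥ (1−μ_D)σ²‖Q̂‖²`. -/
theorem critic_quadratic_form_pos_def
    {Z W : Type*} [Fintype Z] [Nonempty Z] [DecidableEq Z]
    [Fintype W] [DecidableEq W]
    (P : Matrix Z Z ℝ) (π : Z → ℝ) (σ μD : ℝ)
    (hPnonneg : ∀ z z', 0 ≤ P z z')
    (hProw : ∀ z, ∑ z', P z z' = 1)
    (hσ : 0 < σ) (hπσ : ∀ z, σ ≤ π z) (hπ1 : ∑ z, π z = 1)
    (hstat : ∀ z', ∑ z, π z * P z z' = π z')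
    (hμD : μD ∈ Set.Ioo (0 : ℝ) 1)
    (hcontr : ∀ x : Z → ℝ,
      Dnorm π ((P - Matrix.of fun _ z' => π z').mulVec x) ≤ μD * Dnorm π x)
    (w₀ : W) (m : Z → W) (hm : Function.Surjective m)
    (Qhat : {w : W // w ≠ w₀} → ℝ) :
    (1 - μD) * σ ^ 2 * ∑ w, Qhat w ^ 2 ≤
      Qhat ⬝ᵥ (((PhiHat m w₀)ᵀ * Matrix.diagonal π * PhiHat m w₀ -
        (PhiHat m w₀)ᵀ * Matrix.diagonal π * P * PhiHat m w₀).mulVec Qhat) := by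
  classical
  obtain ⟨hμ0, hμ1⟩ := hμD
  set Φ := PhiHat m w₀ with hΦ
  set x : Z → ℝ := Φ.mulVec Qhat with hx
  have hπ0 : ∀ z, 0 ≤ π z := fun z => le_trans hσ.le (hπσ z)
  -- value of x
  have hxdef : ∀ z, x z = if h : m z = w₀ then 0 else Qhat ⟨m z, h⟩ := by
    intro z
    simp only [hx, hΦ, PhiHat, Matrix.mulVec, dotProduct, Matrix.of_apply]
    split_ifs with h
    · apply Finset.sum_eq_zero
      intro w _
      have : m z ≠ w.1 := fun hc => w.2 (by rw [← hc, h])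
      simp [this]
    · rw [Finset.sum_eq_single (⟨m z, h⟩ : {w : W // w ≠ w₀})]
      · simp
      · intro w _ hw
        have : m z ≠ w.1 := fun hc => hw (by ext; exact hc.symm)
        simp [this]
      · simp
  -- rewrite the quadratic form
  have hform : ∀ A : Matrix Z Z ℝ,
      Qhat ⬝ᵥ ((Φᵀ * A * Φ).mulVec Qhat) = x ⬝ᵥ A.mulVec x := by
    intro A
    rw [← Matrix.mulVec_mulVec, ← Matrix.mulVec_mulVec, Matrix.dotProduct_mulVec,
      Matrix.vecMul_transpose]
  have hrhs : Qhat ⬝ᵥ ((Φᵀ * Matrix.diagonal π * Φ -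
        Φᵀ * Matrix.diagonal π * P * Φ).mulVec Qhat)
      = (∑ z, π z * x z * x z) - ∑ z, π z * x z * (P.mulVec x) z := by
    rw [Matrix.sub_mulVec, dotProduct_sub, hform, Matrix.mul_assoc (Φᵀ), hform]
    congr 1
    · simp only [dotProduct, Matrix.mulVec_diagonal]
      exact Finset.sum_congr rfl fun z _ => by ring
    · simp only [dotProduct, ← Matrix.mulVec_mulVec, Matrix.mulVec_diagonal]
      exact Finset.sum_congr rfl fun z _ => by ring
  -- centered vector
  set c : ℝ := ∑ z, π z * x z with hc
  set y : Z → ℝ := fun z => x z - c with hy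
  have hπy : ∑ z, π z * y z = 0 := by
    simp only [hy, mul_sub, Finset.sum_sub_distrib, ← Finset.sum_mul, hπ1, hc]
    ring
  have hπPy : ∑ z, π z * (P.mulVec y) z = 0 := by
    have : ∑ z, π z * (P.mulVec y) z = ∑ z', (∑ z, π z * P z z') * y z' := by
      simp only [Matrix.mulVec, dotProduct, Finset.mul_sum, Finset.sum_mul]
      rw [Finset.sum_comm]
      exact Finset.sum_congr rfl fun z' _ => Finset.sum_congr rfl fun z _ => by ring
    rw [this]
    simp only [hstat]
    exact hπy
  have hPx : ∀ z, (P.mulVec x) z = (P.mulVec y) z + c := by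
    intro z
    simp only [Matrix.mulVec, dotProduct, hy, mul_sub, Finset.sum_sub_distrib,
      ← Finset.sum_mul, hProw]
    ring
  -- the quadratic form equals the centered form
  have hcenter : (∑ z, π z * x z * x z) - (∑ z, π z * x z * (P.mulVec x) z)
      = (∑ z, π z * y z * y z) - ∑ z, π z * y z * (P.mulVec y) z := by
    have hxz : ∀ z, x z = y z + c := fun z => by simp [hy]
    have expand : ∀ z, π z * x z * x z - π z * x z * (P.mulVec x) z
        = (π z * y z * y z - π z * y z * (P.mulVec y) z)
          + c * (π z * y z) - c * (π z * (P.mulVec y) z) := by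
      intro z
      rw [hxz z, hPx z]
      ring
    calc (∑ z, π z * x z * x z) - (∑ z, π z * x z * (P.mulVec x) z)
        = ∑ z, (π z * x z * x z - π z * x z * (P.mulVec x) z) := by
          rw [Finset.sum_sub_distrib]
      _ = ∑ z, ((π z * y z * y z - π z * y z * (P.mulVec y) z)
            + c * (π z * y z) - c * (π z * (P.mulVec y) z)) :=
          Finset.sum_congr rfl fun z _ => expand z
      _ = ((∑ z, (π z * y z * y z - π z * y z * (P.mulVec y) z))
            + c * ∑ z, π z * y z) - c * ∑ z, π z * (P.mulVec y) z := by
          rw [Finset.sum_sub_distrib, Finset.sum_add_distrib, Finset.mul_sum,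
            Finset.mul_sum]
      _ = (∑ z, π z * y z * y z) - ∑ z, π z * y z * (P.mulVec y) z := by
          rw [hπy, hπPy, Finset.sum_sub_distrib]; ring
  -- contraction applies to y
  have hPy_eq : (P - Matrix.of fun _ z' => π z').mulVec y = P.mulVec y := by
    rw [Matrix.sub_mulVec]
    have : (Matrix.of fun (_ : Z) (z' : Z) => π z').mulVec y = fun (_ : Z) => (0:ℝ) := by
      funext z
      simpa [Matrix.mulVec, dotProduct] using hπy
    rw [this]
    funext z
    simp
  have hcontr' : Dnorm π (P.mulVec y) ≤ μD * Dnorm π y := by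
    have := hcontr y
    rwa [hPy_eq] at this
  -- Cauchy-Schwarz in the weighted inner product
  have hDy : Dnorm π y ^ 2 = ∑ z, π z * y z ^ 2 := by
    rw [Dnorm, Real.sq_sqrt (Finset.sum_nonneg fun z _ => mul_nonneg (hπ0 z) (sq_nonneg _))]
  have hcs : ∑ z, π z * y z * (P.mulVec y) z ≤ μD * ∑ z, π z * y z ^ 2 := by
    have h1 : ∑ z, π z * y z * (P.mulVec y) z
        = ∑ z, (Real.sqrt (π z) * y z) * (Real.sqrt (π z) * (P.mulVec y) z) := by
      refine Finset.sum_congr rfl fun z _ => ?_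
      rw [show (Real.sqrt (π z) * y z) * (Real.sqrt (π z) * (P.mulVec y) z)
          = (Real.sqrt (π z) * Real.sqrt (π z)) * (y z * (P.mulVec y) z) by ring,
        Real.mul_self_sqrt (hπ0 z)]
      ring
    have h2 : ∑ z, (Real.sqrt (π z) * y z) ^ 2 = ∑ z, π z * y z ^ 2 := by
      refine Finset.sum_congr rfl fun z _ => ?_
      rw [mul_pow, Real.sq_sqrt (hπ0 z)]
    have h3 : ∑ z, (Real.sqrt (π z) * (P.mulVec y) z) ^ 2
        = ∑ z, π z * (P.mulVec y) z ^ 2 := by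
      refine Finset.sum_congr rfl fun z _ => ?_
      rw [mul_pow, Real.sq_sqrt (hπ0 z)]
    calc ∑ z, π z * y z * (P.mulVec y) z
        = ∑ z, (Real.sqrt (π z) * y z) * (Real.sqrt (π z) * (P.mulVec y) z) := h1
      _ ≤ Real.sqrt (∑ z, (Real.sqrt (π z) * y z) ^ 2) *
            Real.sqrt (∑ z, (Real.sqrt (π z) * (P.mulVec y) z) ^ 2) :=
          Real.sum_mul_le_sqrt_mul_sqrt _ _ _
      _ = Dnorm π y * Dnorm π (P.mulVec y) := by rw [h2, h3]; rfl
      _ ≤ Dnorm π y * (μD * Dnorm π y) := by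
          have hDn0 : 0 ≤ Dnorm π y := Real.sqrt_nonneg _
          exact mul_le_mul_of_nonneg_left hcontr' hDn0
      _ = μD * (Dnorm π y ^ 2) := by ring
      _ = μD * ∑ z, π z * y z ^ 2 := by rw [hDy]
  -- so the quadratic form is at least (1-μD) * ∑ π y²
  have hyy : ∑ z, π z * y z * y z = ∑ z, π z * y z ^ 2 :=
    Finset.sum_congr rfl fun z _ => by ring
  have hlower : (1 - μD) * ∑ z, π z * y z ^ 2 ≤
      Qhat ⬝ᵥ ((Φᵀ * Matrix.diagonal π * Φ -
        Φᵀ * Matrix.diagonal π * P * Φ).mulVec Qhat) := by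
    rw [hrhs, hcenter, hyy]
    nlinarith [hcs]
  -- lower bound on ∑ π y²
  set g : W → Z := Function.surjInv hm with hg
  have hmg : ∀ w, m (g w) = w := fun w => Function.surjInv_eq hm w
  have hginj : Function.Injective g := Function.injective_surjInv hm
  have hsum1 : ∑ w : W, y (g w) ^ 2 ≤ ∑ z, y z ^ 2 := by
    rw [← Finset.sum_image (f := fun z => y z ^ 2)
      (g := g) (fun a _ b _ h => hginj h)]
    exact Finset.sum_le_sum_of_subset_of_nonneg (Finset.subset_univ _)
      (fun z _ _ => by positivity)
  have hsplit : ∑ w : W, y (g w) ^ 2 = c ^ 2 + ∑ w, (Qhat w - c) ^ 2 := by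
    have h0 : y (g w₀) = -c := by
      have := hxdef (g w₀)
      rw [hmg w₀] at this
      simp only [hy, this]
      simp
    have h1 : ∀ w : {w : W // w ≠ w₀}, y (g w.1) = Qhat w - c := by
      intro w
      have := hxdef (g w.1)
      rw [hmg w.1] at this
      simp only [hy, this]
      rw [dif_neg w.2]
    rw [← Finset.sum_erase_add Finset.univ _ (Finset.mem_univ w₀), h0,
      Finset.sum_subtype (Finset.univ.erase w₀)
        (p := fun w => w ≠ w₀) (fun w => by simp) (fun w => y (g w) ^ 2)]
    simp only [h1]
    ring
  have hπy2 : σ * ∑ z, y z ^ 2 ≤ ∑ z, π z * y z ^ 2 := by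
    rw [Finset.mul_sum]
    exact Finset.sum_le_sum fun z _ =>
      mul_le_mul_of_nonneg_right (hπσ z) (by positivity)
  -- σ * (card W) ≤ 1
  have hcardW : (Fintype.card W : ℝ) * σ ≤ 1 := by
    have hle : Fintype.card W ≤ Fintype.card Z := Fintype.card_le_of_surjective m hm
    have h2 : (Fintype.card Z : ℝ) * σ ≤ 1 := by
      have := Finset.card_nsmul_le_sum Finset.univ π σ (fun z _ => hπσ z)
      rw [hπ1] at this
      simpa [nsmul_eq_mul] using this
    calc (Fintype.card W : ℝ) * σ ≤ (Fintype.card Z : ℝ) * σ := by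
          apply mul_le_mul_of_nonneg_right _ hσ.le
          exact_mod_cast hle
      _ ≤ 1 := h2
  -- card W = n + 1
  set n : ℕ := Fintype.card {w : W // w ≠ w₀} with hn
  have hcard : Fintype.card W = n + 1 := by
    have h1 : Fintype.card {w : W // w = w₀} = 1 := Fintype.card_subtype_eq w₀
    have h2 : n = Fintype.card W - Fintype.card {w : W // w = w₀} :=
      Fintype.card_subtype_compl _
    have hpos : 1 ≤ Fintype.card W := Fintype.card_pos_iff.mpr ⟨w₀⟩
    omega
  -- key elementary inequality
  clear_value c
  clear_value n
  have hkey : σ * ∑ w, Qhat w ^ 2 ≤ c ^ 2 + ∑ w, (Qhat w - c) ^ 2 := by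
    set S : ℝ := ∑ w, Qhat w with hS
    set T : ℝ := ∑ w, Qhat w ^ 2 with hT
    have hcsn : S ^ 2 ≤ n * T := by
      have h := sq_sum_le_card_mul_sum_sq (s := (Finset.univ : Finset {w : W // w ≠ w₀}))
        (f := Qhat)
      rw [Finset.card_univ, ← hn] at h
      exact h
    have hexp : ∑ w, (Qhat w - c) ^ 2 = T - 2 * S * c + n * c ^ 2 := by
      have : ∀ w : {w : W // w ≠ w₀}, (Qhat w - c) ^ 2
          = Qhat w ^ 2 - 2 * c * Qhat w + c ^ 2 := fun w => by ring
      simp only [this, Finset.sum_add_distrib, Finset.sum_sub_distrib, ← Finset.mul_sum,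
        Finset.sum_const, nsmul_eq_mul, Finset.card_univ]
      rw [← hn, ← hS, ← hT]
      ring
    have hT0 : 0 ≤ T := Finset.sum_nonneg fun w _ => by positivity
    clear_value S T
    have hσn : σ * ((n : ℝ) + 1) ≤ 1 := by
      have : ((Fintype.card W : ℕ) : ℝ) = (n : ℝ) + 1 := by
        rw [hcard]; push_cast; ring
      calc σ * ((n : ℝ) + 1) = (Fintype.card W : ℝ) * σ := by rw [this]; ring
        _ ≤ 1 := hcardW
    rw [hexp]
    have hnn : (0:ℝ) ≤ (n:ℝ) := Nat.cast_nonneg n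
    set f : ℝ := c ^ 2 + (T - 2 * S * c + (n : ℝ) * c ^ 2) with hf
    have h1 : T ≤ ((n : ℝ) + 1) * f := by
      nlinarith [sq_nonneg (((n : ℝ) + 1) * c - S)]
    have hf0 : 0 ≤ f := by nlinarith [sq_nonneg (((n : ℝ) + 1) * c - S)]
    have h2 : σ * T ≤ σ * (((n : ℝ) + 1) * f) :=
      mul_le_mul_of_nonneg_left h1 hσ.le
    have h3 : σ * (((n : ℝ) + 1) * f) ≤ 1 * f := by
      rw [← mul_assoc]
      exact mul_le_mul_of_nonneg_right hσn hf0
    calc σ * T ≤ σ * (((n : ℝ) + 1) * f) := h2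
      _ ≤ 1 * f := h3
      _ = f := one_mul f
  -- put everything together
  have hchain : σ ^ 2 * ∑ w, Qhat w ^ 2 ≤ ∑ z, π z * y z ^ 2 := by
    calc σ ^ 2 * ∑ w, Qhat w ^ 2 = σ * (σ * ∑ w, Qhat w ^ 2) := by ring
      _ ≤ σ * (c ^ 2 + ∑ w, (Qhat w - c) ^ 2) :=
          mul_le_mul_of_nonneg_left hkey hσ.le
      _ = σ * ∑ w : W, y (g w) ^ 2 := by rw [hsplit]
      _ ≤ σ * ∑ z, y z ^ 2 := mul_le_mul_of_nonneg_left hsum1 hσ.le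
      _ ≤ ∑ z, π z * y z ^ 2 := hπy2
  calc (1 - μD) * σ ^ 2 * ∑ w, Qhat w ^ 2
      = (1 - μD) * (σ ^ 2 * ∑ w, Qhat w ^ 2) := by ring
    _ ≤ (1 - μD) * ∑ z, π z * y z ^ 2 :=
        mul_le_mul_of_nonneg_left hchain (by linarith)
    _ ≤ _ := hlower
end

section
/- Let c' = 1/(σ √(1 − μ_D)) and define the block matrix Ḡ = [[1, 0], [(1/c') Φ^⊤ π, Φ^⊤ D (Φ − P Φ)]], acting on vectors x = (μ̂, Q̂) ∈ ℝ × ℝ^{W∖{w₀}}. Then Ḡ is uniformly positive definite: for every x ∈ ℝ × ℝ^{W∖{w₀}}, x^⊤ Ḡ x ≥ (1/2)(1 − μ_D) σ² ‖x‖², where ‖·‖ is the Euclidean norm. -/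
open Finset Matrix

/-- Auxiliary arithmetic combination used in the proof of Lemma 9. -/
theorem critic_arith_aux (σ μD r s S G X mu : ℝ)
    (hσ : 0 < σ) (hσ1 : σ ≤ 1) (hμ0 : 0 < μD) (hμ1 : μD < 1)
    (hr0 : 0 ≤ r) (hr2 : r ^ 2 = 1 - μD) (hS0 : 0 ≤ S) (hG0 : 0 ≤ G)
    (hGlow : (σ ^ 2 * S + σ * s ^ 2) / 2 ≤ G) (hQ : X ≤ μD * G) :
    (1 / 2) * (1 - μD) * σ ^ 2 * (mu ^ 2 + S) ≤ mu ^ 2 + σ * r * mu * s + (G - X) := by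
  have hcross : -(σ / 2) * mu ^ 2 - (σ * (1 - μD) / 2) * s ^ 2 ≤ σ * r * mu * s := by
    have hexp : σ * (mu + r * s) ^ 2
        = σ * mu ^ 2 + 2 * (σ * r * mu * s) + σ * (1 - μD) * s ^ 2 := by
      have h : (mu + r * s) ^ 2 = mu ^ 2 + 2 * (r * mu * s) + r ^ 2 * s ^ 2 := by ring
      rw [h, hr2]; ring
    have hpos : 0 ≤ σ * (mu + r * s) ^ 2 := mul_nonneg hσ.le (sq_nonneg _)
    rw [hexp] at hpos
    linarith
  have h2 : (1 - μD) * ((σ ^ 2 * S + σ * s ^ 2) / 2) ≤ (1 - μD) * G :=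
    mul_le_mul_of_nonneg_left hGlow (by linarith)
  have hcoef : (1 / 2) * (1 - μD) * σ ^ 2 ≤ 1 - σ / 2 := by nlinarith
  nlinarith [mul_le_mul_of_nonneg_right hcoef (sq_nonneg mu), hcross, h2, hQ]

set_option maxHeartbeats 1000000 in
/-- **Lemma 9 (uniform positive definiteness of the critic mean matrix).** With
`c' = 1/(σ√(1−μ_D))` and `Ḡ = [[1, 0], [(1/c')Φᵀπ, ΦᵀD(Φ − PΦ)]]`, every
`x = (μ̂, Q̂)` satisfies `xᵀḠx ≥ ½(1−μ_D)σ²‖x‖²`. -/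
theorem critic_mean_matrix_pos_def
    {Z W : Type*} [Fintype Z] [Nonempty Z] [DecidableEq Z]
    [Fintype W] [DecidableEq W]
    (P : Matrix Z Z ℝ) (π : Z → ℝ) (σ μD : ℝ)
    (hPnonneg : ∀ z z', 0 ≤ P z z')
    (hProw : ∀ z, ∑ z', P z z' = 1)
    (hσ : 0 < σ) (hπσ : ∀ z, σ ≤ π z) (hπ1 : ∑ z, π z = 1)
    (hstat : ∀ z', ∑ z, π z * P z z' = π z')
    (hμD : μD ∈ Set.Ioo (0 : ℝ) 1)
    (hcontr : ∀ x : Z → ℝ,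
      Dnorm π ((P - Matrix.of fun _ z' => π z').mulVec x) ≤ μD * Dnorm π x)
    (w₀ : W) (m : Z → W) (hm : Function.Surjective m)
    (μhat : ℝ) (Qhat : {w : W // w ≠ w₀} → ℝ) :
    (1 / 2) * (1 - μD) * σ ^ 2 * (μhat ^ 2 + ∑ w, Qhat w ^ 2) ≤
      μhat ^ 2 +
        (1 / (1 / (σ * Real.sqrt (1 - μD)))) * μhat * (Qhat ⬝ᵥ ((PhiHat m w₀)ᵀ.mulVec π)) +
        Qhat ⬝ᵥ (((PhiHat m w₀)ᵀ * Matrix.diagonal π *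
          (PhiHat m w₀ - P * PhiHat m w₀)).mulVec Qhat) := by
  classical
  obtain ⟨hμ0, hμ1⟩ := hμD
  have hπ0 : ∀ z, (0:ℝ) ≤ π z := fun z => le_trans hσ.le (hπσ z)
  set Φ : Matrix Z {w : W // w ≠ w₀} ℝ := PhiHat m w₀ with hΦ
  set f : Z → ℝ := Φ.mulVec Qhat with hf
  -- values of f
  have hfz0 : ∀ z, m z = w₀ → f z = 0 := by
    intro z hz
    refine Finset.sum_eq_zero fun w _ => ?_
    have : m z ≠ w.1 := by
      rw [hz]; exact fun h => w.2 h.symm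
    simp [hΦ, PhiHat, this]
  have hfzw : ∀ (w : {w : W // w ≠ w₀}) z, m z = w.1 → f z = Qhat w := by
    intro w z hz
    have : f z = ∑ w', (if m z = w'.1 then (1:ℝ) else 0) * Qhat w' := rfl
    rw [this, Finset.sum_eq_single w]
    · simp [hz]
    · intro w' _ hw'
      have : m z ≠ w'.1 := by
        rw [hz]; exact fun h => hw' (Subtype.ext h.symm)
      simp [this]
    · intro h; exact absurd (Finset.mem_univ w) h
  -- the linear term
  set s : ℝ := ∑ z, π z * f z with hs
  have R1 : Qhat ⬝ᵥ ((PhiHat m w₀)ᵀ.mulVec π) = s := by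
    rw [Matrix.dotProduct_mulVec, Matrix.vecMul_transpose]
    simp only [dotProduct, hs]
    exact Finset.sum_congr rfl fun z _ => mul_comm _ _
  -- the quadratic term
  have R2 : Qhat ⬝ᵥ (((PhiHat m w₀)ᵀ * Matrix.diagonal π *
      (PhiHat m w₀ - P * PhiHat m w₀)).mulVec Qhat)
      = ∑ z, π z * f z * (f z - (P.mulVec f) z) := by
    rw [← Matrix.mulVec_mulVec, ← Matrix.mulVec_mulVec,
      Matrix.dotProduct_mulVec, Matrix.vecMul_transpose]
    have hsub : (PhiHat m w₀ - P * PhiHat m w₀).mulVec Qhat = f - P.mulVec f := by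
      rw [Matrix.sub_mulVec, ← Matrix.mulVec_mulVec]
    rw [hsub]
    simp only [dotProduct]
    refine Finset.sum_congr rfl fun z _ => ?_
    rw [Matrix.mulVec_diagonal]
    simp [Pi.sub_apply]
    ring
  rw [R1, R2, one_div_one_div]
  -- abbreviations
  set S : ℝ := ∑ w, Qhat w ^ 2 with hS
  set F : ℝ := ∑ z, π z * f z ^ 2 with hF
  set g : Z → ℝ := fun z => f z - s with hg
  set G : ℝ := ∑ z, π z * g z ^ 2 with hG
  have hπg : ∑ z, π z * g z = 0 := by
    simp only [hg, mul_sub, Finset.sum_sub_distrib, ← Finset.sum_mul, hπ1]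
    simp [hs]
  have hGF : G = F - s ^ 2 := by
    have : ∀ z, π z * g z ^ 2 = π z * f z ^ 2 - 2 * s * (π z * f z) + s ^ 2 * π z := by
      intro z; simp only [hg]; ring
    simp only [hG, this, Finset.sum_add_distrib, Finset.sum_sub_distrib,
      ← Finset.mul_sum, ← Finset.sum_mul, hπ1, hs.symm]
    ring
  -- section of m
  have hsec : ∀ w : W, ∃ z, m z = w := hm
  set t : W → Z := fun w => (hsec w).choose with ht
  have htm : ∀ w, m (t w) = w := fun w => (hsec w).choose_spec
  obtain ⟨z₀, hz₀⟩ := hm w₀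
  -- (a) F ≥ σ * S
  have ha : σ * S ≤ F := by
    have hinj : Function.Injective (fun w : {w : W // w ≠ w₀} => t w.1) := by
      intro a b hab
      have hab' : t a.1 = t b.1 := hab
      have : m (t a.1) = m (t b.1) := by rw [hab']
      rw [htm, htm] at this
      exact Subtype.ext this
    calc σ * S = ∑ w : {w : W // w ≠ w₀}, σ * Qhat w ^ 2 := by
            rw [hS, Finset.mul_sum]
      _ ≤ ∑ w : {w : W // w ≠ w₀}, π (t w.1) * f (t w.1) ^ 2 := by
            refine Finset.sum_le_sum fun w _ => ?_
            rw [hfzw w (t w.1) (htm w.1)]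
            exact mul_le_mul_of_nonneg_right (hπσ _) (sq_nonneg _)
      _ = ∑ z ∈ Finset.univ.image (fun w : {w : W // w ≠ w₀} => t w.1),
            π z * f z ^ 2 := by
            rw [Finset.sum_image (fun a _ b _ h => hinj h)]
      _ ≤ F := by
            refine Finset.sum_le_sum_of_subset_of_nonneg (Finset.subset_univ _)
              fun z _ _ => mul_nonneg (hπ0 z) (sq_nonneg _)
  -- (b) s² ≤ (1 - σ) * F
  have hb : s ^ 2 ≤ (1 - σ) * F := by
    set B : Finset Z := Finset.univ.filter (fun z => ¬ m z = w₀) with hB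
    have hsB : s = ∑ z ∈ B, π z * f z := by
      rw [hs]
      refine (Finset.sum_subset (Finset.subset_univ B) ?_).symm
      intro z _ hzB
      have : m z = w₀ := by
        by_contra h
        exact hzB (Finset.mem_filter.mpr ⟨Finset.mem_univ z, h⟩)
      rw [hfz0 z this, mul_zero]
    have hCS : s ^ 2 ≤ (∑ z ∈ B, π z) * (∑ z ∈ B, π z * f z ^ 2) := by
      have := Finset.sum_mul_sq_le_sq_mul_sq B (fun z => Real.sqrt (π z))
        (fun z => Real.sqrt (π z) * f z)
      have h1 : ∀ z, Real.sqrt (π z) * (Real.sqrt (π z) * f z) = π z * f z := by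
        intro z; rw [← mul_assoc, Real.mul_self_sqrt (hπ0 z)]
      have h2 : ∀ z, Real.sqrt (π z) ^ 2 = π z := fun z => Real.sq_sqrt (hπ0 z)
      have h3 : ∀ z, (Real.sqrt (π z) * f z) ^ 2 = π z * f z ^ 2 := by
        intro z; rw [mul_pow, h2]
      simp only [h1, h2, h3] at this
      rw [hsB]; exact this
    have hBsum : ∑ z ∈ B, π z ≤ 1 - σ := by
      have hsplit : ∑ z ∈ B, π z + ∑ z ∈ Finset.univ.filter (fun z => m z = w₀), π z = 1 := by
        rw [hB, add_comm, Finset.sum_filter_add_sum_filter_not Finset.univ _ π, hπ1]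
      have hz₀mem : z₀ ∈ Finset.univ.filter (fun z => m z = w₀) :=
        Finset.mem_filter.mpr ⟨Finset.mem_univ z₀, hz₀⟩
      have : σ ≤ ∑ z ∈ Finset.univ.filter (fun z => m z = w₀), π z :=
        le_trans (hπσ z₀) (Finset.single_le_sum (fun z _ => hπ0 z) hz₀mem)
      linarith
    have hFB : ∑ z ∈ B, π z * f z ^ 2 ≤ F := by
      refine Finset.sum_le_sum_of_subset_of_nonneg (Finset.subset_univ _)
        fun z _ _ => mul_nonneg (hπ0 z) (sq_nonneg _)
    have hFB0 : 0 ≤ ∑ z ∈ B, π z * f z ^ 2 :=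
      Finset.sum_nonneg fun z _ => mul_nonneg (hπ0 z) (sq_nonneg _)
    have hB0 : 0 ≤ ∑ z ∈ B, π z := Finset.sum_nonneg fun z _ => hπ0 z
    calc s ^ 2 ≤ (∑ z ∈ B, π z) * (∑ z ∈ B, π z * f z ^ 2) := hCS
      _ ≤ (1 - σ) * (∑ z ∈ B, π z * f z ^ 2) := by
            exact mul_le_mul_of_nonneg_right hBsum hFB0
      _ ≤ (1 - σ) * F := by
            have hσ1 : σ ≤ 1 := by
              have := Finset.single_le_sum (fun z _ => hπ0 z) (Finset.mem_univ z₀)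
              rw [hπ1] at this
              linarith [hπσ z₀]
            exact mul_le_mul_of_nonneg_left hFB (by linarith)
  -- (c) G ≥ σ * s²
  have hc : σ * s ^ 2 ≤ G := by
    have hgz₀ : g z₀ = -s := by rw [hg]; simp [hfz0 z₀ hz₀]
    calc σ * s ^ 2 ≤ π z₀ * g z₀ ^ 2 := by
          rw [hgz₀]
          rw [show (-s) ^ 2 = s ^ 2 by ring]
          exact mul_le_mul_of_nonneg_right (hπσ z₀) (sq_nonneg _)
      _ ≤ G := Finset.single_le_sum (fun z _ => mul_nonneg (hπ0 z) (sq_nonneg _))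
          (Finset.mem_univ z₀)
  have hF0 : 0 ≤ F := Finset.sum_nonneg fun z _ => mul_nonneg (hπ0 z) (sq_nonneg _)
  have hG0 : 0 ≤ G := Finset.sum_nonneg fun z _ => mul_nonneg (hπ0 z) (sq_nonneg _)
  -- (d) the contraction bound:  ∑ π g (Pg) ≤ μD * G
  have hd : ∑ z, π z * g z * (P.mulVec g) z ≤ μD * G := by
    have hMg : (P - Matrix.of fun _ z' => π z').mulVec g = P.mulVec g := by
      funext z
      rw [Matrix.sub_mulVec]
      have : (Matrix.of fun _ z' => π z').mulVec g z = ∑ z', π z' * g z' := rfl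
      simp [Pi.sub_apply, this, hπg]
    have hcontr' := hcontr g
    rw [hMg] at hcontr'
    unfold Dnorm at hcontr'
    have hPg0 : 0 ≤ ∑ z, π z * (P.mulVec g) z ^ 2 :=
      Finset.sum_nonneg fun z _ => mul_nonneg (hπ0 z) (sq_nonneg _)
    have hsq : ∑ z, π z * (P.mulVec g) z ^ 2 ≤ μD ^ 2 * G := by
      have h1 : Real.sqrt (∑ z, π z * (P.mulVec g) z ^ 2) ^ 2
          ≤ (μD * Real.sqrt (∑ z, π z * g z ^ 2)) ^ 2 := by
        refine pow_le_pow_left₀ (Real.sqrt_nonneg _) hcontr' 2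
      rw [Real.sq_sqrt hPg0, mul_pow, Real.sq_sqrt hG0] at h1
      exact h1
    have hCS : (∑ z, π z * g z * (P.mulVec g) z) ^ 2
        ≤ G * (∑ z, π z * (P.mulVec g) z ^ 2) := by
      have := Finset.sum_mul_sq_le_sq_mul_sq Finset.univ
        (fun z => Real.sqrt (π z) * g z) (fun z => Real.sqrt (π z) * (P.mulVec g) z)
      have h1 : ∀ z, (Real.sqrt (π z) * g z) * (Real.sqrt (π z) * (P.mulVec g) z)
          = π z * g z * (P.mulVec g) z := by
        intro z
        rw [mul_mul_mul_comm, Real.mul_self_sqrt (hπ0 z), mul_assoc]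
      have h2 : ∀ z, (Real.sqrt (π z) * g z) ^ 2 = π z * g z ^ 2 := by
        intro z; rw [mul_pow, Real.sq_sqrt (hπ0 z)]
      have h3 : ∀ z, (Real.sqrt (π z) * (P.mulVec g) z) ^ 2 = π z * (P.mulVec g) z ^ 2 := by
        intro z; rw [mul_pow, Real.sq_sqrt (hπ0 z)]
      simp only [h1, h2, h3] at this
      exact this
    have hfinal : (∑ z, π z * g z * (P.mulVec g) z) ^ 2 ≤ (μD * G) ^ 2 := by
      calc (∑ z, π z * g z * (P.mulVec g) z) ^ 2
          ≤ G * (∑ z, π z * (P.mulVec g) z ^ 2) := hCS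
        _ ≤ G * (μD ^ 2 * G) := mul_le_mul_of_nonneg_left hsq hG0
        _ = (μD * G) ^ 2 := by ring
    nlinarith [hfinal, mul_nonneg hμ0.le hG0]
  -- (e) the quadratic form identity: Q = G - ∑ π g (Pg)
  have hπPg : ∑ z, π z * (P.mulVec g) z = 0 := by
    have : ∑ z, π z * (P.mulVec g) z = ∑ z', (∑ z, π z * P z z') * g z' := by
      simp only [Matrix.mulVec, dotProduct, Finset.mul_sum, Finset.sum_mul]
      rw [Finset.sum_comm]
      refine Finset.sum_congr rfl fun z' _ => Finset.sum_congr rfl fun z _ => by ring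
    rw [this]
    simp only [hstat]
    exact hπg
  have hPf : ∀ z, (P.mulVec f) z = (P.mulVec g) z + s := by
    intro z
    have : f = fun z' => g z' + s := by funext z'; simp [hg]
    rw [this]
    simp only [Matrix.mulVec, dotProduct]
    rw [show ∑ z', P z z' * (g z' + s) = (∑ z', P z z' * g z') + (∑ z', P z z') * s by
      rw [Finset.sum_mul]; rw [← Finset.sum_add_distrib];
      exact Finset.sum_congr rfl fun z' _ => by ring]
    rw [hProw z, one_mul]
  have he : ∑ z, π z * f z * (f z - (P.mulVec f) z)
      = G - ∑ z, π z * g z * (P.mulVec g) z := by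
    have key : ∀ z, π z * f z * (f z - (P.mulVec f) z)
        = π z * g z ^ 2 - π z * g z * (P.mulVec g) z
          + s * (π z * g z) - s * (π z * (P.mulVec g) z) := by
      intro z
      rw [hPf z]
      have hfg : f z = g z + s := by simp [hg]
      rw [hfg]; ring
    simp only [key, Finset.sum_add_distrib, Finset.sum_sub_distrib, ← Finset.mul_sum]
    rw [hπg, hπPg, hG]
    ring
  rw [he]
  -- final combination
  set X : ℝ := ∑ z, π z * g z * (P.mulVec g) z with hX
  set r : ℝ := Real.sqrt (1 - μD) with hr
  have hr2 : r ^ 2 = 1 - μD := Real.sq_sqrt (by linarith)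
  have hr0 : 0 ≤ r := Real.sqrt_nonneg _
  have hσ1 : σ ≤ 1 := by
    have := Finset.single_le_sum (fun z _ => hπ0 z) (Finset.mem_univ z₀)
    rw [hπ1] at this
    linarith [hπσ z₀]
  have hS0 : 0 ≤ S := Finset.sum_nonneg fun w _ => sq_nonneg _
  clear_value X r G g F f s S Φ
  clear hfz0 hfzw hπg he hπPg hPf R1 R2 hcontr hstat hProw hPnonneg hπσ hπ1 hπ0 htm hz₀
  have hGlow : (σ ^ 2 * S + σ * s ^ 2) / 2 ≤ G := by
    have h1 : σ ^ 2 * S ≤ G := by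
      have h2 : σ * (σ * S) ≤ σ * F := mul_le_mul_of_nonneg_left ha hσ.le
      have h3 : σ * F ≤ G := by rw [hGF]; nlinarith [hb]
      nlinarith [h2, h3]
    linarith [hc]
  exact critic_arith_aux σ μD r s S G X μhat hσ hσ1 hμ0 hμ1
    hr0 hr2 hS0 hG0 hGlow hd
end
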